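/- arXiv:1305.3804 — 8 statements merged into one kernel-verified Lean document; each statement's English description precedes it below -/
import Mathlib

section
/- Let 1 < p < ∞ with conjugate exponent q, and assume C₀ < ∞. Then for all f, g ∈ ℓ^p(β) the weighted Cauchy product f⋄g belongs to ℓ^p(β) and satisfies ‖f⋄g‖_β ≤ C₀^{1/q} ‖f‖_β ‖g‖_β; moreover ⋄ is commutative and the sequence e₀ (equal to 1 at index 0 and 0 elsewhere) is a unit for ⋄, so (ℓ^p(β), ⋄) is a unital commutative Banach algebra. -/
open Filter Finset
open scoped ENNReal Topology

noncomputable section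

/-- The weighted Cauchy product `⋄` associated to the weight sequence `δ`. -/
def dprod (δ : ℕ → ℝ) (f g : ℕ → ℂ) : ℕ → ℂ := fun n =>
  ∑ k ∈ Finset.range (n + 1), ((δ n / (δ k * δ (n - k)) : ℝ) : ℂ) * f k * g (n - k)

/-- for `1 < p < ∞` with conjugate exponent `q`, if
`C₀ = sup_n ∑_{k=0}^n (δ(n)β(n)/(δ(k)δ(n-k)β(k)β(n-k)))^q` is finite, then `ℓ^p(β)` is
closed under `⋄` with `‖f⋄g‖_β ≤ C₀^(1/q) ‖f‖_β ‖g‖_β`, `⋄` is commutative, and the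
sequence `e₀` is a unit, so `(ℓ^p(β), ⋄)` is a unital commutative Banach algebra. -/
theorem stmt0 (β δ : ℕ → ℝ) (hβ : ∀ n, 0 < β n) (hδ : ∀ n, 0 < δ n)
    (hβ0 : β 0 = 1) (hδ0 : δ 0 = 1)
    (p q : ℝ) (hp : 1 < p) (hpq : 1 / p + 1 / q = 1)
    (hC : BddAbove (Set.range fun n : ℕ =>
      ∑ k ∈ Finset.range (n + 1),
        (δ n * β n / (δ k * δ (n - k) * β k * β (n - k))) ^ q)) :
    (∀ f g : ℕ → ℂ,
      Summable (fun n => (‖f n‖ * β n) ^ p) →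
      Summable (fun n => (‖g n‖ * β n) ^ p) →
      Summable (fun n => (‖dprod δ f g n‖ * β n) ^ p) ∧
      (∑' n, (‖dprod δ f g n‖ * β n) ^ p) ^ (1 / p) ≤
        (⨆ n : ℕ, ∑ k ∈ Finset.range (n + 1),
            (δ n * β n / (δ k * δ (n - k) * β k * β (n - k))) ^ q) ^ (1 / q) *
          ((∑' n, (‖f n‖ * β n) ^ p) ^ (1 / p) * (∑' n, (‖g n‖ * β n) ^ p) ^ (1 / p))) ∧
    (∀ f g : ℕ → ℂ, dprod δ f g = dprod δ g f) ∧
    (∀ f : ℕ → ℂ, dprod δ (fun n => if n = 0 then 1 else 0) f = f) := by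
  have hpq' : p.HolderConjugate q := Real.holderConjugate_iff.mpr ⟨hp, by simpa [one_div] using hpq⟩
  have hp0 : (0:ℝ) < p := hpq'.pos
  have hq0 : (0:ℝ) < q := hpq'.symm.pos
  set a : ℕ → ℕ → ℝ := fun n k => δ n * β n / (δ k * δ (n - k) * β k * β (n - k)) with ha
  have ha_pos : ∀ n k, 0 < a n k := fun n k => by
    exact div_pos (mul_pos (hδ n) (hβ n))
      (mul_pos (mul_pos (mul_pos (hδ k) (hδ (n - k))) (hβ k)) (hβ (n - k)))
  set S : ℕ → ℝ := fun n => ∑ k ∈ Finset.range (n + 1), a n k ^ q with hS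
  set C : ℝ := ⨆ n : ℕ, S n with hCdef
  have hSC : ∀ n, S n ≤ C := fun n => le_ciSup hC n
  have hS_nonneg : ∀ n, 0 ≤ S n := fun n =>
    Finset.sum_nonneg fun k _ => Real.rpow_nonneg (ha_pos n k).le q
  have hC0 : 0 ≤ C := le_trans (hS_nonneg 0) (hSC 0)
  refine ⟨?_, ?_, ?_⟩
  · intro f g hf hg
    set F : ℕ → ℝ := fun n => ‖f n‖ * β n with hF
    set G : ℕ → ℝ := fun n => ‖g n‖ * β n with hG
    have hF0 : ∀ n, 0 ≤ F n := fun n => mul_nonneg (norm_nonneg _) (hβ n).le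
    have hG0 : ∀ n, 0 ≤ G n := fun n => mul_nonneg (norm_nonneg _) (hβ n).le
    set T : ℕ → ℝ := fun n => ∑ k ∈ Finset.range (n + 1), F k ^ p * G (n - k) ^ p with hT
    have hT0 : ∀ n, 0 ≤ T n := fun n =>
      Finset.sum_nonneg fun k _ =>
        mul_nonneg (Real.rpow_nonneg (hF0 k) p) (Real.rpow_nonneg (hG0 _) p)
    -- key pointwise estimate
    have key : ∀ n, ‖dprod δ f g n‖ * β n ≤ C ^ (1/q) * T n ^ (1/p) := by
      intro n
      have h1 : ‖dprod δ f g n‖ * β n ≤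
          ∑ k ∈ Finset.range (n + 1), a n k * (F k * G (n - k)) := by
        have h2 : ‖dprod δ f g n‖ ≤
            ∑ k ∈ Finset.range (n + 1), (δ n / (δ k * δ (n - k))) * (‖f k‖ * ‖g (n - k)‖) := by
          refine le_trans (norm_sum_le _ _) (Finset.sum_le_sum fun k _ => le_of_eq ?_)
          rw [norm_mul, norm_mul, Complex.norm_real, Real.norm_eq_abs,
            abs_of_pos (div_pos (hδ n) (mul_pos (hδ k) (hδ (n - k)))), mul_assoc]
        calc ‖dprod δ f g n‖ * β n
            ≤ (∑ k ∈ Finset.range (n + 1),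
                (δ n / (δ k * δ (n - k))) * (‖f k‖ * ‖g (n - k)‖)) * β n := by
              exact mul_le_mul_of_nonneg_right h2 (hβ n).le
          _ = ∑ k ∈ Finset.range (n + 1), a n k * (F k * G (n - k)) := by
              rw [Finset.sum_mul]
              refine Finset.sum_congr rfl fun k _ => ?_
              simp only [ha, hF, hG]
              have h3 : δ k ≠ 0 := (hδ k).ne'
              have h4 : δ (n - k) ≠ 0 := (hδ (n - k)).ne'
              have h5 : β k ≠ 0 := (hβ k).ne'
              have h6 : β (n - k) ≠ 0 := (hβ (n - k)).ne'
              field_simp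
      have holder : ∑ k ∈ Finset.range (n + 1), a n k * (F k * G (n - k)) ≤
          S n ^ (1/q) * T n ^ (1/p) := by
        have := Real.inner_le_Lp_mul_Lq (Finset.range (n + 1))
          (fun k => a n k) (fun k => F k * G (n - k)) hpq'.symm
        refine le_trans this (le_of_eq ?_)
        congr 1
        · congr 1
          exact Finset.sum_congr rfl fun k _ => by rw [abs_of_pos (ha_pos n k)]
        · congr 1
          refine Finset.sum_congr rfl fun k _ => ?_
          rw [abs_of_nonneg (mul_nonneg (hF0 k) (hG0 _)),
            Real.mul_rpow (hF0 k) (hG0 _)]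
      refine le_trans h1 (le_trans holder ?_)
      exact mul_le_mul_of_nonneg_right
        (Real.rpow_le_rpow (hS_nonneg n) (hSC n) (by positivity))
        (Real.rpow_nonneg (hT0 n) _)
    have keyP : ∀ n, (‖dprod δ f g n‖ * β n) ^ p ≤ C ^ (p/q) * T n := by
      intro n
      have h1 : (‖dprod δ f g n‖ * β n) ^ p ≤ (C ^ (1/q) * T n ^ (1/p)) ^ p :=
        Real.rpow_le_rpow (mul_nonneg (norm_nonneg _) (hβ n).le) (key n) hp0.le
      refine le_trans h1 (le_of_eq ?_)
      rw [Real.mul_rpow (Real.rpow_nonneg hC0 _) (Real.rpow_nonneg (hT0 n) _),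
        ← Real.rpow_mul hC0, ← Real.rpow_mul (hT0 n),
        one_div_mul_cancel hp0.ne', Real.rpow_one]
      congr 1
      ring
    -- summability of T
    have hT_sum : Summable T := by
      have hf' : Summable (fun n => ‖F n ^ p‖) := by
        refine hf.congr fun n => ?_
        rw [Real.norm_of_nonneg (Real.rpow_nonneg (hF0 n) p)]
      have hg' : Summable (fun n => ‖G n ^ p‖) := by
        refine hg.congr fun n => ?_
        rw [Real.norm_of_nonneg (Real.rpow_nonneg (hG0 n) p)]
      have := summable_norm_sum_mul_range_of_summable_norm hf' hg'
      refine this.congr fun n => Real.norm_of_nonneg (hT0 n)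
    have hsum : Summable (fun n => (‖dprod δ f g n‖ * β n) ^ p) := by
      refine Summable.of_nonneg_of_le
        (fun n => Real.rpow_nonneg (mul_nonneg (norm_nonneg _) (hβ n).le) p)
        keyP (hT_sum.mul_left _)
    refine ⟨hsum, ?_⟩
    have htsum : (∑' n, (‖dprod δ f g n‖ * β n) ^ p) ≤
        C ^ (p/q) * ((∑' n, F n ^ p) * (∑' n, G n ^ p)) := by
      have h1 : (∑' n, (‖dprod δ f g n‖ * β n) ^ p) ≤ ∑' n, C ^ (p/q) * T n :=
        Summable.tsum_le_tsum keyP hsum (hT_sum.mul_left _)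
      rw [tsum_mul_left] at h1
      refine le_trans h1 (le_of_eq ?_)
      congr 1
      have hf' : Summable (fun n => ‖F n ^ p‖) := by
        refine hf.congr fun n => ?_
        rw [Real.norm_of_nonneg (Real.rpow_nonneg (hF0 n) p)]
      have hg' : Summable (fun n => ‖G n ^ p‖) := by
        refine hg.congr fun n => ?_
        rw [Real.norm_of_nonneg (Real.rpow_nonneg (hG0 n) p)]
      exact (tsum_mul_tsum_eq_tsum_sum_range_of_summable_norm hf' hg').symm
    calc (∑' n, (‖dprod δ f g n‖ * β n) ^ p) ^ (1/p)
        ≤ (C ^ (p/q) * ((∑' n, F n ^ p) * (∑' n, G n ^ p))) ^ (1/p) := by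
          refine Real.rpow_le_rpow ?_ htsum (by positivity)
          exact tsum_nonneg fun n =>
            Real.rpow_nonneg (mul_nonneg (norm_nonneg _) (hβ n).le) p
      _ = C ^ (1/q) * ((∑' n, F n ^ p) ^ (1/p) * (∑' n, G n ^ p) ^ (1/p)) := by
          have hA : (0:ℝ) ≤ ∑' n, F n ^ p :=
            tsum_nonneg fun n => Real.rpow_nonneg (hF0 n) p
          have hB : (0:ℝ) ≤ ∑' n, G n ^ p :=
            tsum_nonneg fun n => Real.rpow_nonneg (hG0 n) p
          rw [Real.mul_rpow (Real.rpow_nonneg hC0 _) (mul_nonneg hA hB),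
            Real.mul_rpow hA hB, ← Real.rpow_mul hC0]
          congr 2
          field_simp
  · intro f g
    funext n
    unfold dprod
    rw [← Finset.sum_range_reflect]
    refine Finset.sum_congr rfl fun k hk => ?_
    have hk' : k ≤ n := Nat.lt_succ_iff.mp (Finset.mem_range.mp hk)
    have h1 : n + 1 - 1 - k = n - k := by omega
    have h2 : n - (n - k) = k := Nat.sub_sub_self hk'
    rw [h1, h2]
    ring
  · intro f
    funext n
    unfold dprod
    rw [Finset.sum_eq_single 0]
    · simp [hδ0, (hδ n).ne']
    · intro k _ hk
      simp [hk]
    · intro h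
      exact absurd (Finset.mem_range.mpr (Nat.succ_pos n)) h
end
end

section
/- Let 1 ≤ p < ∞, let N ∈ ℕ, and set C := sup_{n≥0} β(n+N)δ(n+N)/(β(n)δ(n)δ(1)^N). If b_{M,k} < ∞ for all M, k ∈ ℕ, then C < ∞, the operator M_{⋄,z}^N is bounded on ℓ^p(β) with (M_{⋄,z}^N f)(n+N) = (δ(n+N)/(δ(n)δ(1)^N)) f(n) and (M_{⋄,z}^N f)(m) = 0 for m < N, and ‖M_{⋄,z}^N‖ = C. -/
open Filter Finset
open scoped ENNReal Topology

noncomputable section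

/-- Under `f ↦ (β(n)f(n))ₙ`, the space `ℓ^p(β)` is isometrically identified
with the standard `lp` space over `ℕ`, and the operator `M_{⋄,z}^N` becomes the weighted
shift `(T a)(n+N) = (β(n+N)δ(n+N)/(β(n)δ(n)δ(1)^N)) a(n)`, `(T a)(m)=0` for `m < N`.
If all `b_{M,k} < ∞`, then `C = sup_n β(n+N)δ(n+N)/(β(n)δ(n)δ(1)^N) < ∞`, `M_{⋄,z}^N` is
bounded on `ℓ^p(β)`, and `‖M_{⋄,z}^N‖ = C`. -/
theorem stmt2 (β δ : ℕ → ℝ) (hβ : ∀ n, 0 < β n) (hδ : ∀ n, 0 < δ n)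
    (hβ0 : β 0 = 1) (hδ0 : δ 0 = 1)
    (p : ℝ≥0∞) [Fact (1 ≤ p)] (hp : p ≠ ∞) (N : ℕ)
    (hb : ∀ M k : ℕ, BddAbove (Set.range fun n : ℕ =>
      δ (M + 1 + n + k) * β (M + 1 + n + k) /
        (δ (M + 1 + n) * δ k * β (M + 1 + n) * β k))) :
    BddAbove (Set.range fun n : ℕ =>
        β (n + N) * δ (n + N) / (β n * δ n * δ 1 ^ N)) ∧
    ∃ T : lp (fun _ : ℕ => ℂ) p →L[ℂ] lp (fun _ : ℕ => ℂ) p,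
      (∀ a : lp (fun _ : ℕ => ℂ) p, ∀ n : ℕ,
          T a (n + N) = ((β (n + N) * δ (n + N) / (β n * δ n * δ 1 ^ N) : ℝ) : ℂ) * a n) ∧
      (∀ a : lp (fun _ : ℕ => ℂ) p, ∀ m : ℕ, m < N → T a m = 0) ∧
      ‖T‖ = ⨆ n : ℕ, β (n + N) * δ (n + N) / (β n * δ n * δ 1 ^ N) := by
  have hp1 : (1 : ℝ≥0∞) ≤ p := Fact.out
  have hp0 : p ≠ 0 := by
    intro h; rw [h] at hp1; exact absurd hp1 (by simp)
  have hq : 0 < p.toReal := ENNReal.toReal_pos hp0 hp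
  set w : ℕ → ℝ := fun n => β (n + N) * δ (n + N) / (β n * δ n * δ 1 ^ N) with hw_def
  have hw : ∀ n, 0 < w n := fun n => by
    have := hβ (n + N); have := hδ (n + N); have := hβ n; have := hδ n; have := hδ 1
    positivity
  -- BddAbove
  obtain ⟨B, hB⟩ := hb 0 N
  have hC : BddAbove (Set.range w) := by
    refine ⟨max (w 0) (B * (δ N * β N / δ 1 ^ N)), ?_⟩
    rintro x ⟨n, rfl⟩
    match n with
    | 0 => exact le_max_left _ _
    | Nat.succ n =>
      refine le_trans ?_ (le_max_right _ _)
      have h1 : δ (0 + 1 + n + N) * β (0 + 1 + n + N) /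
          (δ (0 + 1 + n) * δ N * β (0 + 1 + n) * β N) ≤ B := hB ⟨n, rfl⟩
      have heq : w (n + 1) = (δ (0 + 1 + n + N) * β (0 + 1 + n + N) /
          (δ (0 + 1 + n) * δ N * β (0 + 1 + n) * β N)) * (δ N * β N / δ 1 ^ N) := by
        have e : 0 + 1 + n = n + 1 := by omega
        rw [e, hw_def]
        have h2 := (hβ (n + 1)).ne'
        have h3 := (hδ (n + 1)).ne'
        have h4 := (hβ N).ne'
        have h5 := (hδ N).ne'
        have h6 := (hδ 1).ne'
        field_simp
      rw [heq]
      have hconst : 0 ≤ δ N * β N / δ 1 ^ N := by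
        have := hδ N; have := hβ N; have := hδ 1; positivity
      exact mul_le_mul_of_nonneg_right h1 hconst
  refine ⟨hC, ?_⟩
  set C : ℝ := ⨆ n, w n with hC_def
  have hwC : ∀ n, w n ≤ C := fun n => le_ciSup hC n
  have hC0 : 0 ≤ C := le_trans (hw 0).le (hwC 0)
  -- the pointwise shift
  set S : (ℕ → ℂ) → ℕ → ℂ := fun a m =>
    if N ≤ m then ((w (m - N) : ℝ) : ℂ) * a (m - N) else 0 with hS_def
  have hSe : ∀ (a : ℕ → ℂ) (n : ℕ), S a (n + N) = ((w n : ℝ) : ℂ) * a n := by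
    intro a n
    rw [hS_def]
    simp only [if_pos (Nat.le_add_left N n), Nat.add_sub_cancel]
  have hS0 : ∀ (a : ℕ → ℂ) (m : ℕ), m < N → S a m = 0 := by
    intro a m hm
    rw [hS_def]
    simp only [if_neg (not_le.mpr hm)]
  have hinj : Function.Injective (fun n : ℕ => n + N) := add_left_injective N
  have hS_add : ∀ (f g : ℕ → ℂ) (m : ℕ), S (f + g) m = S f m + S g m := by
    intro f g m
    simp only [hS_def, Pi.add_apply]
    by_cases h : N ≤ m <;> simp [h, mul_add]
  have hS_smul : ∀ (c : ℂ) (f : ℕ → ℂ) (m : ℕ), S (c • f) m = c * S f m := by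
    intro c f m
    simp only [hS_def, Pi.smul_apply, smul_eq_mul]
    by_cases h : N ≤ m <;> simp [h] <;> ring
  -- summability
  have key : ∀ a : lp (fun _ : ℕ => ℂ) p,
      Summable (fun m => ‖S a m‖ ^ p.toReal) ∧
      (∑' m, ‖S a m‖ ^ p.toReal) ≤ C ^ p.toReal * (∑' n, ‖(a : ℕ → ℂ) n‖ ^ p.toReal) := by
    intro a
    have ha : Summable (fun n => ‖(a : ℕ → ℂ) n‖ ^ p.toReal) := (lp.memℓp a).summable hq
    have hvan : ∀ m ∉ Set.range (fun n : ℕ => n + N), ‖S (a : ℕ → ℂ) m‖ ^ p.toReal = 0 := by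
      intro m hm
      have hmN : m < N := by
        by_contra h
        exact hm ⟨m - N, Nat.sub_add_cancel (not_lt.mp h)⟩
      rw [hS0 _ _ hmN, norm_zero, Real.zero_rpow hq.ne']
    have hle : ∀ n : ℕ, ‖S (a : ℕ → ℂ) (n + N)‖ ^ p.toReal
        ≤ C ^ p.toReal * ‖(a : ℕ → ℂ) n‖ ^ p.toReal := by
      intro n
      rw [hSe, norm_mul, Complex.norm_real, Real.norm_eq_abs, abs_of_pos (hw n),
        ← Real.mul_rpow hC0 (norm_nonneg _)]
      exact Real.rpow_le_rpow (mul_nonneg (hw n).le (norm_nonneg _))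
        (mul_le_mul_of_nonneg_right (hwC n) (norm_nonneg _)) hq.le
    have hcs : Summable (fun n : ℕ => ‖S (a : ℕ → ℂ) (n + N)‖ ^ p.toReal) :=
      Summable.of_nonneg_of_le (fun n => by positivity) hle (ha.mul_left _)
    have hsum : Summable (fun m => ‖S (a : ℕ → ℂ) m‖ ^ p.toReal) :=
      (hinj.summable_iff hvan).mp hcs
    refine ⟨hsum, ?_⟩
    have htsum : (∑' n : ℕ, ‖S (a : ℕ → ℂ) (n + N)‖ ^ p.toReal)
        = ∑' m, ‖S (a : ℕ → ℂ) m‖ ^ p.toReal := by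
      refine Function.Injective.tsum_eq (f := fun m => ‖S (a : ℕ → ℂ) m‖ ^ p.toReal)
        hinj fun m hm => ?_
      by_contra hmr
      exact hm (hvan m hmr)
    rw [← htsum, ← tsum_mul_left]
    exact Summable.tsum_le_tsum hle hcs (ha.mul_left _)
  -- linear map
  let L : lp (fun _ : ℕ => ℂ) p →ₗ[ℂ] lp (fun _ : ℕ => ℂ) p :=
    { toFun := fun a => ⟨S (a : ℕ → ℂ), memℓp_gen (key a).1⟩
      map_add' := by
        intro a b
        apply lp.ext
        funext m
        show S ((a + b : lp (fun _ : ℕ => ℂ) p) : ℕ → ℂ) m = S (a : ℕ → ℂ) m + S (b : ℕ → ℂ) m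
        rw [lp.coeFn_add, hS_add]
      map_smul' := by
        intro c a
        apply lp.ext
        funext m
        show S ((c • a : lp (fun _ : ℕ => ℂ) p) : ℕ → ℂ) m = c * S (a : ℕ → ℂ) m
        rw [lp.coeFn_smul, hS_smul] }
  have hbound : ∀ a : lp (fun _ : ℕ => ℂ) p, ‖L a‖ ≤ C * ‖a‖ := by
    intro a
    have h1 : ‖L a‖ ^ p.toReal ≤ (C * ‖a‖) ^ p.toReal := by
      rw [lp.norm_rpow_eq_tsum hq (L a), Real.mul_rpow hC0 (norm_nonneg a),
        lp.norm_rpow_eq_tsum hq a]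
      exact (key a).2
    exact (Real.rpow_le_rpow_iff (norm_nonneg _) (by positivity) hq).mp h1
  let T : lp (fun _ : ℕ => ℂ) p →L[ℂ] lp (fun _ : ℕ => ℂ) p := L.mkContinuous C hbound
  have hTapp : ∀ (a : lp (fun _ : ℕ => ℂ) p) (m : ℕ), (T a : ℕ → ℂ) m = S (a : ℕ → ℂ) m :=
    fun a m => rfl
  refine ⟨T, ?_, ?_, ?_⟩
  · intro a n
    rw [hTapp, hSe]
  · intro a m hm
    rw [hTapp, hS0 _ _ hm]
  · refine le_antisymm (L.mkContinuous_norm_le hC0 hbound) ?_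
    refine ciSup_le fun n => ?_
    have hsingle : T (lp.single p n 1) = lp.single p (n + N) ((w n : ℝ) : ℂ) := by
      apply lp.ext
      funext m
      rw [hTapp]
      by_cases h : m = n + N
      · subst h
        rw [hSe]
        · simp [lp.single_apply_self]
      · rw [lp.single_apply_ne p (n + N) _ h]
        rcases lt_or_ge m N with hm | hm
        · exact hS0 _ _ hm
        · rw [hS_def]
          simp only [if_pos hm]
          have hne : m - N ≠ n := by omega
          rw [lp.single_apply_ne p n _ hne, mul_zero]
    have h1 : ‖T (lp.single p n 1)‖ = w n := by
      rw [hsingle]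
      have := lp.norm_single (E := fun _ : ℕ => ℂ) (pos_iff_ne_zero.mpr hp0) (n + N) ((w n : ℝ) : ℂ)
      rw [this, Complex.norm_real, Real.norm_eq_abs, abs_of_pos (hw n)]
    have h2 : ‖(lp.single p n 1 : lp (fun _ : ℕ => ℂ) p)‖ = 1 := by
      have := lp.norm_single (E := fun _ : ℕ => ℂ) (pos_iff_ne_zero.mpr hp0) n (1 : ℂ)
      rw [this, norm_one]
    calc w n = ‖T (lp.single p n 1)‖ := h1.symm
      _ ≤ ‖T‖ * ‖(lp.single p n 1 : lp (fun _ : ℕ => ℂ) p)‖ := T.le_opNorm _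
      _ = ‖T‖ := by rw [h2, mul_one]
end
end

section
/- (Lemma 2.2, compactness, 1 < p < ∞) Let 1 < p < ∞ with conjugate exponent q. Assume C₀ < ∞ and that ∑_{k=1}^M b_{M,k} → 0 as M → ∞. If f ∈ ℓ^p(β) satisfies f(0) = 0, then the ⋄-multiplication operator M_{⋄,f} : ℓ^p(β) → ℓ^p(β), g ↦ f⋄g, is a compact operator. -/
open Filter Finset
open scoped ENNReal Topology

noncomputable section
set_option linter.unusedSectionVars false
set_option linter.unusedVariables false

/-- `b_{M,k} = sup_{n ≥ M+1} δ(n+k)β(n+k)/(δ(n)δ(k)β(n)β(k))`. -/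
def bconst (β δ : ℕ → ℝ) (M k : ℕ) : ℝ :=
  ⨆ n : ℕ, δ (M + 1 + n + k) * β (M + 1 + n + k) /
    (δ (M + 1 + n) * δ k * β (M + 1 + n) * β k)

namespace Stmt3Aux

/-- The weight kernel. -/
def w (β δ : ℕ → ℝ) (n k : ℕ) : ℝ :=
  δ n * β n / (δ k * δ (n - k) * β k * β (n - k))

lemma w_nonneg (β δ : ℕ → ℝ) (hβ : ∀ n, 0 < β n) (hδ : ∀ n, 0 < δ n) (n k : ℕ) :
    0 ≤ w β δ n k :=
  div_nonneg (mul_nonneg (hδ n).le (hβ n).le)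
    (mul_nonneg (mul_nonneg (mul_nonneg (hδ k).le (hδ (n-k)).le) (hβ k).le) (hβ (n-k)).le)

/-- The rescaled operator kernel sum. -/
def A (β δ : ℕ → ℝ) (h g : ℕ → ℂ) (n : ℕ) : ℂ :=
  ∑ k ∈ Finset.range (n + 1), ((w β δ n k : ℝ) : ℂ) * ((β k : ℝ) * h k) * g (n - k)

lemma A_eq (β δ : ℕ → ℝ) (hβ : ∀ n, 0 < β n) (hδ : ∀ n, 0 < δ n) (h g : ℕ → ℂ) (n : ℕ) :
    A β δ h g n = (β n : ℂ) * dprod δ h (fun m => g m / (β m : ℂ)) n := by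
  rw [dprod, Finset.mul_sum, A]
  refine Finset.sum_congr rfl fun k _ => ?_
  have h1 : (β k : ℂ) ≠ 0 := by exact_mod_cast (hβ k).ne'
  have h2 : (β (n - k) : ℂ) ≠ 0 := by exact_mod_cast (hβ (n - k)).ne'
  have h3 : (δ k : ℂ) ≠ 0 := by exact_mod_cast (hδ k).ne'
  have h4 : (δ (n - k) : ℂ) ≠ 0 := by exact_mod_cast (hδ (n - k)).ne'
  rw [w]
  push_cast
  field_simp

lemma A_add (β δ : ℕ → ℝ) (h g₁ g₂ : ℕ → ℂ) (n : ℕ) :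
    A β δ h (g₁ + g₂) n = A β δ h g₁ n + A β δ h g₂ n := by
  rw [A, A, A, ← Finset.sum_add_distrib]
  exact Finset.sum_congr rfl fun k _ => by simp [mul_add]

lemma A_smul (β δ : ℕ → ℝ) (h g : ℕ → ℂ) (c : ℂ) (n : ℕ) :
    A β δ h (c • g) n = c * A β δ h g n := by
  rw [A, A, Finset.mul_sum]
  exact Finset.sum_congr rfl fun k _ => by simp [Pi.smul_apply, smul_eq_mul]; ring

lemma A_sub_left (β δ : ℕ → ℝ) (h₁ h₂ g : ℕ → ℂ) (n : ℕ) :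
    A β δ (h₁ - h₂) g n = A β δ h₁ g n - A β δ h₂ g n := by
  rw [A, A, A, ← Finset.sum_sub_distrib]
  exact Finset.sum_congr rfl fun k _ => by simp [Pi.sub_apply]; ring


variable {β δ : ℕ → ℝ} {pt q C0 : ℝ}

lemma key_pointwise (hβ : ∀ n, 0 < β n) (hδ : ∀ n, 0 < δ n)
    (hpq : pt.HolderConjugate q) (hC0 : 0 ≤ C0)
    (hC : ∀ n, ∑ k ∈ range (n + 1), w β δ n k ^ q ≤ C0)
    (h g : ℕ → ℂ) (n : ℕ) :
    ‖A β δ h g n‖ ^ pt ≤ C0 ^ (pt / q) *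
      ∑ k ∈ range (n + 1), (β k * ‖h k‖) ^ pt * ‖g (n - k)‖ ^ pt := by
  have hwnn := w_nonneg β δ hβ hδ
  have step1 : ‖A β δ h g n‖ ≤
      ∑ k ∈ range (n + 1), w β δ n k * ((β k * ‖h k‖) * ‖g (n - k)‖) := by
    refine (norm_sum_le _ _).trans (Finset.sum_le_sum fun k _ => ?_)
    rw [norm_mul, norm_mul, norm_mul]
    rw [Complex.norm_real, Complex.norm_real, Real.norm_of_nonneg (hwnn n k),
      Real.norm_of_nonneg (hβ k).le]
    exact le_of_eq (by ring)
  have step2 : ∑ k ∈ range (n + 1), w β δ n k * ((β k * ‖h k‖) * ‖g (n - k)‖) ≤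
      (∑ k ∈ range (n + 1), w β δ n k ^ q) ^ (1 / q) *
      (∑ k ∈ range (n + 1), ((β k * ‖h k‖) * ‖g (n - k)‖) ^ pt) ^ (1 / pt) := by
    exact Real.inner_le_Lp_mul_Lq_of_nonneg _ hpq.symm (fun k _ => hwnn n k)
      (fun k _ => mul_nonneg (mul_nonneg (hβ k).le (norm_nonneg _)) (norm_nonneg _))
  have step3 : (∑ k ∈ range (n + 1), w β δ n k ^ q) ^ (1 / q) ≤ C0 ^ (1 / q) := by
    refine Real.rpow_le_rpow ?_ (hC n) (one_div_nonneg.mpr hpq.symm.nonneg)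
    exact Finset.sum_nonneg fun k _ => Real.rpow_nonneg (hwnn n k) q
  set S := ∑ k ∈ range (n + 1), ((β k * ‖h k‖) * ‖g (n - k)‖) ^ pt with hS
  have hSnn : 0 ≤ S := Finset.sum_nonneg fun k _ =>
    Real.rpow_nonneg (mul_nonneg (mul_nonneg (hβ k).le (norm_nonneg _)) (norm_nonneg _)) _
  have step4 : ‖A β δ h g n‖ ≤ C0 ^ (1 / q) * S ^ (1 / pt) := by
    refine (step1.trans step2).trans ?_
    exact mul_le_mul_of_nonneg_right step3 (Real.rpow_nonneg hSnn _)
  have step5 : ‖A β δ h g n‖ ^ pt ≤ (C0 ^ (1 / q) * S ^ (1 / pt)) ^ pt :=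
    Real.rpow_le_rpow (norm_nonneg _) step4 hpq.nonneg
  refine step5.trans (le_of_eq ?_)
  rw [Real.mul_rpow (Real.rpow_nonneg hC0 _) (Real.rpow_nonneg hSnn _),
    ← Real.rpow_mul hC0, one_div, inv_mul_eq_div, one_div,
    Real.rpow_inv_rpow hSnn hpq.pos.ne', hS]
  congr 1
  refine Finset.sum_congr rfl fun k _ => ?_
  rw [Real.mul_rpow (mul_nonneg (hβ k).le (norm_nonneg _)) (norm_nonneg _)]

set_option maxHeartbeats 1000000 in
lemma key_summable (hβ : ∀ n, 0 < β n) (hδ : ∀ n, 0 < δ n)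
    (hpq : pt.HolderConjugate q) (hC0 : 0 ≤ C0)
    (hC : ∀ n, ∑ k ∈ range (n + 1), w β δ n k ^ q ≤ C0)
    (h g : ℕ → ℂ)
    (hsa : Summable fun k => (β k * ‖h k‖) ^ pt)
    (hsb : Summable fun n => ‖g n‖ ^ pt) :
    Summable (fun n => ‖A β δ h g n‖ ^ pt) ∧
      ∑' n, ‖A β δ h g n‖ ^ pt ≤
        C0 ^ (pt / q) * ((∑' k, (β k * ‖h k‖) ^ pt) * ∑' n, ‖g n‖ ^ pt) := by
  have hun : ∀ k, (0:ℝ) ≤ (β k * ‖h k‖) ^ pt := fun k =>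
    Real.rpow_nonneg (mul_nonneg (hβ k).le (norm_nonneg _)) _
  have hvn : ∀ n, (0:ℝ) ≤ ‖g n‖ ^ pt := fun n => Real.rpow_nonneg (norm_nonneg _) _
  have hsa' : Summable fun k => ‖(β k * ‖h k‖) ^ pt‖ := by
    simpa only [Real.norm_of_nonneg (hun _)] using hsa
  have hsb' : Summable fun n => ‖‖g n‖ ^ pt‖ := by
    simpa only [Real.norm_of_nonneg (hvn _)] using hsb
  have hP' := hasSum_sum_range_mul_of_summable_norm (R := ℝ) hsa' hsb'
  have hP : HasSum (fun n => ∑ k ∈ range (n + 1), (β k * ‖h k‖) ^ pt * ‖g (n - k)‖ ^ pt)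
      ((∑' k, (β k * ‖h k‖) ^ pt) * ∑' n, ‖g n‖ ^ pt) := hP'
  have hbound := key_pointwise hβ hδ hpq hC0 hC h g
  have hsummable : Summable (fun n => ‖A β δ h g n‖ ^ pt) := by
    refine Summable.of_nonneg_of_le (fun n => Real.rpow_nonneg (norm_nonneg _) _) hbound
      (hP.summable.mul_left _)
  refine ⟨hsummable, ?_⟩
  calc ∑' n, ‖A β δ h g n‖ ^ pt
      ≤ ∑' n, C0 ^ (pt / q) * ∑ k ∈ range (n + 1), (β k * ‖h k‖) ^ pt * ‖g (n - k)‖ ^ pt :=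
        Summable.tsum_le_tsum hbound hsummable (hP.summable.mul_left _)
    _ = C0 ^ (pt / q) * ((∑' k, (β k * ‖h k‖) ^ pt) * ∑' n, ‖g n‖ ^ pt) := by
        rw [tsum_mul_left, hP.tsum_eq]

structure Good (β δ : ℕ → ℝ) (p : ℝ≥0∞) (q C0 : ℝ) : Prop where
  hβ : ∀ n, 0 < β n
  hδ : ∀ n, 0 < δ n
  hpq : p.toReal.HolderConjugate q
  hC0 : 0 ≤ C0
  hC : ∀ n, ∑ k ∈ Finset.range (n + 1), w β δ n k ^ q ≤ C0

variable {p : ℝ≥0∞} [Fact (1 ≤ p)]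

omit [Fact (1 ≤ p)] in
lemma Good.hpt (G : Good β δ p q C0) : 0 < p.toReal := G.hpq.pos

/-- the `ℓ^p(β)`-norm of the symbol. -/
def Na (β : ℕ → ℝ) (p : ℝ≥0∞) (h : ℕ → ℂ) : ℝ :=
  (∑' k, (β k * ‖h k‖) ^ p.toReal) ^ (1 / p.toReal)

lemma Na_nonneg (β : ℕ → ℝ) (hβ : ∀ n, 0 < β n) (p : ℝ≥0∞) (h : ℕ → ℂ) : 0 ≤ Na β p h :=
  Real.rpow_nonneg (tsum_nonneg fun k => Real.rpow_nonneg (mul_nonneg (hβ k).le (norm_nonneg _)) _) _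

lemma memA (G : Good β δ p q C0) (h : ℕ → ℂ)
    (hh : Summable fun k => (β k * ‖h k‖) ^ p.toReal) (g : lp (fun _ : ℕ => ℂ) p) :
    Memℓp (A β δ h ⇑g) p :=
  memℓp_gen (key_summable G.hβ G.hδ G.hpq G.hC0 G.hC h ⇑g hh
    ((lp.memℓp g).summable G.hpt)).1

lemma norm_bound (G : Good β δ p q C0) (h : ℕ → ℂ)
    (hh : Summable fun k => (β k * ‖h k‖) ^ p.toReal)
    (g : lp (fun _ : ℕ => ℂ) p) (x : lp (fun _ : ℕ => ℂ) p)
    (hx : ∀ n, x n = A β δ h (⇑g) n) :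
    ‖x‖ ≤ C0 ^ (1 / q) * Na β p h * ‖g‖ := by
  have hpt := G.hpt
  have hkey := (key_summable G.hβ G.hδ G.hpq G.hC0 G.hC h ⇑g hh
    ((lp.memℓp g).summable G.hpt)).2
  have hNa : 0 ≤ Na β p h := Na_nonneg β G.hβ p h
  refine lp.norm_le_of_tsum_le hpt
    (mul_nonneg (mul_nonneg (Real.rpow_nonneg G.hC0 _) hNa) (norm_nonneg _)) ?_
  have hSb : ∑' n, ‖(g : ∀ _ : ℕ, ℂ) n‖ ^ p.toReal = ‖g‖ ^ p.toReal :=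
    (lp.norm_rpow_eq_tsum hpt g).symm
  calc ∑' n, ‖x n‖ ^ p.toReal
      = ∑' n, ‖A β δ h (⇑g) n‖ ^ p.toReal := by
        congr 1; funext n; rw [hx n]
    _ ≤ C0 ^ (p.toReal / q) * ((∑' k, (β k * ‖h k‖) ^ p.toReal) * ∑' n, ‖(g : ∀ _ : ℕ, ℂ) n‖ ^ p.toReal) :=
        hkey
    _ = (C0 ^ (1 / q) * Na β p h * ‖g‖) ^ p.toReal := by
        have htnn : 0 ≤ ∑' k, (β k * ‖h k‖) ^ p.toReal :=
          tsum_nonneg fun k => Real.rpow_nonneg (mul_nonneg (G.hβ k).le (norm_nonneg _)) _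
        rw [hSb, Real.mul_rpow (mul_nonneg (Real.rpow_nonneg G.hC0 _) hNa) (norm_nonneg _),
          Real.mul_rpow (Real.rpow_nonneg G.hC0 _) hNa,
          ← Real.rpow_mul G.hC0, Na, one_div, one_div,
          Real.rpow_inv_rpow htnn hpt.ne',
          inv_mul_eq_div]
        ring

/-- The multiplication operator. -/
def opT (G : Good β δ p q C0) (h : ℕ → ℂ)
    (hh : Summable fun k => (β k * ‖h k‖) ^ p.toReal) :
    lp (fun _ : ℕ => ℂ) p →L[ℂ] lp (fun _ : ℕ => ℂ) p :=
  LinearMap.mkContinuous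
    { toFun := fun g => (⟨A β δ h ⇑g, memA G h hh g⟩ : lp (fun _ : ℕ => ℂ) p)
      map_add' := fun g₁ g₂ => by
        ext n
        change A β δ h (⇑(g₁ + g₂)) n = A β δ h ⇑g₁ n + A β δ h ⇑g₂ n
        rw [lp.coeFn_add, A_add]
      map_smul' := fun c g => by
        ext n
        change A β δ h (⇑(c • g)) n = c * A β δ h ⇑g n
        rw [lp.coeFn_smul, A_smul] }
    (C0 ^ (1 / q) * Na β p h)
    (fun g => norm_bound G h hh g _ (fun _ => rfl))

lemma opT_apply (G : Good β δ p q C0) (h : ℕ → ℂ)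
    (hh : Summable fun k => (β k * ‖h k‖) ^ p.toReal)
    (g : lp (fun _ : ℕ => ℂ) p) (n : ℕ) :
    opT G h hh g n = A β δ h ⇑g n := rfl

lemma opT_norm (G : Good β δ p q C0) (h : ℕ → ℂ)
    (hh : Summable fun k => (β k * ‖h k‖) ^ p.toReal) :
    ‖opT G h hh‖ ≤ C0 ^ (1 / q) * Na β p h :=
  LinearMap.mkContinuous_norm_le _
    (mul_nonneg (Real.rpow_nonneg G.hC0 _) (Na_nonneg β G.hβ p h)) _


def truncFun (M : ℕ) (g : ℕ → ℂ) : ℕ → ℂ := fun n => if n ≤ M then g n else 0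

lemma truncFun_norm_le (M : ℕ) (g : ℕ → ℂ) (n : ℕ) (pt : ℝ) (hpt : 0 < pt) :
    ‖truncFun M g n‖ ^ pt ≤ ‖g n‖ ^ pt := by
  unfold truncFun
  split
  · exact le_rfl
  · rw [norm_zero, Real.zero_rpow hpt.ne']
    exact Real.rpow_nonneg (norm_nonneg _) _

lemma trunc_mem (hpt : 0 < p.toReal) (M : ℕ) (g : lp (fun _ : ℕ => ℂ) p) :
    Memℓp (truncFun M ⇑g) p :=
  memℓp_gen <| Summable.of_nonneg_of_le (fun n => Real.rpow_nonneg (norm_nonneg _) _)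
    (fun n => truncFun_norm_le M (⇑g) n _ hpt) ((lp.memℓp g).summable hpt)

/-- truncation operator keeping coordinates `0,...,M`. -/
def trunc (hpt : 0 < p.toReal) (M : ℕ) :
    lp (fun _ : ℕ => ℂ) p →L[ℂ] lp (fun _ : ℕ => ℂ) p :=
  LinearMap.mkContinuous
    { toFun := fun g => (⟨truncFun M ⇑g, trunc_mem hpt M g⟩ : lp (fun _ : ℕ => ℂ) p)
      map_add' := fun g₁ g₂ => by
        ext n
        change truncFun M (⇑(g₁ + g₂)) n = truncFun M ⇑g₁ n + truncFun M ⇑g₂ n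
        rw [lp.coeFn_add]
        unfold truncFun
        split <;> simp
      map_smul' := fun c g => by
        ext n
        change truncFun M (⇑(c • g)) n = c * truncFun M ⇑g n
        rw [lp.coeFn_smul]
        unfold truncFun
        split <;> simp }
    1
    (fun g => by
      rw [one_mul]
      refine lp.norm_le_of_tsum_le hpt (norm_nonneg _) ?_
      rw [lp.norm_rpow_eq_tsum hpt g]
      exact Summable.tsum_le_tsum (fun n => truncFun_norm_le M (⇑g) n _ hpt)
        ((lp.memℓp _).summable hpt) ((lp.memℓp g).summable hpt))

lemma trunc_apply (hpt : 0 < p.toReal) (M : ℕ) (g : lp (fun _ : ℕ => ℂ) p) (n : ℕ) :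
    trunc hpt M g n = if n ≤ M then g n else 0 := rfl

lemma isCompactOperator_trunc_comp (hpt : 0 < p.toReal) (M : ℕ)
    (S : lp (fun _ : ℕ => ℂ) p →L[ℂ] lp (fun _ : ℕ => ℂ) p) :
    IsCompactOperator ((trunc hpt M).comp S) := by
  set V : Submodule ℂ (lp (fun _ : ℕ => ℂ) p) :=
    Submodule.span ℂ ((fun i : ℕ => lp.single p i (1 : ℂ)) '' Set.Iic M) with hV
  haveI : FiniteDimensional ℂ V :=
    FiniteDimensional.span_of_finite ℂ ((Set.finite_Iic M).image _)
  haveI : ProperSpace V := FiniteDimensional.proper ℂ V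
  have hmem : ∀ g : lp (fun _ : ℕ => ℂ) p, ((trunc hpt M).comp S) g ∈ V := by
    intro g
    set x := (trunc hpt M) (S g) with hx
    have hxeq : x = ∑ i ∈ Finset.range (M + 1), x i • lp.single p i (1 : ℂ) := by
      ext n
      rw [lp.coeFn_sum]
      simp only [Finset.sum_apply]
      have : ∀ i : ℕ, (x i • lp.single p i (1 : ℂ) : lp (fun _ : ℕ => ℂ) p) n = if n = i then x i else 0 := by
        intro i
        rw [lp.coeFn_smul, Pi.smul_apply, lp.single_apply]
        by_cases hni : n = i
        · subst hni; simp [Pi.single_apply]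
        · simp [Pi.single_apply, hni]
      rw [Finset.sum_congr rfl fun i _ => this i, Finset.sum_ite_eq]
      by_cases hn : n ∈ Finset.range (M + 1)
      · rw [if_pos hn]
      · rw [if_neg hn]
        have hn' : ¬ n ≤ M := by simpa [Finset.mem_range, Nat.lt_succ_iff] using hn
        rw [hx]
        change truncFun M (⇑(S g)) n = 0
        unfold truncFun
        rw [if_neg hn']
    rw [show ((trunc hpt M).comp S) g = x from rfl, hxeq]
    refine Submodule.sum_mem V fun i hi => Submodule.smul_mem V _ (Submodule.subset_span ?_)
    exact ⟨i, by simpa [Nat.lt_succ_iff] using hi, rfl⟩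
  set r := ‖(trunc hpt M).comp S‖ with hr
  refine ⟨Subtype.val '' Metric.closedBall (0 : V) r, ?_, ?_⟩
  · exact (isCompact_closedBall _ _).image continuous_subtype_val
  · refine Filter.mem_of_superset (Metric.closedBall_mem_nhds (0 : lp (fun _ : ℕ => ℂ) p) one_pos)
      (fun g hg => ?_)
    refine ⟨⟨((trunc hpt M).comp S) g, hmem g⟩, ?_, rfl⟩
    rw [Metric.mem_closedBall, dist_zero_right]
    calc ‖(⟨((trunc hpt M).comp S) g, hmem g⟩ : V)‖
        = ‖((trunc hpt M).comp S) g‖ := rfl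
      _ ≤ r * ‖g‖ := ((trunc hpt M).comp S).le_opNorm g
      _ ≤ r * 1 := by
          refine mul_le_mul_of_nonneg_left ?_ (norm_nonneg _)
          simpa [Metric.mem_closedBall, dist_zero_right] using hg
      _ = r := mul_one r


lemma bconst_nonneg (hβ : ∀ n, 0 < β n) (hδ : ∀ n, 0 < δ n)
    (hbfin : ∀ M k : ℕ, BddAbove (Set.range fun n : ℕ =>
      δ (M + 1 + n + k) * β (M + 1 + n + k) /
        (δ (M + 1 + n) * δ k * β (M + 1 + n) * β k)))
    (M k : ℕ) : 0 ≤ bconst β δ M k := by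
  have h0 : (0:ℝ) ≤ δ (M + 1 + 0 + k) * β (M + 1 + 0 + k) /
      (δ (M + 1 + 0) * δ k * β (M + 1 + 0) * β k) := by
    apply div_nonneg (mul_nonneg (hδ _).le (hβ _).le)
    exact mul_nonneg (mul_nonneg (mul_nonneg (hδ _).le (hδ _).le) (hβ _).le) (hβ _).le
  exact h0.trans (le_ciSup (hbfin M k) 0)

lemma w_le_bconst (hβ : ∀ n, 0 < β n) (hδ : ∀ n, 0 < δ n)
    (hbfin : ∀ M k : ℕ, BddAbove (Set.range fun n : ℕ =>
      δ (M + 1 + n + k) * β (M + 1 + n + k) /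
        (δ (M + 1 + n) * δ k * β (M + 1 + n) * β k)))
    {M N n k : ℕ} (hk : k ≤ N) (hNM : N ≤ M) (hn : M < n) :
    w β δ n k ≤ bconst β δ (M - N) k := by
  set M' := M - N with hM'
  set j := n - k - (M' + 1) with hj
  have hle : δ (M' + 1 + j + k) * β (M' + 1 + j + k) /
      (δ (M' + 1 + j) * δ k * β (M' + 1 + j) * β k) ≤ bconst β δ M' k :=
    le_ciSup (hbfin M' k) j
  have h1 : M' + 1 + j + k = n := by omega
  have h2 : M' + 1 + j = n - k := by omega
  rw [h1, h2] at hle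
  refine le_trans (le_of_eq ?_) hle
  rw [w]
  congr 1
  ring

lemma tail_pointwise (hβ : ∀ n, 0 < β n) (hδ : ∀ n, 0 < δ n)
    (hbfin : ∀ M k : ℕ, BddAbove (Set.range fun n : ℕ =>
      δ (M + 1 + n + k) * β (M + 1 + n + k) /
        (δ (M + 1 + n) * δ k * β (M + 1 + n) * β k)))
    {N M : ℕ} (hNM : N ≤ M) (h : ℕ → ℂ)
    (hsupp : ∀ k, k ∉ Finset.Icc 1 N → h k = 0) (g : ℕ → ℂ) {n : ℕ} (hn : M < n) :
    ‖A β δ h g n‖ ≤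
      ∑ k ∈ Finset.Icc 1 N, (bconst β δ (M - N) k * (β k * ‖h k‖)) * ‖g (n - k)‖ := by
  have hsub : Finset.Icc 1 N ⊆ Finset.range (n + 1) := by
    intro k hk
    rw [Finset.mem_range]
    have := (Finset.mem_Icc.mp hk).2
    omega
  have hA : A β δ h g n =
      ∑ k ∈ Finset.Icc 1 N, ((w β δ n k : ℝ) : ℂ) * ((β k : ℝ) * h k) * g (n - k) := by
    rw [A]
    refine (Finset.sum_subset hsub fun x _ hx => ?_).symm
    rw [hsupp x hx]
    ring
  rw [hA]
  refine (norm_sum_le _ _).trans (Finset.sum_le_sum fun k hk => ?_)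
  rw [norm_mul, norm_mul, Complex.norm_real, Real.norm_of_nonneg (w_nonneg β δ hβ hδ n k)]
  have hwb := w_le_bconst hβ hδ hbfin (Finset.mem_Icc.mp hk).2 hNM hn
  have : w β δ n k * (β k * ‖h k‖) ≤ bconst β δ (M - N) k * (β k * ‖h k‖) :=
    mul_le_mul_of_nonneg_right hwb (mul_nonneg (hβ k).le (norm_nonneg _))
  calc w β δ n k * ‖β k * h k‖ * ‖g (n - k)‖
      = w β δ n k * (β k * ‖h k‖) * ‖g (n - k)‖ := by
        rw [norm_mul, Complex.norm_real, Real.norm_of_nonneg (hβ k).le]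
    _ ≤ bconst β δ (M - N) k * (β k * ‖h k‖) * ‖g (n - k)‖ :=
        mul_le_mul_of_nonneg_right this (norm_nonneg _)


set_option maxHeartbeats 1000000 in
lemma tail_norm (G : Good β δ p q C0)
    (hbfin : ∀ M k : ℕ, BddAbove (Set.range fun n : ℕ =>
      δ (M + 1 + n + k) * β (M + 1 + n + k) /
        (δ (M + 1 + n) * δ k * β (M + 1 + n) * β k)))
    {N M : ℕ} (hNM : N ≤ M) (h : ℕ → ℂ)
    (hsupp : ∀ k, k ∉ Finset.Icc 1 N → h k = 0)
    (g x : lp (fun _ : ℕ => ℂ) p)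
    (hx : ∀ n, x n = if n ≤ M then 0 else A β δ h ⇑g n) :
    ‖x‖ ≤ (∑ k ∈ Finset.Icc 1 N, bconst β δ (M - N) k * (β k * ‖h k‖)) * ‖g‖ := by
  have hpt := G.hpt
  have hpt1 : 1 < p.toReal := G.hpq.lt
  set c : ℕ → ℝ := fun k => bconst β δ (M - N) k * (β k * ‖h k‖) with hc
  have hcnn : ∀ k, 0 ≤ c k := fun k => mul_nonneg (bconst_nonneg G.hβ G.hδ hbfin _ _)
    (mul_nonneg (G.hβ k).le (norm_nonneg _))
  set D := ∑ k ∈ Finset.Icc 1 N, c k with hD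
  have hDnn : 0 ≤ D := Finset.sum_nonneg fun k _ => hcnn k
  set r : ℕ → ℕ → ℝ := fun k n => if n ≤ M then 0 else ‖(g : ℕ → ℂ) (n - k)‖ ^ p.toReal with hr
  have hrnn : ∀ k n, 0 ≤ r k n := by
    intro k n
    rw [hr]
    dsimp only
    split
    · exact le_rfl
    · exact Real.rpow_nonneg (norm_nonneg _) _
  -- pointwise bound
  have hpw : ∀ n, ‖x n‖ ^ p.toReal ≤
      D ^ (p.toReal - 1) * ∑ k ∈ Finset.Icc 1 N, c k * r k n := by
    intro n
    by_cases hnM : n ≤ M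
    · rw [hx n, if_pos hnM, norm_zero, Real.zero_rpow hpt.ne']
      exact mul_nonneg (Real.rpow_nonneg hDnn _)
        (Finset.sum_nonneg fun k _ => mul_nonneg (hcnn k) (hrnn k n))
    · push_neg at hnM
      rw [hx n, if_neg (by omega)]
      have h1 : ‖A β δ h (⇑g) n‖ ≤ ∑ k ∈ Finset.Icc 1 N, c k * ‖(g : ℕ → ℂ) (n - k)‖ := by
        have := tail_pointwise G.hβ G.hδ hbfin hNM h hsupp (⇑g) hnM
        exact this
      have h2 := Real.inner_le_weight_mul_Lp_of_nonneg (Finset.Icc 1 N) hpt1.le c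
        (fun k => ‖(g : ℕ → ℂ) (n - k)‖) hcnn (fun k => norm_nonneg _)
      have hSnn : (0:ℝ) ≤ ∑ k ∈ Finset.Icc 1 N, c k * ‖(g : ℕ → ℂ) (n - k)‖ ^ p.toReal :=
        Finset.sum_nonneg fun k _ => mul_nonneg (hcnn k) (Real.rpow_nonneg (norm_nonneg _) _)
      have h3 : ‖A β δ h (⇑g) n‖ ^ p.toReal ≤
          (D ^ (1 - p.toReal⁻¹) *
            (∑ k ∈ Finset.Icc 1 N, c k * ‖(g : ℕ → ℂ) (n - k)‖ ^ p.toReal) ^ p.toReal⁻¹)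
            ^ p.toReal :=
        Real.rpow_le_rpow (norm_nonneg _) (h1.trans h2) hpt.le
      refine h3.trans (le_of_eq ?_)
      rw [Real.mul_rpow (Real.rpow_nonneg hDnn _) (Real.rpow_nonneg hSnn _),
        ← Real.rpow_mul hDnn, Real.rpow_inv_rpow hSnn hpt.ne',
        sub_mul, one_mul, inv_mul_cancel₀ hpt.ne']
      congr 1
      refine Finset.sum_congr rfl fun k hk => ?_
      rw [hr]
      dsimp only
      rw [if_neg (by omega)]
  -- summability and tsum bounds for the shifts
  have hgsum : Summable fun m => ‖(g : ℕ → ℂ) m‖ ^ p.toReal := (lp.memℓp g).summable hpt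
  have hshift : ∀ k, ∀ m : ℕ, r k (m + k) ≤ ‖(g : ℕ → ℂ) m‖ ^ p.toReal := by
    intro k m
    rw [hr]
    dsimp only
    split
    · exact Real.rpow_nonneg (norm_nonneg _) _
    · rw [Nat.add_sub_cancel]
  have hsumshift : ∀ k, Summable fun m => r k (m + k) := fun k =>
    Summable.of_nonneg_of_le (fun m => hrnn _ _) (hshift k) hgsum
  have hrk : ∀ k, Summable (r k) := fun k => (summable_nat_add_iff k).mp (hsumshift k)
  have hrtsum : ∀ k, k ≤ M → ∑' n, r k n ≤ ‖g‖ ^ p.toReal := by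
    intro k hkM
    have hsplit := Summable.sum_add_tsum_nat_add k (hrk k)
    have hzero : ∑ i ∈ Finset.range k, r k i = 0 := by
      refine Finset.sum_eq_zero fun i hi => ?_
      rw [hr]
      dsimp only
      rw [if_pos (by simp only [Finset.mem_range] at hi; omega)]
    rw [← hsplit, hzero, zero_add, lp.norm_rpow_eq_tsum hpt g]
    exact Summable.tsum_le_tsum (hshift k) (hsumshift k) hgsum
  have hssum : Summable fun n => ∑ k ∈ Finset.Icc 1 N, c k * r k n :=
    summable_sum fun k _ => (hrk k).mul_left (c k)
  have hstsum : ∑' n, ∑ k ∈ Finset.Icc 1 N, c k * r k n ≤ D * ‖g‖ ^ p.toReal := by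
    rw [Summable.tsum_finsetSum fun k _ => (hrk k).mul_left (c k), hD, Finset.sum_mul]
    refine Finset.sum_le_sum fun k hk => ?_
    rw [tsum_mul_left]
    refine mul_le_mul_of_nonneg_left ?_ (hcnn k)
    exact hrtsum k (le_trans (Finset.mem_Icc.mp hk).2 hNM)
  -- conclude
  refine lp.norm_le_of_tsum_le hpt (mul_nonneg hDnn (norm_nonneg _)) ?_
  have hsx : Summable fun n => ‖x n‖ ^ p.toReal := (lp.memℓp x).summable hpt
  calc ∑' n, ‖x n‖ ^ p.toReal
      ≤ ∑' n, D ^ (p.toReal - 1) * ∑ k ∈ Finset.Icc 1 N, c k * r k n :=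
        Summable.tsum_le_tsum hpw hsx (hssum.mul_left _)
    _ = D ^ (p.toReal - 1) * ∑' n, ∑ k ∈ Finset.Icc 1 N, c k * r k n := tsum_mul_left
    _ ≤ D ^ (p.toReal - 1) * (D * ‖g‖ ^ p.toReal) :=
        mul_le_mul_of_nonneg_left hstsum (Real.rpow_nonneg hDnn _)
    _ = (D * ‖g‖) ^ p.toReal := by
        rw [Real.mul_rpow hDnn (norm_nonneg _)]
        by_cases hD0 : D = 0
        · rw [hD0, Real.zero_rpow (by intro hcon; rw [sub_eq_zero] at hcon; exact hpt1.ne' hcon),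
            Real.zero_rpow hpt.ne']
          ring
        · have : D ^ (p.toReal - 1) * D = D ^ p.toReal := by
            nth_rewrite 2 [← Real.rpow_one D]
            rw [← Real.rpow_add (lt_of_le_of_ne hDnn (Ne.symm hD0))]
            norm_num
          rw [← this]
          ring

end Stmt3Aux

set_option maxHeartbeats 1000000 in
/-- Lemma 2.2, compactness, `1 < p < ∞`: under the identification
`f ↦ (β(n)f(n))ₙ` of `ℓ^p(β)` with the standard `lp` space, if `C₀ < ∞`,
`∑_{k=1}^M b_{M,k} → 0` as `M → ∞`, and `f ∈ ℓ^p(β)` has `f(0) = 0`, then the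
`⋄`-multiplication operator `M_{⋄,f} : g ↦ f⋄g` on `ℓ^p(β)` is compact. -/
theorem stmt3 (β δ : ℕ → ℝ) (hβ : ∀ n, 0 < β n) (hδ : ∀ n, 0 < δ n)
    (hβ0 : β 0 = 1) (hδ0 : δ 0 = 1)
    (p : ℝ≥0∞) [Fact (1 ≤ p)] (hp1 : 1 < p) (hp : p ≠ ∞)
    (q : ℝ) (hpq : 1 / p.toReal + 1 / q = 1)
    (hC : BddAbove (Set.range fun n : ℕ =>
      ∑ k ∈ Finset.range (n + 1),
        (δ n * β n / (δ k * δ (n - k) * β k * β (n - k))) ^ q))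
    (hbfin : ∀ M k : ℕ, BddAbove (Set.range fun n : ℕ =>
      δ (M + 1 + n + k) * β (M + 1 + n + k) /
        (δ (M + 1 + n) * δ k * β (M + 1 + n) * β k)))
    (hbto : Tendsto (fun M : ℕ => ∑ k ∈ Finset.Icc 1 M, bconst β δ M k) atTop (𝓝 0))
    (f : ℕ → ℂ) (hf : Memℓp (fun n => (β n : ℂ) * f n) p) (hf0 : f 0 = 0) :
    ∃ T : lp (fun _ : ℕ => ℂ) p →L[ℂ] lp (fun _ : ℕ => ℂ) p,
      (∀ g : lp (fun _ : ℕ => ℂ) p, ∀ n : ℕ,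
        T g n = (β n : ℂ) * dprod δ f (fun m => g m / (β m : ℂ)) n) ∧
      IsCompactOperator T := by
  classical
  have hpt1 : 1 < p.toReal := by
    rw [← ENNReal.toReal_one]
    exact (ENNReal.toReal_lt_toReal (by norm_num) hp).mpr hp1
  have hpt : 0 < p.toReal := lt_trans one_pos hpt1
  have hconj : p.toReal.HolderConjugate q := Real.holderConjugate_iff.mpr ⟨hpt1, by simpa [one_div] using hpq⟩
  set C0 : ℝ := ⨆ n : ℕ, ∑ k ∈ Finset.range (n + 1),
      (δ n * β n / (δ k * δ (n - k) * β k * β (n - k))) ^ q with hC0def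
  have hCle : ∀ n, ∑ k ∈ Finset.range (n + 1), Stmt3Aux.w β δ n k ^ q ≤ C0 := by
    intro n
    simpa only [Stmt3Aux.w] using le_ciSup hC n
  have hC0nn : 0 ≤ C0 := by
    refine le_trans ?_ (hCle 0)
    refine Finset.sum_nonneg fun k _ => Real.rpow_nonneg (Stmt3Aux.w_nonneg β δ hβ hδ 0 k) q
  have G : Stmt3Aux.Good β δ p q C0 := ⟨hβ, hδ, hconj, hC0nn, hCle⟩
  have hsummf : Summable fun k => (β k * ‖f k‖) ^ p.toReal := by
    refine (hf.summable hpt).congr fun k => ?_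
    rw [norm_mul, Complex.norm_real, Real.norm_of_nonneg (hβ k).le]
  set T := Stmt3Aux.opT G f hsummf with hTdef
  refine ⟨T, fun g n => ?_, ?_⟩
  · rw [hTdef, Stmt3Aux.opT_apply, Stmt3Aux.A_eq β δ hβ hδ]
  -- compactness
  suffices hmem : T ∈ closure {S : lp (fun _ : ℕ => ℂ) p →L[ℂ] lp (fun _ : ℕ => ℂ) p |
      IsCompactOperator S} by
    exact isClosed_setOf_isCompactOperator.closure_subset hmem
  rw [Metric.mem_closure_iff]
  intro ε hε
  set u : ℕ → ℝ := fun k => (β k * ‖f k‖) ^ p.toReal with hu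
  have hunn : ∀ k, 0 ≤ u k := fun k =>
    Real.rpow_nonneg (mul_nonneg (hβ k).le (norm_nonneg _)) _
  set K := C0 ^ (1 / q) with hK
  have hKnn : 0 ≤ K := Real.rpow_nonneg hC0nn _
  have hζ : 0 < ε / 2 / (K + 1) := by positivity
  set ζ := ε / 2 / (K + 1) with hζdef
  have htail : Tendsto (fun N : ℕ => ∑' m, u (m + (N + 1))) atTop (𝓝 0) :=
    (tendsto_sum_nat_add u).comp (tendsto_add_atTop_nat 1)
  obtain ⟨N, hN⟩ :=
    (htail.eventually (gt_mem_nhds (show (0:ℝ) < ζ ^ p.toReal by positivity))).exists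
  -- the truncated symbol
  set fN : ℕ → ℂ := fun k => if k ≤ N then f k else 0 with hfNdef
  set d : ℕ → ℂ := fun k => if k ≤ N then 0 else f k with hddef
  have hsummfN : Summable fun k => (β k * ‖fN k‖) ^ p.toReal := by
    refine hsummf.of_nonneg_of_le (fun k => Real.rpow_nonneg (mul_nonneg (hβ k).le (norm_nonneg _)) _)
      (fun k => ?_)
    refine Real.rpow_le_rpow (mul_nonneg (hβ k).le (norm_nonneg _)) ?_ hpt.le
    refine mul_le_mul_of_nonneg_left ?_ (hβ k).le
    rw [hfNdef]
    dsimp only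
    split
    · exact le_rfl
    · simp
  have hsummd : Summable fun k => (β k * ‖d k‖) ^ p.toReal := by
    refine hsummf.of_nonneg_of_le (fun k => Real.rpow_nonneg (mul_nonneg (hβ k).le (norm_nonneg _)) _)
      (fun k => ?_)
    refine Real.rpow_le_rpow (mul_nonneg (hβ k).le (norm_nonneg _)) ?_ hpt.le
    refine mul_le_mul_of_nonneg_left ?_ (hβ k).le
    rw [hddef]
    dsimp only
    split
    · simp
    · exact le_rfl
  set TN := Stmt3Aux.opT G fN hsummfN with hTN
  -- first difference estimate
  have hfd : f - fN = d := by
    funext k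
    rw [Pi.sub_apply, hfNdef, hddef]
    dsimp only
    split
    · simp
    · simp
  have hdiff1 : ‖T - TN‖ ≤ K * Stmt3Aux.Na β p d := by
    refine ContinuousLinearMap.opNorm_le_bound _
      (mul_nonneg hKnn (Stmt3Aux.Na_nonneg β hβ p d)) (fun g => ?_)
    refine Stmt3Aux.norm_bound G d hsummd g ((T - TN) g) (fun n => ?_)
    rw [ContinuousLinearMap.sub_apply, lp.coeFn_sub, Pi.sub_apply, hTdef, hTN,
      Stmt3Aux.opT_apply, Stmt3Aux.opT_apply, ← Stmt3Aux.A_sub_left, hfd]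
  -- Na d is small
  have hNad : Stmt3Aux.Na β p d < ζ := by
    have hvd : ∀ k, (β k * ‖d k‖) ^ p.toReal = if k ≤ N then 0 else u k := by
      intro k
      rw [hddef, hu]
      dsimp only
      split
      · rw [norm_zero, mul_zero, Real.zero_rpow hpt.ne']
      · rfl
    have htsum_eq : ∑' k, (β k * ‖d k‖) ^ p.toReal = ∑' m, u (m + (N + 1)) := by
      have hsummable : Summable fun k => (β k * ‖d k‖) ^ p.toReal := hsummd
      have := (Summable.sum_add_tsum_nat_add (N + 1) hsummable).symm
      rw [this]
      have h1 : ∑ i ∈ Finset.range (N + 1), (β i * ‖d i‖) ^ p.toReal = 0 := by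
        refine Finset.sum_eq_zero fun i hi => ?_
        rw [hvd i, if_pos (by simp only [Finset.mem_range] at hi; omega)]
      rw [h1, zero_add]
      refine tsum_congr fun m => ?_
      rw [hvd (m + (N + 1)), if_neg (by omega)]
    rw [Stmt3Aux.Na, htsum_eq]
    have hlt : ∑' m, u (m + (N + 1)) < ζ ^ p.toReal := hN
    have hnn : 0 ≤ ∑' m, u (m + (N + 1)) := tsum_nonneg fun m => hunn _
    calc (∑' m, u (m + (N + 1))) ^ (1 / p.toReal)
        < (ζ ^ p.toReal) ^ (1 / p.toReal) := by
          refine Real.rpow_lt_rpow hnn hlt (by positivity)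
      _ = ζ := by
          rw [one_div, Real.rpow_rpow_inv hζ.le hpt.ne']
  have hdiff1' : ‖T - TN‖ < ε / 2 := by
    calc ‖T - TN‖ ≤ K * Stmt3Aux.Na β p d := hdiff1
      _ ≤ K * ζ := mul_le_mul_of_nonneg_left hNad.le hKnn
      _ < (K + 1) * ζ := mul_lt_mul_of_pos_right (lt_add_one K) hζ
      _ = ε / 2 := by
          rw [hζdef]
          field_simp
  -- Step 2: choose M
  set B := 1 + ∑ k ∈ Finset.Icc 1 N, β k * ‖f k‖ with hB
  have hBpos : 0 < B := by
    have : 0 ≤ ∑ k ∈ Finset.Icc 1 N, β k * ‖f k‖ :=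
      Finset.sum_nonneg fun k _ => mul_nonneg (hβ k).le (norm_nonneg _)
    linarith
  have hBk : ∀ k ∈ Finset.Icc 1 N, β k * ‖f k‖ ≤ B := by
    intro k hk
    have h1 := Finset.single_le_sum (f := fun k => β k * ‖f k‖)
      (fun i _ => mul_nonneg (hβ i).le (norm_nonneg _)) hk
    exact h1.trans (le_add_of_nonneg_left zero_le_one)
  have hη : 0 < ε / 2 / B := by positivity
  obtain ⟨M₀, hM₀⟩ := (Filter.eventually_atTop.mp
    (hbto.eventually (gt_mem_nhds hη)))
  set M := N + max M₀ N with hMdef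
  have hNM : N ≤ M := Nat.le_add_right N _
  have hMN : M - N = max M₀ N := by omega
  have hsupp : ∀ k, k ∉ Finset.Icc 1 N → fN k = 0 := by
    intro k hk
    rw [Finset.mem_Icc] at hk
    push_neg at hk
    rw [hfNdef]
    dsimp only
    by_cases hkN : k ≤ N
    · rw [if_pos hkN]
      have : k = 0 := by omega
      rw [this, hf0]
    · rw [if_neg hkN]
  set D := ∑ k ∈ Finset.Icc 1 N, bconst β δ (M - N) k * (β k * ‖fN k‖) with hDdef
  have hDnn : 0 ≤ D := Finset.sum_nonneg fun k _ =>
    mul_nonneg (Stmt3Aux.bconst_nonneg hβ hδ hbfin _ _)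
      (mul_nonneg (hβ k).le (norm_nonneg _))
  set S := (Stmt3Aux.trunc hpt M).comp TN with hS
  have hdiff2 : ‖TN - S‖ ≤ D := by
    refine ContinuousLinearMap.opNorm_le_bound _ hDnn (fun g => ?_)
    refine Stmt3Aux.tail_norm G hbfin hNM fN hsupp g ((TN - S) g) (fun n => ?_)
    rw [ContinuousLinearMap.sub_apply, lp.coeFn_sub, Pi.sub_apply, hS,
      ContinuousLinearMap.comp_apply, Stmt3Aux.trunc_apply, hTN, Stmt3Aux.opT_apply]
    split
    · simp
    · simp
  have hDlt : D < ε / 2 := by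
    have step1 : D ≤ B * ∑ k ∈ Finset.Icc 1 N, bconst β δ (M - N) k := by
      rw [Finset.mul_sum, hDdef]
      refine Finset.sum_le_sum fun k hk => ?_
      have hfNk : β k * ‖fN k‖ ≤ B := by
        rw [hfNdef]
        dsimp only
        rw [if_pos (Finset.mem_Icc.mp hk).2]
        exact hBk k hk
      calc bconst β δ (M - N) k * (β k * ‖fN k‖)
          ≤ bconst β δ (M - N) k * B :=
            mul_le_mul_of_nonneg_left hfNk (Stmt3Aux.bconst_nonneg hβ hδ hbfin _ _)
        _ = B * bconst β δ (M - N) k := mul_comm _ _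
    have step2 : ∑ k ∈ Finset.Icc 1 N, bconst β δ (M - N) k ≤
        ∑ k ∈ Finset.Icc 1 (M - N), bconst β δ (M - N) k := by
      refine Finset.sum_le_sum_of_subset_of_nonneg
        (Finset.Icc_subset_Icc_right (by omega)) (fun k _ _ => Stmt3Aux.bconst_nonneg hβ hδ hbfin _ _)
    have step3 : ∑ k ∈ Finset.Icc 1 (M - N), bconst β δ (M - N) k < ε / 2 / B := by
      refine hM₀ (M - N) ?_
      omega
    calc D ≤ B * ∑ k ∈ Finset.Icc 1 N, bconst β δ (M - N) k := step1
      _ ≤ B * ∑ k ∈ Finset.Icc 1 (M - N), bconst β δ (M - N) k :=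
          mul_le_mul_of_nonneg_left step2 hBpos.le
      _ < B * (ε / 2 / B) := mul_lt_mul_of_pos_left step3 hBpos
      _ = ε / 2 := by field_simp
  refine ⟨S, Stmt3Aux.isCompactOperator_trunc_comp hpt M TN, ?_⟩
  rw [dist_eq_norm]
  calc ‖T - S‖ = ‖(T - TN) + (TN - S)‖ := by rw [sub_add_sub_cancel]
    _ ≤ ‖T - TN‖ + ‖TN - S‖ := norm_add_le _ _
    _ < ε / 2 + ε / 2 := add_lt_add_of_lt_of_le hdiff1' (hdiff2.trans hDlt.le)
    _ = ε := by ring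
end
end

section
/- (Lemma 2.2, closed range) Let 1 < p < ∞ with conjugate exponent q. Assume C₀ < ∞ and that ∑_{k=1}^M b_{M,k} → 0 as M → ∞. Let f ∈ ℓ^p(β) with f(0) = 0 and let λ be a nonzero complex number. Then the operator λI − M_{⋄,f} on ℓ^p(β) has closed range, where I is the identity operator and M_{⋄,f}(g) = f⋄g. -/
open Filter Finset
open scoped ENNReal Topology

noncomputable section

namespace Stmt5Aux

variable {p : ℝ≥0∞} [Fact (1 ≤ p)]

set_option linter.unusedSectionVars false

/-- shifted weighted sequence -/
def sv (k : ℕ) (c : ℕ → ℝ) (g : lp (fun _ : ℕ => ℂ) p) : ℕ → ℂ :=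
  fun n => if n < k then 0 else (c n : ℂ) * g (n - k)

theorem shift_key (hp : 0 < p.toReal) (k : ℕ) (c : ℕ → ℝ) {B : ℝ} (hB : 0 ≤ B)
    (hc : ∀ n, k ≤ n → |c n| ≤ B) (g : lp (fun _ : ℕ => ℂ) p) :
    Summable (fun n => ‖sv k c g n‖ ^ p.toReal) ∧
      ∑' n, ‖sv k c g n‖ ^ p.toReal ≤ B ^ p.toReal * ∑' n, ‖g n‖ ^ p.toReal := by
  have hg : Summable (fun n => ‖g n‖ ^ p.toReal) := (lp.memℓp g).summable hp
  set s : ℕ → ℝ := fun n => B ^ p.toReal * ‖g n‖ ^ p.toReal with hs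
  have hssum : Summable s := hg.mul_left _
  set F : ℕ → ℝ := fun n => if n < k then 0 else s (n - k) with hF
  have hFk : ∀ n, F (n + k) = s n := by
    intro n
    simp only [hF]
    rw [if_neg (by omega)]
    congr 1
    omega
  have hFsum : Summable F := by
    refine (summable_nat_add_iff k).1 ?_
    simpa only [hFk] using hssum
  have hle : ∀ n, ‖sv k c g n‖ ^ p.toReal ≤ F n := by
    intro n
    by_cases h : n < k
    · simp [sv, hF, h, Real.zero_rpow hp.ne']
    · simp only [sv, hF, if_neg h]
      have h1 : ‖(c n : ℂ) * g (n - k)‖ ≤ B * ‖g (n - k)‖ := by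
        rw [norm_mul, Complex.norm_real, Real.norm_eq_abs]
        exact mul_le_mul_of_nonneg_right (hc n (by omega)) (norm_nonneg _)
      calc ‖(c n : ℂ) * g (n - k)‖ ^ p.toReal ≤ (B * ‖g (n - k)‖) ^ p.toReal :=
            Real.rpow_le_rpow (norm_nonneg _) h1 hp.le
        _ = B ^ p.toReal * ‖g (n - k)‖ ^ p.toReal := Real.mul_rpow hB (norm_nonneg _)
  have hnn : ∀ n, 0 ≤ ‖sv k c g n‖ ^ p.toReal := fun n => Real.rpow_nonneg (norm_nonneg _) _
  have hsum : Summable (fun n => ‖sv k c g n‖ ^ p.toReal) :=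
    Summable.of_nonneg_of_le hnn hle hFsum
  refine ⟨hsum, ?_⟩
  have h1 : ∑' n, ‖sv k c g n‖ ^ p.toReal ≤ ∑' n, F n := Summable.tsum_le_tsum hle hsum hFsum
  have h2 : ∑' n, F n = ∑' n, s n := by
    rw [← Summable.sum_add_tsum_nat_add k hFsum]
    have : ∀ i ∈ Finset.range k, F i = 0 := by
      intro i hi
      simp only [hF]
      rw [if_pos (Finset.mem_range.1 hi)]
    rw [Finset.sum_eq_zero this, zero_add]
    exact tsum_congr hFk
  rw [h2] at h1
  calc ∑' n, ‖sv k c g n‖ ^ p.toReal ≤ ∑' n, s n := h1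
    _ = B ^ p.toReal * ∑' n, ‖g n‖ ^ p.toReal := tsum_mul_left

theorem shift_mem (hp : 0 < p.toReal) (k : ℕ) (c : ℕ → ℝ) {B : ℝ} (hB : 0 ≤ B)
    (hc : ∀ n, k ≤ n → |c n| ≤ B) (g : lp (fun _ : ℕ => ℂ) p) :
    Memℓp (sv k c g) p :=
  memℓp_gen (shift_key hp k c hB hc g).1

theorem shift_norm (hp : 0 < p.toReal) (k : ℕ) (c : ℕ → ℝ) {B : ℝ} (hB : 0 ≤ B)
    (hc : ∀ n, k ≤ n → |c n| ≤ B) (g : lp (fun _ : ℕ => ℂ) p)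
    (x : lp (fun _ : ℕ => ℂ) p) (hx : ∀ n, x n = sv k c g n) :
    ‖x‖ ≤ B * ‖g‖ := by
  refine lp.norm_le_of_tsum_le hp (mul_nonneg hB (norm_nonneg _)) ?_
  have key := (shift_key hp k c hB hc g).2
  have hxx : ∑' n, ‖x n‖ ^ p.toReal = ∑' n, ‖sv k c g n‖ ^ p.toReal := by
    congr 1; funext n; rw [hx]
  rw [hxx, Real.mul_rpow hB (norm_nonneg _), ← lp.norm_rpow_eq_tsum hp g] at *
  exact key

/-- the weighted-shift continuous linear operator -/
def shiftCLM (hp : 0 < p.toReal) (k : ℕ) (c : ℕ → ℝ) (B : ℝ) (hB : 0 ≤ B)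
    (hc : ∀ n, k ≤ n → |c n| ≤ B) :
    lp (fun _ : ℕ => ℂ) p →L[ℂ] lp (fun _ : ℕ => ℂ) p :=
  LinearMap.mkContinuous
    { toFun := fun g => ⟨sv k c g, shift_mem hp k c hB hc g⟩
      map_add' := by
        intro g₁ g₂
        apply lp.ext
        funext n
        simp only [sv, lp.coeFn_add, Pi.add_apply]
        by_cases h : n < k
        · simp [h]
        · simp only [if_neg h]
          ring
      map_smul' := by
        intro a g
        apply lp.ext
        funext n
        simp only [sv, lp.coeFn_smul, Pi.smul_apply, RingHom.id_apply, smul_eq_mul]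
        by_cases h : n < k
        · simp [h]
        · simp only [if_neg h]
          ring }
    B (fun g => shift_norm hp k c hB hc g _ (fun n => rfl))

@[simp] theorem shiftCLM_apply (hp : 0 < p.toReal) (k : ℕ) (c : ℕ → ℝ) (B : ℝ) (hB : 0 ≤ B)
    (hc : ∀ n, k ≤ n → |c n| ≤ B) (g : lp (fun _ : ℕ => ℂ) p) (n : ℕ) :
    (shiftCLM hp k c B hB hc g : ℕ → ℂ) n = if n < k then 0 else (c n : ℂ) * g (n - k) := rfl

/-- the convolution-type sequence -/
def cv (w : ℕ → ℕ → ℝ) (u : ℕ → ℂ) (g : lp (fun _ : ℕ => ℂ) p) : ℕ → ℂ :=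
  fun n => ∑ k ∈ Finset.range (n + 1), (w n k : ℂ) * u k * g (n - k)

theorem conv_key (hp : 0 < p.toReal) {q : ℝ} (hpq : p.toReal.HolderConjugate q)
    (w : ℕ → ℕ → ℝ) (hw : ∀ n k, 0 ≤ w n k)
    {C0 : ℝ} (hC0nn : 0 ≤ C0)
    (hC0 : ∀ n, ∑ k ∈ Finset.range (n + 1), (w n k) ^ q ≤ C0)
    (u : ℕ → ℂ) (hu : Summable (fun k => ‖u k‖ ^ p.toReal))
    (g : lp (fun _ : ℕ => ℂ) p) :
    Summable (fun n => ‖cv w u g n‖ ^ p.toReal) ∧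
      ∑' n, ‖cv w u g n‖ ^ p.toReal ≤
        (C0 ^ (1 / q)) ^ p.toReal * ((∑' k, ‖u k‖ ^ p.toReal) * ∑' n, ‖g n‖ ^ p.toReal) := by
  have hg : Summable (fun n => ‖g n‖ ^ p.toReal) := (lp.memℓp g).summable hp
  set pr := p.toReal with hpr
  set a : ℕ → ℝ := fun k => ‖u k‖ ^ pr with ha
  set b : ℕ → ℝ := fun m => ‖g m‖ ^ pr with hb
  have hann : ∀ k, 0 ≤ a k := fun k => Real.rpow_nonneg (norm_nonneg _) _
  have hbnn : ∀ m, 0 ≤ b m := fun m => Real.rpow_nonneg (norm_nonneg _) _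
  set cc : ℕ → ℝ := fun n => ∑ k ∈ Finset.range (n + 1), a k * b (n - k) with hcc
  have hccnn : ∀ n, 0 ≤ cc n :=
    fun n => Finset.sum_nonneg fun k _ => mul_nonneg (hann k) (hbnn _)
  have hpt : ∀ n, ‖cv w u g n‖ ^ pr ≤ (C0 ^ (1 / q)) ^ pr * cc n := by
    intro n
    have h1 : ‖cv w u g n‖ ≤ ∑ k ∈ Finset.range (n + 1), (‖u k‖ * ‖g (n - k)‖) * w n k := by
      refine (norm_sum_le _ _).trans ?_
      refine Finset.sum_le_sum fun k _ => ?_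
      rw [norm_mul, norm_mul, Complex.norm_real, Real.norm_eq_abs, abs_of_nonneg (hw n k)]
      ring_nf
      exact le_of_eq (by ring)
    have h2 : ∑ k ∈ Finset.range (n + 1), (‖u k‖ * ‖g (n - k)‖) * w n k ≤
        (∑ k ∈ Finset.range (n + 1), (‖u k‖ * ‖g (n - k)‖) ^ pr) ^ (1 / pr) *
          (∑ k ∈ Finset.range (n + 1), (w n k) ^ q) ^ (1 / q) := by
      exact Real.inner_le_Lp_mul_Lq_of_nonneg (s := Finset.range (n + 1)) hpq
        (fun k _ => mul_nonneg (norm_nonneg _) (norm_nonneg _)) (fun k _ => hw n k)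
    have h3 : ∑ k ∈ Finset.range (n + 1), (‖u k‖ * ‖g (n - k)‖) ^ pr = cc n := by
      refine Finset.sum_congr rfl fun k _ => ?_
      rw [Real.mul_rpow (norm_nonneg _) (norm_nonneg _)]
    have h4 : (∑ k ∈ Finset.range (n + 1), (w n k) ^ q) ^ (1 / q) ≤ C0 ^ (1 / q) := by
      refine Real.rpow_le_rpow ?_ (hC0 n) (one_div_nonneg.2 hpq.symm.pos.le)
      exact Finset.sum_nonneg fun k _ => Real.rpow_nonneg (hw n k) _
    have h5 : ‖cv w u g n‖ ≤ (cc n) ^ (1 / pr) * C0 ^ (1 / q) := by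
      refine h1.trans (h2.trans ?_)
      rw [h3]
      exact mul_le_mul_of_nonneg_left h4 (Real.rpow_nonneg (hccnn n) _)
    calc ‖cv w u g n‖ ^ pr ≤ ((cc n) ^ (1 / pr) * C0 ^ (1 / q)) ^ pr :=
          Real.rpow_le_rpow (norm_nonneg _) h5 hp.le
      _ = (cc n) ^ ((1 / pr) * pr) * (C0 ^ (1 / q)) ^ pr := by
          rw [Real.mul_rpow (Real.rpow_nonneg (hccnn n) _) (Real.rpow_nonneg hC0nn _),
            ← Real.rpow_mul (hccnn n)]
      _ = (C0 ^ (1 / q)) ^ pr * cc n := by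
          rw [one_div, inv_mul_cancel₀ hp.ne', Real.rpow_one]; ring
  have hanorm : Summable (fun k => ‖a k‖) := by
    simpa only [Real.norm_eq_abs, abs_of_nonneg (hann _)] using hu
  have hbnorm : Summable (fun m => ‖b m‖) := by
    simpa only [Real.norm_eq_abs, abs_of_nonneg (hbnn _)] using hg
  have hccsum : Summable cc := by
    have := summable_norm_sum_mul_range_of_summable_norm hanorm hbnorm
    exact this.of_norm
  have hcctsum : ∑' n, cc n = (∑' k, a k) * ∑' m, b m :=
    (tsum_mul_tsum_eq_tsum_sum_range_of_summable_norm hanorm hbnorm).symm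
  have hnn : ∀ n, 0 ≤ ‖cv w u g n‖ ^ pr := fun n => Real.rpow_nonneg (norm_nonneg _) _
  have hsum : Summable (fun n => ‖cv w u g n‖ ^ pr) :=
    Summable.of_nonneg_of_le hnn hpt (hccsum.mul_left _)
  refine ⟨hsum, ?_⟩
  calc ∑' n, ‖cv w u g n‖ ^ pr ≤ ∑' n, (C0 ^ (1 / q)) ^ pr * cc n :=
        Summable.tsum_le_tsum hpt hsum (hccsum.mul_left _)
    _ = (C0 ^ (1 / q)) ^ pr * ∑' n, cc n := tsum_mul_left
    _ = (C0 ^ (1 / q)) ^ pr * ((∑' k, a k) * ∑' m, b m) := by rw [hcctsum]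

theorem conv_norm (hp : 0 < p.toReal) {q : ℝ} (hpq : p.toReal.HolderConjugate q)
    (w : ℕ → ℕ → ℝ) (hw : ∀ n k, 0 ≤ w n k)
    {C0 : ℝ} (hC0nn : 0 ≤ C0)
    (hC0 : ∀ n, ∑ k ∈ Finset.range (n + 1), (w n k) ^ q ≤ C0)
    (u : ℕ → ℂ) (hu : Summable (fun k => ‖u k‖ ^ p.toReal))
    {U : ℝ} (hUnn : 0 ≤ U) (hU : ∑' k, ‖u k‖ ^ p.toReal ≤ U ^ p.toReal)
    (g : lp (fun _ : ℕ => ℂ) p)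
    (x : lp (fun _ : ℕ => ℂ) p) (hx : ∀ n, x n = cv w u g n) :
    ‖x‖ ≤ C0 ^ (1 / q) * U * ‖g‖ := by
  have hCq : 0 ≤ C0 ^ (1 / q) := Real.rpow_nonneg hC0nn _
  refine lp.norm_le_of_tsum_le hp (by positivity) ?_
  have key := (conv_key hp hpq w hw hC0nn hC0 u hu g).2
  have hx' : ∑' n, ‖x n‖ ^ p.toReal = ∑' n, ‖cv w u g n‖ ^ p.toReal := by
    congr 1; funext n; rw [hx]
  rw [hx']
  refine key.trans ?_
  rw [Real.mul_rpow (mul_nonneg hCq hUnn) (norm_nonneg _),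
    Real.mul_rpow hCq hUnn, ← lp.norm_rpow_eq_tsum hp g, mul_assoc]
  refine mul_le_mul_of_nonneg_left ?_ (Real.rpow_nonneg hCq _)
  refine mul_le_mul_of_nonneg_right hU ?_ |>.trans ?_
  · exact Real.rpow_nonneg (norm_nonneg _) _
  · exact le_refl _

/-- A continuous linear operator whose range lies in a finite dimensional submodule is compact. -/
theorem compact_of_fd {X : Type*} [NormedAddCommGroup X] [NormedSpace ℂ X]
    (S : X →L[ℂ] X) (V : Submodule ℂ X) [FiniteDimensional ℂ V]
    (h : ∀ x, S x ∈ V) : IsCompactOperator ⇑S := by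
  set K : Set X := Subtype.val '' (Metric.closedBall (0 : V) ‖S‖) with hK
  have hKc : IsCompact K := by
    have : IsCompact (Metric.closedBall (0 : V) ‖S‖) := isCompact_closedBall _ _
    exact this.image continuous_subtype_val
  refine ⟨K, hKc, ?_⟩
  have hsub : Metric.closedBall (0 : X) 1 ⊆ ⇑S ⁻¹' K := by
    intro x hx
    simp only [Metric.mem_closedBall, dist_zero_right] at hx
    refine ⟨⟨S x, h x⟩, ?_, rfl⟩
    simp only [Metric.mem_closedBall, dist_zero_right]
    calc ‖(⟨S x, h x⟩ : V)‖ = ‖S x‖ := rfl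
      _ ≤ ‖S‖ * ‖x‖ := S.le_opNorm x
      _ ≤ ‖S‖ * 1 := mul_le_mul_of_nonneg_left hx (norm_nonneg S)
      _ = ‖S‖ := mul_one _
  exact Filter.mem_of_superset (Metric.closedBall_mem_nhds 0 one_pos) hsub

end Stmt5Aux


set_option maxHeartbeats 2000000 in
set_option synthInstance.maxHeartbeats 400000 in
theorem stmt5' (β δ : ℕ → ℝ) (hβ : ∀ n, 0 < β n) (hδ : ∀ n, 0 < δ n)
    (hβ0 : β 0 = 1) (hδ0 : δ 0 = 1)
    (p : ℝ≥0∞) [Fact (1 ≤ p)] (hp1 : 1 < p) (hp : p ≠ ∞)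
    (q : ℝ) (hpq : 1 / p.toReal + 1 / q = 1)
    (hC : BddAbove (Set.range fun n : ℕ =>
      ∑ k ∈ Finset.range (n + 1),
        (δ n * β n / (δ k * δ (n - k) * β k * β (n - k))) ^ q))
    (hbfin : ∀ M k : ℕ, BddAbove (Set.range fun n : ℕ =>
      δ (M + 1 + n + k) * β (M + 1 + n + k) /
        (δ (M + 1 + n) * δ k * β (M + 1 + n) * β k)))
    (hbto : Tendsto (fun M : ℕ => ∑ k ∈ Finset.Icc 1 M, bconst β δ M k) atTop (𝓝 0))
    (f : ℕ → ℂ) (hf : Memℓp (fun n => (β n : ℂ) * f n) p) (hf0 : f 0 = 0)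
    (lam : ℂ) (hlam : lam ≠ 0)
    (T : lp (fun _ : ℕ => ℂ) p →L[ℂ] lp (fun _ : ℕ => ℂ) p)
    (hT : ∀ g : lp (fun _ : ℕ => ℂ) p, ∀ n : ℕ,
      T g n = (β n : ℂ) * dprod δ f (fun m => g m / (β m : ℂ)) n) :
    IsClosed (Set.range fun g : lp (fun _ : ℕ => ℂ) p => lam • g - T g) := by
  classical
  have hp0 : p ≠ 0 := (lt_trans zero_lt_one hp1).ne'
  have hpr : 0 < p.toReal := ENNReal.toReal_pos hp0 hp
  have hpr1 : 1 < p.toReal := by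
    rw [← ENNReal.toReal_one]
    exact (ENNReal.toReal_lt_toReal ENNReal.one_ne_top hp).2 hp1
  have hconj : p.toReal.HolderConjugate q := Real.holderConjugate_iff.mpr ⟨hpr1, by rw [← one_div, ← one_div]; exact hpq⟩
  have hq0 : 0 < q := hconj.symm.pos
  set pr := p.toReal with hprdef
  -- the weight matrix
  set w : ℕ → ℕ → ℝ := fun n k => δ n * β n / (δ k * δ (n - k) * β k * β (n - k)) with hwdef
  have hwpos : ∀ n k, 0 < w n k := by
    intro n k
    have h1 : 0 < δ n * β n := mul_pos (hδ n) (hβ n)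
    have h2 : 0 < δ k * δ (n - k) * β k * β (n - k) :=
      mul_pos (mul_pos (mul_pos (hδ k) (hδ (n - k))) (hβ k)) (hβ (n - k))
    exact div_pos h1 h2
  -- the constant C₀
  obtain ⟨C1, hC1⟩ := hC
  set C0 : ℝ := max C1 1 with hC0def
  have hC0 : ∀ n, ∑ k ∈ Finset.range (n + 1), (w n k) ^ q ≤ C0 := by
    intro n
    exact le_trans (hC1 ⟨n, rfl⟩) (le_max_left _ _)
  have hC0nn : (0 : ℝ) ≤ C0 := le_trans zero_le_one (le_max_right _ _)
  set C : ℝ := C0 ^ (1 / q) with hCdef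
  have hCnn : 0 ≤ C := Real.rpow_nonneg hC0nn _
  have hwle : ∀ n k, k ≤ n → w n k ≤ C := by
    intro n k hk
    have h1 : (w n k) ^ q ≤ C0 := by
      refine le_trans ?_ (hC0 n)
      refine Finset.single_le_sum (f := fun k => (w n k) ^ q) ?_ ?_
      · exact fun i _ => Real.rpow_nonneg (hwpos n i).le _
      · exact Finset.mem_range.2 (by omega)
    calc w n k = ((w n k) ^ q) ^ (1 / q) := by
          rw [← Real.rpow_mul (hwpos n k).le, mul_one_div, div_self hq0.ne', Real.rpow_one]
      _ ≤ C0 ^ (1 / q) := Real.rpow_le_rpow (Real.rpow_nonneg (hwpos n k).le _) h1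
          (one_div_nonneg.2 hq0.le)
  have hwabs : ∀ k n, k ≤ n → |w n k| ≤ C := by
    intro k n h
    rw [abs_of_pos (hwpos n k)]
    exact hwle n k h
  -- the symbol sequence
  set u : ℕ → ℂ := fun k => (β k : ℂ) * f k with hudef
  set Uelt : lp (fun _ : ℕ => ℂ) p := ⟨u, hf⟩ with hUdef
  have hu0 : u 0 = 0 := by simp [hudef, hf0]
  have husum : Summable (fun k => ‖u k‖ ^ pr) := hf.summable hpr
  have huk : ∀ k, ‖u k‖ ≤ ‖Uelt‖ := fun k => lp.norm_apply_le_norm hp0 Uelt k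
  -- bconst facts
  have hbnn : ∀ M k, 0 ≤ bconst β δ M k := by
    intro M k
    have h0 : (0:ℝ) ≤ δ (M + 1 + 0 + k) * β (M + 1 + 0 + k) /
        (δ (M + 1 + 0) * δ k * β (M + 1 + 0) * β k) :=
      (div_pos (mul_pos (hδ _) (hβ _))
        (mul_pos (mul_pos (mul_pos (hδ _) (hδ k)) (hβ _)) (hβ k))).le
    exact h0.trans (le_ciSup (hbfin M k) 0)
  have hwb : ∀ M k n, 1 ≤ k → k ≤ M → 2 * M + 1 ≤ n → w n k ≤ bconst β δ M k := by
    intro M k n h1 h2 h3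
    have hm2 : M + 1 + (n - k - (M + 1)) + k = n := by omega
    have hm : M + 1 + (n - k - (M + 1)) = n - k := by omega
    have hle := le_ciSup (hbfin M k) (n - k - (M + 1))
    rw [hm2, hm] at hle
    refine le_trans (le_of_eq ?_) hle
    show δ n * β n / (δ k * δ (n - k) * β k * β (n - k)) = _
    rw [show δ k * δ (n - k) * β k * β (n - k) = δ (n - k) * δ k * β (n - k) * β k by ring]
  -- coordinate formula for T
  have hTc : ∀ g : lp (fun _ : ℕ => ℂ) p, ∀ n,
      T g n = ∑ k ∈ Finset.range (n + 1), ((w n k : ℝ) : ℂ) * u k * g (n - k) := by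
    intro g n
    rw [hT g n, dprod, Finset.mul_sum]
    refine Finset.sum_congr rfl fun k hk => ?_
    have hβk : ((β k : ℝ) : ℂ) ≠ 0 := Complex.ofReal_ne_zero.2 (hβ k).ne'
    have hβnk : ((β (n - k) : ℝ) : ℂ) ≠ 0 := Complex.ofReal_ne_zero.2 (hβ (n - k)).ne'
    have hδk : ((δ k : ℝ) : ℂ) ≠ 0 := Complex.ofReal_ne_zero.2 (hδ k).ne'
    have hδnk : ((δ (n - k) : ℝ) : ℂ) ≠ 0 := Complex.ofReal_ne_zero.2 (hδ (n - k)).ne'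
    simp only [hwdef]
    push_cast
    field_simp
    ring
  -- the operator lam • I - T
  set D : lp (fun _ : ℕ => ℂ) p →L[ℂ] lp (fun _ : ℕ => ℂ) p :=
    lam • ContinuousLinearMap.id ℂ (lp (fun _ : ℕ => ℂ) p) - T with hDdef
  have hDapp : ∀ g : lp (fun _ : ℕ => ℂ) p, D g = lam • g - T g := by
    intro g
    simp [hDdef]
  -- injectivity of D
  have hinj : ∀ g : lp (fun _ : ℕ => ℂ) p, D g = 0 → g = 0 := by
    intro g hg
    have hcoord : ∀ n, lam * g n = T g n := by
      intro n
      have h0 : (D g : ℕ → ℂ) n = 0 := by rw [hg]; simp [lp.coeFn_zero]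
      have h2 : (D g : ℕ → ℂ) n = lam * g n - T g n := by
        rw [hDapp, lp.coeFn_sub, Pi.sub_apply, lp.coeFn_smul, Pi.smul_apply, smul_eq_mul]
      rw [h2] at h0
      linear_combination h0
    have hzero : ∀ n, g n = 0 := by
      intro n
      induction n using Nat.strong_induction_on with
      | _ n ih =>
        have h1 := hcoord n
        rw [hTc g n] at h1
        have h2 : ∑ k ∈ Finset.range (n + 1), ((w n k : ℝ) : ℂ) * u k * g (n - k) = 0 := by
          refine Finset.sum_eq_zero fun k hk => ?_
          rcases Nat.eq_zero_or_pos k with rfl | hkpos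
          · rw [hu0]; ring
          · have hkn : k ≤ n := by
              have := Finset.mem_range.1 hk; omega
            have : n - k < n := by omega
            rw [ih (n - k) this]; ring
        rw [h2] at h1
        exact (mul_eq_zero.1 h1).resolve_left hlam
    exact lp.ext (funext hzero)
  -- the operators
  set W : ℕ → (lp (fun _ : ℕ => ℂ) p →L[ℂ] lp (fun _ : ℕ => ℂ) p) := fun k =>
    Stmt5Aux.shiftCLM hpr k (fun n => w n k) C hCnn (fun n hn => hwabs k n hn) with hWdef
  set P : ℕ → (lp (fun _ : ℕ => ℂ) p →L[ℂ] lp (fun _ : ℕ => ℂ) p) := fun N =>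
    Stmt5Aux.shiftCLM hpr 0 (fun n => if n ≤ N then 1 else 0) 1 zero_le_one
      (fun n _ => by show |(if n ≤ N then (1:ℝ) else 0)| ≤ 1; split <;> simp) with hPdef
  set Sraw : ℕ → (lp (fun _ : ℕ => ℂ) p →L[ℂ] lp (fun _ : ℕ => ℂ) p) := fun M =>
    ∑ k ∈ Finset.Icc 1 M, u k • W k with hSrawdef
  set S : ℕ → (lp (fun _ : ℕ => ℂ) p →L[ℂ] lp (fun _ : ℕ => ℂ) p) := fun M =>
    (P (2 * M)).comp (Sraw M) with hSdef
  -- coordinates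
  have hWapp : ∀ k (g : lp (fun _ : ℕ => ℂ) p) n,
      (W k g : ℕ → ℂ) n = if n < k then 0 else ((w n k : ℝ) : ℂ) * g (n - k) := by
    intro k g n; rfl
  have hPapp : ∀ N (x : lp (fun _ : ℕ => ℂ) p) n,
      (P N x : ℕ → ℂ) n = if n ≤ N then x n else 0 := by
    intro N x n
    show (if n < 0 then 0 else (((if n ≤ N then (1:ℝ) else 0) : ℝ) : ℂ) * x (n - 0)) = _
    rw [if_neg (Nat.not_lt_zero n)]
    by_cases h : n ≤ N
    · simp [h]
    · simp [h]
  have hlpsum : ∀ (s : Finset ℕ) (x : ℕ → lp (fun _ : ℕ => ℂ) p) (n : ℕ),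
      ((∑ k ∈ s, x k : lp (fun _ : ℕ => ℂ) p) : ℕ → ℂ) n = ∑ k ∈ s, (x k : ℕ → ℂ) n := by
    intro s x n
    induction s using Finset.cons_induction with
    | empty => simp
    | cons a s ha ih =>
      rw [Finset.sum_cons, Finset.sum_cons, lp.coeFn_add, Pi.add_apply, ih]
  have hSrawc : ∀ M (g : lp (fun _ : ℕ => ℂ) p) n,
      (Sraw M g : ℕ → ℂ) n
        = ∑ k ∈ Finset.Icc 1 M, u k * (if n < k then 0 else ((w n k : ℝ) : ℂ) * g (n - k)) := by
    intro M g n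
    rw [hSrawdef]
    dsimp only
    rw [ContinuousLinearMap.sum_apply, hlpsum]
    refine Finset.sum_congr rfl fun k hk => ?_
    rw [ContinuousLinearMap.smul_apply, lp.coeFn_smul, Pi.smul_apply, smul_eq_mul, hWapp]
  -- tail of the symbol
  set tail : ℕ → ℝ := fun M => ∑' k, ‖u (k + (M + 1))‖ ^ pr with htaildef
  have htailnn : ∀ M, 0 ≤ tail M := fun M =>
    tsum_nonneg fun k => Real.rpow_nonneg (norm_nonneg _) _
  set eps : ℕ → ℝ := fun M =>
    C * (tail M) ^ (1 / pr) + (∑ k ∈ Finset.Icc 1 M, bconst β δ M k) * ‖Uelt‖ with hepsdef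
  -- the key operator-norm estimate
  have hSest : ∀ M, ‖T - S M‖ ≤ eps M := by
    intro M
    have hepsnn : 0 ≤ eps M := by
      refine add_nonneg (mul_nonneg hCnn (Real.rpow_nonneg (htailnn M) _)) ?_
      exact mul_nonneg (Finset.sum_nonneg fun k _ => hbnn M k) (norm_nonneg _)
    refine ContinuousLinearMap.opNorm_le_bound _ hepsnn ?_
    intro g
    set N := 2 * M with hN
    -- the truncated symbol complement
    set u' : ℕ → ℂ := fun k => if k ∈ Finset.Icc 1 M then 0 else u k with hu'def
    -- part 1 : T g - Sraw M g
    have hx1c : ∀ n, ((T g - Sraw M g : lp (fun _ : ℕ => ℂ) p) : ℕ → ℂ) n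
        = Stmt5Aux.cv w u' g n := by
      intro n
      rw [lp.coeFn_sub, Pi.sub_apply, hTc g n, hSrawc M g n]
      have e1 : ∑ k ∈ Finset.Icc 1 M, u k * (if n < k then 0 else ((w n k : ℝ) : ℂ) * g (n - k))
          = ∑ k ∈ Finset.Icc 1 M,
              (if k ∈ Finset.range (n + 1) then ((w n k : ℝ) : ℂ) * u k * g (n - k) else 0) := by
        refine Finset.sum_congr rfl fun k hk => ?_
        by_cases h : n < k
        · rw [if_pos h, if_neg (by simp [Finset.mem_range]; omega), mul_zero]
        · rw [if_neg h, if_pos (by simp [Finset.mem_range]; omega)]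
          ring
      rw [e1, Finset.sum_ite_mem, Finset.inter_comm, ← Finset.sum_ite_mem,
        ← Finset.sum_sub_distrib, Stmt5Aux.cv]
      refine Finset.sum_congr rfl fun k hk => ?_
      by_cases h : k ∈ Finset.Icc 1 M
      · simp only [hu'def, if_pos h]
        ring
      · simp only [hu'def, if_neg h]
        ring
    have hu'le : ∀ k, ‖u' k‖ ^ pr ≤ ‖u k‖ ^ pr := by
      intro k
      simp only [hu'def]
      split
      · rw [norm_zero, Real.zero_rpow hpr.ne']
        exact Real.rpow_nonneg (norm_nonneg _) _
      · exact le_refl _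
    have hu'sum : Summable (fun k => ‖u' k‖ ^ pr) :=
      Summable.of_nonneg_of_le (fun k => Real.rpow_nonneg (norm_nonneg _) _) hu'le husum
    have hu'tsum : ∑' k, ‖u' k‖ ^ pr = tail M := by
      rw [← Summable.sum_add_tsum_nat_add (M + 1) hu'sum]
      have hzero : ∑ i ∈ Finset.range (M + 1), ‖u' i‖ ^ pr = 0 := by
        refine Finset.sum_eq_zero fun i hi => ?_
        have hiM : i ≤ M := by have := Finset.mem_range.1 hi; omega
        have hzi : u' i = 0 := by
          simp only [hu'def]
          rcases Nat.eq_zero_or_pos i with rfl | hipos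
          · rw [if_neg (by simp), hu0]
          · rw [if_pos (Finset.mem_Icc.2 ⟨hipos, hiM⟩)]
        rw [hzi, norm_zero, Real.zero_rpow hpr.ne']
      rw [hzero, zero_add, htaildef]
      refine tsum_congr fun j => ?_
      congr 2
      simp only [hu'def]
      rw [if_neg (by simp [Finset.mem_Icc]; omega)]
    have hUb : ∑' k, ‖u' k‖ ^ pr ≤ ((tail M) ^ (1 / pr)) ^ pr := by
      rw [hu'tsum, ← Real.rpow_mul (htailnn M), one_div, inv_mul_cancel₀ hpr.ne',
        Real.rpow_one]
    have hx1norm : ‖T g - Sraw M g‖ ≤ C * (tail M) ^ (1 / pr) * ‖g‖ := by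
      refine Stmt5Aux.conv_norm hpr hconj w (fun n k => (hwpos n k).le) hC0nn hC0 u' hu'sum
        (Real.rpow_nonneg (htailnn M) _) hUb g _ hx1c
    -- part 2 : Sraw M g - P N (Sraw M g)
    have hyk : ∀ k, 1 ≤ k → k ≤ M →
        ‖W k g - P N (W k g)‖ ≤ bconst β δ M k * ‖g‖ := by
      intro k h1 h2
      set c' : ℕ → ℝ := fun n => if n ≤ N then 0 else w n k with hc'def
      have hc' : ∀ n, k ≤ n → |c' n| ≤ bconst β δ M k := by
        intro n hn
        simp only [hc'def]
        split
        · rw [abs_zero]; exact hbnn M k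
        · rename_i hnN
          rw [abs_of_pos (hwpos n k)]
          exact hwb M k n h1 h2 (by omega)
      refine Stmt5Aux.shift_norm hpr k c' (hbnn M k) hc' g _ ?_
      intro n
      rw [lp.coeFn_sub, Pi.sub_apply, hPapp, hWapp, Stmt5Aux.sv]
      by_cases ha : n < k
      · have hb' : n ≤ N := by omega
        simp [ha, hb']
      · by_cases hb' : n ≤ N
        · simp only [hc'def, if_neg ha, if_pos hb', hWapp]
          simp [ha]
        · simp only [hc'def, if_neg ha, if_neg hb']
          simp
    have hx2eq : Sraw M g - P N (Sraw M g)
        = ∑ k ∈ Finset.Icc 1 M, u k • (W k g - P N (W k g)) := by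
      have h1 : Sraw M g = ∑ k ∈ Finset.Icc 1 M, u k • W k g := by
        rw [hSrawdef]
        dsimp only
        rw [ContinuousLinearMap.sum_apply]
        exact Finset.sum_congr rfl fun k _ => rfl
      rw [h1, map_sum]
      rw [← Finset.sum_sub_distrib]
      refine Finset.sum_congr rfl fun k hk => ?_
      rw [map_smul, smul_sub]
    have hx2norm : ‖Sraw M g - P N (Sraw M g)‖
        ≤ (∑ k ∈ Finset.Icc 1 M, bconst β δ M k) * ‖Uelt‖ * ‖g‖ := by
      rw [hx2eq]
      refine le_trans (norm_sum_le _ _) ?_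
      have hterm : ∀ k ∈ Finset.Icc 1 M,
          ‖u k • (W k g - P N (W k g))‖ ≤ bconst β δ M k * (‖Uelt‖ * ‖g‖) := by
        intro k hk
        obtain ⟨h1, h2⟩ := Finset.mem_Icc.1 hk
        rw [norm_smul]
        calc ‖u k‖ * ‖W k g - P N (W k g)‖
            ≤ ‖Uelt‖ * (bconst β δ M k * ‖g‖) :=
              mul_le_mul (huk k) (hyk k h1 h2) (norm_nonneg _) (norm_nonneg _)
          _ = bconst β δ M k * (‖Uelt‖ * ‖g‖) := by ring
      refine le_trans (Finset.sum_le_sum hterm) ?_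
      rw [← Finset.sum_mul]
      rw [mul_assoc]
    -- combine
    have hsplit : (T - S M) g = (T g - Sraw M g) + (Sraw M g - P N (Sraw M g)) := by
      rw [ContinuousLinearMap.sub_apply, sub_add_sub_cancel]
      rfl
    calc ‖(T - S M) g‖ = ‖(T g - Sraw M g) + (Sraw M g - P N (Sraw M g))‖ := by rw [hsplit]
      _ ≤ ‖T g - Sraw M g‖ + ‖Sraw M g - P N (Sraw M g)‖ := norm_add_le _ _
      _ ≤ C * (tail M) ^ (1 / pr) * ‖g‖
            + (∑ k ∈ Finset.Icc 1 M, bconst β δ M k) * ‖Uelt‖ * ‖g‖ :=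
          add_le_add hx1norm hx2norm
      _ = eps M * ‖g‖ := by rw [hepsdef]; ring
  -- eps tends to zero
  have htailto : Tendsto tail atTop (𝓝 0) := by
    have h := tendsto_sum_nat_add (f := fun k => ‖u k‖ ^ pr)
    exact h.comp (tendsto_add_atTop_nat 1)
  have htailpow : Tendsto (fun M => (tail M) ^ (1 / pr)) atTop (𝓝 0) := by
    have h := htailto.rpow_const (p := 1 / pr) (Or.inr (by positivity))
    rwa [Real.zero_rpow (by positivity : (0:ℝ) < 1 / pr).ne'] at h
  have heps0 : Tendsto eps atTop (𝓝 0) := by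
    have h := (htailpow.const_mul C).add (hbto.mul_const ‖Uelt‖)
    rw [hepsdef]
    simpa [one_div] using h
  -- S tends to T in operator norm
  have hST : Tendsto S atTop (𝓝 T) := by
    have h : Tendsto (fun M => S M - T) atTop (𝓝 0) := by
      refine squeeze_zero_norm (fun M => ?_) heps0
      rw [norm_sub_rev]; exact hSest M
    have h2 := h.add_const T
    rw [zero_add] at h2
    refine h2.congr fun M => ?_
    abel
  -- each S M is compact
  have hScpt : ∀ M, IsCompactOperator ⇑(S M) := by
    intro M
    set N := 2 * M with hN
    set V : Submodule ℂ (lp (fun _ : ℕ => ℂ) p) :=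
      Submodule.span ℂ (Set.range fun i : Fin (N + 1) =>
        (lp.single p (i : ℕ) (1 : ℂ) : lp (fun _ : ℕ => ℂ) p)) with hV
    haveI : FiniteDimensional ℂ V := FiniteDimensional.span_of_finite ℂ (Set.finite_range _)
    refine Stmt5Aux.compact_of_fd (S M) V ?_
    intro g
    have hvanish : ∀ n, N < n → (S M g : ℕ → ℂ) n = 0 := by
      intro n hn
      have : S M g = P N (Sraw M g) := rfl
      rw [this, hPapp, if_neg (by omega)]
    have hexp : S M g = ∑ i ∈ Finset.range (N + 1),
        (S M g : ℕ → ℂ) i • (lp.single p i (1 : ℂ) : lp (fun _ : ℕ => ℂ) p) := by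
      apply lp.ext
      funext n
      rw [hlpsum]
      have hterm : ∀ i, (((S M g : ℕ → ℂ) i • (lp.single p i (1 : ℂ) : lp (fun _ : ℕ => ℂ) p)
            : lp (fun _ : ℕ => ℂ) p) : ℕ → ℂ) n
          = (S M g : ℕ → ℂ) i * (if n = i then 1 else 0) := by
        intro i
        rw [lp.coeFn_smul, Pi.smul_apply, smul_eq_mul]
        congr 1
        by_cases h : n = i
        · subst h; rw [if_pos rfl, lp.single_apply_self]
        · rw [if_neg h, lp.single_apply_ne p i _ h]
      by_cases hn : n ≤ N
      · rw [Finset.sum_congr rfl fun i _ => hterm i,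
          Finset.sum_eq_single n (fun i _ hi => by rw [if_neg (Ne.symm hi), mul_zero])
            (fun h => absurd (Finset.mem_range.2 (by omega)) h)]
        rw [if_pos rfl, mul_one]
      · rw [Finset.sum_congr rfl fun i _ => hterm i, Finset.sum_eq_zero, hvanish n (by omega)]
        intro i hi
        have : n ≠ i := by have := Finset.mem_range.1 hi; omega
        rw [if_neg this, mul_zero]
    rw [hexp]
    refine Submodule.sum_mem _ fun i hi => Submodule.smul_mem _ _ (Submodule.subset_span ?_)
    exact ⟨⟨i, Finset.mem_range.1 hi⟩, rfl⟩
  -- T is compact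
  have hTcpt : IsCompactOperator ⇑T :=
    isCompactOperator_of_tendsto hST (Eventually.of_forall hScpt)
  -- D is bounded below
  have hbb : ∃ c : ℝ, 0 < c ∧ ∀ g : lp (fun _ : ℕ => ℂ) p, c * ‖g‖ ≤ ‖D g‖ := by
    by_contra hcon
    push_neg at hcon
    have hseq : ∀ m : ℕ, ∃ g : lp (fun _ : ℕ => ℂ) p,
        ‖g‖ = 1 ∧ ‖D g‖ < 1 / ((m : ℝ) + 1) := by
      intro m
      obtain ⟨g, hg⟩ := hcon (1 / ((m : ℝ) + 1)) (by positivity)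
      have hgne : g ≠ 0 := by
        intro h
        rw [h] at hg
        simp only [map_zero, norm_zero, mul_zero] at hg
        exact absurd hg (lt_irrefl 0)
      have hgpos : 0 < ‖g‖ := norm_pos_iff.2 hgne
      refine ⟨((‖g‖ : ℂ))⁻¹ • g, ?_, ?_⟩
      · rw [norm_smul, norm_inv, Complex.norm_real, Real.norm_eq_abs, abs_of_pos hgpos,
          inv_mul_cancel₀ hgpos.ne']
      · rw [map_smul, norm_smul, norm_inv, Complex.norm_real, Real.norm_eq_abs,
          abs_of_pos hgpos]
        calc ‖g‖⁻¹ * ‖D g‖ < ‖g‖⁻¹ * (1 / ((m : ℝ) + 1) * ‖g‖) :=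
              mul_lt_mul_of_pos_left hg (inv_pos.2 hgpos)
          _ = 1 / ((m : ℝ) + 1) := by field_simp
    choose gs hgs1 hgs2 using hseq
    obtain ⟨K, hKcpt, hKnhds⟩ := hTcpt
    obtain ⟨r, hr, hball⟩ := Metric.mem_nhds_iff.1 hKnhds
    have hrne : ((r / 2 : ℝ) : ℂ) ≠ 0 := by
      simp only [ne_eq, Complex.ofReal_eq_zero]
      positivity
    have hmem : ∀ m, T (((r / 2 : ℝ) : ℂ) • gs m) ∈ K := by
      intro m
      apply hball
      rw [mem_ball_zero_iff, norm_smul, Complex.norm_real, Real.norm_eq_abs,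
        abs_of_pos (by positivity : (0:ℝ) < r / 2), hgs1 m, mul_one]
      linarith
    obtain ⟨y, hyK, φ, hφmono, hφconv⟩ := hKcpt.tendsto_subseq hmem
    set y' : lp (fun _ : ℕ => ℂ) p := (((r / 2 : ℝ) : ℂ))⁻¹ • y with hy'def
    have hTconv : Tendsto (fun m => T (gs (φ m))) atTop (𝓝 y') := by
      have h1 := hφconv.const_smul ((((r / 2 : ℝ) : ℂ))⁻¹)
      refine h1.congr fun m => ?_
      simp only [Function.comp_apply]
      rw [map_smul, smul_smul, inv_mul_cancel₀ hrne, one_smul]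
    have hDconv : Tendsto (fun m => D (gs (φ m))) atTop (𝓝 0) := by
      refine squeeze_zero_norm (fun m => ?_) tendsto_one_div_add_atTop_nhds_zero_nat
      have h1 : ‖D (gs (φ m))‖ < 1 / ((φ m : ℝ) + 1) := hgs2 (φ m)
      have h2 : (m : ℝ) ≤ (φ m : ℝ) := by exact_mod_cast hφmono.le_apply
      refine h1.le.trans ?_
      apply one_div_le_one_div_of_le <;> linarith
    have hgconv : Tendsto (fun m => gs (φ m)) atTop (𝓝 (lam⁻¹ • (0 + y'))) := by
      have h1 := (hDconv.add hTconv).const_smul lam⁻¹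
      refine h1.congr fun m => ?_
      rw [hDapp, sub_add_cancel, smul_smul, inv_mul_cancel₀ hlam, one_smul]
    set z : lp (fun _ : ℕ => ℂ) p := lam⁻¹ • (0 + y') with hzdef
    have hDz : D z = 0 := by
      have h1 : Tendsto (fun m => D (gs (φ m))) atTop (𝓝 (D z)) :=
        (D.continuous.tendsto z).comp hgconv
      exact tendsto_nhds_unique h1 hDconv
    have hz0 : z = 0 := hinj z hDz
    have hnorm1 : Tendsto (fun m => ‖gs (φ m)‖) atTop (𝓝 ‖z‖) := hgconv.norm
    have hnorm2 : Tendsto (fun m => ‖gs (φ m)‖) atTop (𝓝 1) := by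
      refine tendsto_const_nhds.congr fun m => ?_
      rw [hgs1 (φ m)]
    have : ‖z‖ = 1 := tendsto_nhds_unique hnorm1 hnorm2
    rw [hz0, norm_zero] at this
    exact zero_ne_one this
  -- conclude
  obtain ⟨c, hc, hcb⟩ := hbb
  have hfun : (fun g : lp (fun _ : ℕ => ℂ) p => lam • g - T g) = ⇑D := by
    funext g
    rw [hDapp]
  rw [hfun]
  have hanti : AntilipschitzWith (⟨c, hc.le⟩ : NNReal)⁻¹ ⇑D := by
    refine D.antilipschitz_of_bound fun x => ?_
    have h1 := hcb x
    show ‖x‖ ≤ c⁻¹ * ‖D x‖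
    calc ‖x‖ = c⁻¹ * (c * ‖x‖) := by field_simp
      _ ≤ c⁻¹ * ‖D x‖ := mul_le_mul_of_nonneg_left h1 (inv_nonneg.2 hc.le)
  exact hanti.isClosed_range D.uniformContinuous




/-- Lemma 2.2, closed range: under the identification `f ↦ (β(n)f(n))ₙ` of
`ℓ^p(β)` (`1 < p < ∞`) with the standard `lp` space, assume `C₀ < ∞` and
`∑_{k=1}^M b_{M,k} → 0` as `M → ∞`. If `f ∈ ℓ^p(β)` with `f(0) = 0`, `λ ≠ 0`, and `T`
is the (bounded) operator corresponding to `M_{⋄,f}`, then `λI − T` has closed range. -/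
theorem stmt5 (β δ : ℕ → ℝ) (hβ : ∀ n, 0 < β n) (hδ : ∀ n, 0 < δ n)
    (hβ0 : β 0 = 1) (hδ0 : δ 0 = 1)
    (p : ℝ≥0∞) [Fact (1 ≤ p)] (hp1 : 1 < p) (hp : p ≠ ∞)
    (q : ℝ) (hpq : 1 / p.toReal + 1 / q = 1)
    (hC : BddAbove (Set.range fun n : ℕ =>
      ∑ k ∈ Finset.range (n + 1),
        (δ n * β n / (δ k * δ (n - k) * β k * β (n - k))) ^ q))
    (hbfin : ∀ M k : ℕ, BddAbove (Set.range fun n : ℕ =>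
      δ (M + 1 + n + k) * β (M + 1 + n + k) /
        (δ (M + 1 + n) * δ k * β (M + 1 + n) * β k)))
    (hbto : Tendsto (fun M : ℕ => ∑ k ∈ Finset.Icc 1 M, bconst β δ M k) atTop (𝓝 0))
    (f : ℕ → ℂ) (hf : Memℓp (fun n => (β n : ℂ) * f n) p) (hf0 : f 0 = 0)
    (lam : ℂ) (hlam : lam ≠ 0)
    (T : lp (fun _ : ℕ => ℂ) p →L[ℂ] lp (fun _ : ℕ => ℂ) p)
    (hT : ∀ g : lp (fun _ : ℕ => ℂ) p, ∀ n : ℕ,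
      T g n = (β n : ℂ) * dprod δ f (fun m => g m / (β m : ℂ)) n) :
    IsClosed (Set.range fun g : lp (fun _ : ℕ => ℂ) p => lam • g - T g) :=
  stmt5' β δ hβ hδ hβ0 hδ0 p hp1 hp q hpq hC hbfin hbto f hf hf0 lam hlam T hT
end
end

section
/- (Corollary 2.5) Let 1 < p < ∞ with conjugate exponent q. Assume C₀ < ∞ and that ∑_{k=1}^M b_{M,k} → 0 as M → ∞. Then every nonzero multiplicative linear functional φ on the Banach algebra (ℓ^p(β), ⋄) is given by evaluation of the zeroth coefficient: φ(f) = f(0) for all f ∈ ℓ^p(β). In particular the maximal ideal space of (ℓ^p(β), ⋄) consists of exactly one character. -/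
open Filter Finset
open scoped ENNReal Topology

noncomputable section

def Wc (β δ : ℕ → ℝ) (n k : ℕ) : ℝ := δ n * β n / (δ k * δ (n - k) * β k * β (n - k))

def mulFun (β δ : ℕ → ℝ) (a b : ℕ → ℂ) : ℕ → ℂ := fun n =>
  ∑ k ∈ Finset.range (n + 1), ((Wc β δ n k : ℝ) : ℂ) * a k * b (n - k)

lemma key_eq {β δ : ℕ → ℝ} (hβ : ∀ n, 0 < β n) (hδ : ∀ n, 0 < δ n)
    (a b : ℕ → ℂ) (n : ℕ) :
    (β n : ℂ) * dprod δ (fun m => a m / (β m : ℂ)) (fun m => b m / (β m : ℂ)) n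
      = mulFun β δ a b n := by
  unfold dprod mulFun Wc
  rw [Finset.mul_sum]
  refine Finset.sum_congr rfl fun k hk => ?_
  have h1 : (β k : ℂ) ≠ 0 := by exact_mod_cast (hβ k).ne'
  have h2 : (β (n - k) : ℂ) ≠ 0 := by exact_mod_cast (hβ (n - k)).ne'
  have h3 : (δ k : ℂ) ≠ 0 := by exact_mod_cast (hδ k).ne'
  have h4 : (δ (n - k) : ℂ) ≠ 0 := by exact_mod_cast (hδ (n - k)).ne'
  push_cast
  field_simp

lemma Wc_pos {β δ : ℕ → ℝ} (hβ : ∀ n, 0 < β n) (hδ : ∀ n, 0 < δ n) (n k : ℕ) :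
    0 < Wc β δ n k := by
  exact div_pos (mul_pos (hδ n) (hβ n))
    (mul_pos (mul_pos (mul_pos (hδ k) (hδ (n - k))) (hβ k)) (hβ (n - k)))

lemma young {β δ : ℕ → ℝ} (hβ : ∀ n, 0 < β n) (hδ : ∀ n, 0 < δ n)
    {p : ℝ≥0∞} [Fact (1 ≤ p)]
    {q : ℝ} (hpq : Real.HolderConjugate p.toReal q)
    {C : ℝ} (hCle : ∀ n, ∑ k ∈ Finset.range (n + 1), (Wc β δ n k) ^ q ≤ C)
    (a b : lp (fun _ : ℕ => ℂ) p) :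
    Memℓp (mulFun β δ a b) p ∧
      ∑' n, ‖mulFun β δ a b n‖ ^ p.toReal ≤
        C ^ (p.toReal / q) * (‖a‖ ^ p.toReal * ‖b‖ ^ p.toReal) := by
  set pr := p.toReal with hprdef
  have hpr1 : 1 < pr := hpq.lt
  have hpr0 : 0 < pr := zero_lt_one.trans hpr1
  have hq0 : 0 < q := hpq.symm.pos
  have hC0 : 0 ≤ C := le_trans (by
    refine Finset.sum_nonneg fun k _ => ?_
    exact Real.rpow_nonneg (Wc_pos hβ hδ 0 k).le q) (hCle 0)
  have hA : Summable fun n => ‖a n‖ ^ pr := (lp.memℓp a).summable hpr0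
  have hB : Summable fun n => ‖b n‖ ^ pr := (lp.memℓp b).summable hpr0
  set S : ℕ → ℝ := fun n => ∑ k ∈ Finset.range (n + 1), ‖a k‖ ^ pr * ‖b (n - k)‖ ^ pr
    with hSdef
  have hAnn : ∀ n, ‖(fun m => ‖a m‖ ^ pr) n‖ = ‖a n‖ ^ pr := fun n =>
    Real.norm_of_nonneg (Real.rpow_nonneg (norm_nonneg _) _)
  have hBnn : ∀ n, ‖(fun m => ‖b m‖ ^ pr) n‖ = ‖b n‖ ^ pr := fun n =>
    Real.norm_of_nonneg (Real.rpow_nonneg (norm_nonneg _) _)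
  have hS : Summable S := by
    have h := summable_norm_sum_mul_range_of_summable_norm (R := ℝ)
      (f := fun m => ‖a m‖ ^ pr) (g := fun m => ‖b m‖ ^ pr)
      (by simpa only [hAnn] using hA) (by simpa only [hBnn] using hB)
    exact Summable.of_norm h
  have hSnn : ∀ n, 0 ≤ S n := fun n =>
    Finset.sum_nonneg fun k _ =>
      mul_nonneg (Real.rpow_nonneg (norm_nonneg _) _) (Real.rpow_nonneg (norm_nonneg _) _)
  have hpoint : ∀ n, ‖mulFun β δ a b n‖ ^ pr ≤ C ^ (pr / q) * S n := by
    intro n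
    have step1 : ‖mulFun β δ a b n‖ ≤
        ∑ k ∈ Finset.range (n + 1), Wc β δ n k * (‖a k‖ * ‖b (n - k)‖) := by
      refine le_trans (norm_sum_le _ _) (le_of_eq (Finset.sum_congr rfl fun k _ => ?_))
      rw [norm_mul, norm_mul, Complex.norm_real, Real.norm_of_nonneg (Wc_pos hβ hδ n k).le,
        mul_assoc]
    have step2 : ∑ k ∈ Finset.range (n + 1), Wc β δ n k * (‖a k‖ * ‖b (n - k)‖) ≤
        C ^ (1 / q) * S n ^ (1 / pr) := by
      have h := Real.inner_le_Lp_mul_Lq_of_nonneg (s := Finset.range (n + 1))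
        (f := fun k => Wc β δ n k) (g := fun k => ‖a k‖ * ‖b (n - k)‖) hpq.symm
        (fun k _ => (Wc_pos hβ hδ n k).le)
        (fun k _ => mul_nonneg (norm_nonneg _) (norm_nonneg _))
      refine le_trans h ?_
      have e1 : ∑ k ∈ Finset.range (n + 1), (‖a k‖ * ‖b (n - k)‖) ^ pr = S n := by
        refine Finset.sum_congr rfl fun k _ => ?_
        exact Real.mul_rpow (norm_nonneg _) (norm_nonneg _)
      rw [e1]
      exact mul_le_mul_of_nonneg_right
        (Real.rpow_le_rpow (Finset.sum_nonneg fun k _ =>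
          Real.rpow_nonneg (Wc_pos hβ hδ n k).le q) (hCle n) (by positivity))
        (Real.rpow_nonneg (hSnn n) _)
    have := Real.rpow_le_rpow (norm_nonneg _) (le_trans step1 step2) hpr0.le
    refine le_trans this (le_of_eq ?_)
    rw [Real.mul_rpow (Real.rpow_nonneg hC0 _) (Real.rpow_nonneg (hSnn n) _),
      ← Real.rpow_mul hC0, ← Real.rpow_mul (hSnn n), one_div_mul_cancel hpr0.ne',
      Real.rpow_one, one_div_mul_eq_div]
  have hsum : Summable fun n => ‖mulFun β δ a b n‖ ^ pr :=
    Summable.of_nonneg_of_le (fun n => Real.rpow_nonneg (norm_nonneg _) _) hpoint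
      (hS.mul_left _)
  refine ⟨memℓp_gen hsum, ?_⟩
  have h1 : ∑' n, ‖mulFun β δ a b n‖ ^ pr ≤ ∑' n, C ^ (pr / q) * S n :=
    Summable.tsum_le_tsum hpoint hsum (hS.mul_left _)
  refine le_trans h1 (le_of_eq ?_)
  rw [tsum_mul_left]
  congr 1
  have h2 : (∑' n, ‖a n‖ ^ pr) * (∑' n, ‖b n‖ ^ pr) = ∑' n, S n := by
    have := tsum_mul_tsum_eq_tsum_sum_range_of_summable_norm (R := ℝ)
      (f := fun m => ‖a m‖ ^ pr) (g := fun m => ‖b m‖ ^ pr)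
      (by simpa only [hAnn] using hA) (by simpa only [hBnn] using hB)
    exact this
  rw [← h2, lp.norm_rpow_eq_tsum hpr0, lp.norm_rpow_eq_tsum hpr0]

lemma young_norm {β δ : ℕ → ℝ} (hβ : ∀ n, 0 < β n) (hδ : ∀ n, 0 < δ n)
    {p : ℝ≥0∞} [Fact (1 ≤ p)]
    {q : ℝ} (hpq : Real.HolderConjugate p.toReal q)
    {C : ℝ} (hCle : ∀ n, ∑ k ∈ Finset.range (n + 1), (Wc β δ n k) ^ q ≤ C)
    (a b c : lp (fun _ : ℕ => ℂ) p) (hc : ⇑c = mulFun β δ a b) :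
    ‖c‖ ≤ C ^ (1 / q) * (‖a‖ * ‖b‖) := by
  set pr := p.toReal with hprdef
  have hpr0 : 0 < pr := hpq.pos
  have hq0 : 0 < q := hpq.symm.pos
  have hC0 : 0 ≤ C := le_trans (Finset.sum_nonneg fun k _ =>
    Real.rpow_nonneg (Wc_pos hβ hδ 0 k).le q) (hCle 0)
  have h := (young hβ hδ hpq hCle a b).2
  have h1 : ‖c‖ ^ pr ≤ (C ^ (1 / q) * (‖a‖ * ‖b‖)) ^ pr := by
    rw [lp.norm_rpow_eq_tsum hpr0]
    refine le_trans (by rw [hc]) h |>.trans (le_of_eq ?_)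
    rw [Real.mul_rpow (Real.rpow_nonneg hC0 _) (by positivity),
      Real.mul_rpow (norm_nonneg a) (norm_nonneg b),
      ← Real.rpow_mul hC0, one_div_mul_eq_div]
  have h2 := Real.rpow_le_rpow (by positivity) h1 (le_of_lt (by positivity : (0:ℝ) < 1 / pr))
  rwa [← Real.rpow_mul (norm_nonneg c), ← Real.rpow_mul (by positivity),
    mul_one_div_cancel hpr0.ne', Real.rpow_one, Real.rpow_one] at h2

lemma single_ite {p : ℝ≥0∞} (i : ℕ) (x : ℂ) (j : ℕ) :
    (lp.single (E := fun _ : ℕ => ℂ) p i x) j = if j = i then x else 0 := by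
  by_cases h : j = i
  · subst h; simp [lp.single_apply_self]
  · simp [lp.single_apply_ne p i _ h, h]

lemma mulFun_unit_left {β δ : ℕ → ℝ} (hβ : ∀ n, 0 < β n) (hδ : ∀ n, 0 < δ n)
    (hβ0 : β 0 = 1) (hδ0 : δ 0 = 1) (u a : ℕ → ℂ)
    (hu : ∀ j, u j = if j = 0 then 1 else 0) (n : ℕ) :
    mulFun β δ u a n = a n := by
  unfold mulFun
  rw [Finset.sum_eq_single_of_mem 0 (Finset.mem_range.2 (Nat.succ_pos n))]
  · have : Wc β δ n 0 = 1 := by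
      unfold Wc
      rw [Nat.sub_zero, hβ0, hδ0, show (1:ℝ) * δ n * 1 * β n = δ n * β n by ring]
      exact div_self (mul_pos (hδ n) (hβ n)).ne'
    simp [this, hu]
  · intro k _ hk
    simp [hu, hk]

lemma mulFun_unit_right {β δ : ℕ → ℝ} (hβ : ∀ n, 0 < β n) (hδ : ∀ n, 0 < δ n)
    (hβ0 : β 0 = 1) (hδ0 : δ 0 = 1) (u a : ℕ → ℂ)
    (hu : ∀ j, u j = if j = 0 then 1 else 0) (n : ℕ) :
    mulFun β δ a u n = a n := by
  unfold mulFun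
  rw [Finset.sum_eq_single_of_mem n (Finset.mem_range.2 (Nat.lt_succ_self n))]
  · have : Wc β δ n n = 1 := by
      unfold Wc
      rw [Nat.sub_self, hβ0, hδ0]
      rw [show δ n * 1 * β n * 1 = δ n * β n by ring]
      exact div_self (mul_pos (hδ n) (hβ n)).ne'
    simp [this, hu]
  · intro k hk hkn
    have : n - k ≠ 0 := by
      rw [Finset.mem_range] at hk; omega
    simp [hu, this]

lemma mulFun_single_single {β δ : ℕ → ℝ} (j k : ℕ) (u v : ℕ → ℂ)
    (hu : ∀ m, u m = if m = j then 1 else 0) (hv : ∀ m, v m = if m = k then 1 else 0)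
    (n : ℕ) :
    mulFun β δ u v n = if n = j + k then ((Wc β δ (j + k) j : ℝ) : ℂ) else 0 := by
  unfold mulFun
  rcases eq_or_ne n (j + k) with rfl | hne
  · rw [if_pos rfl, Finset.sum_eq_single_of_mem j (Finset.mem_range.2 (by omega))]
    · simp [hu, hv, Nat.add_sub_cancel_left]
    · intro m _ hm
      simp [hu, hm]
  · rw [if_neg hne]
    refine Finset.sum_eq_zero fun m hm => ?_
    rw [Finset.mem_range] at hm
    by_cases h1 : m = j
    · subst h1
      have : n - m ≠ k := by omega
      simp [hv, this]
    · simp [hu, h1]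

lemma mulFun_add_right {β δ : ℕ → ℝ} (a f g : ℕ → ℂ) :
    mulFun β δ a (f + g) = mulFun β δ a f + mulFun β δ a g := by
  funext n
  simp only [mulFun, Pi.add_apply, mul_add, Finset.sum_add_distrib]

lemma mulFun_smul_right {β δ : ℕ → ℝ} (a f : ℕ → ℂ) (s : ℂ) :
    mulFun β δ a (s • f) = s • mulFun β δ a f := by
  funext n
  simp only [mulFun, Pi.smul_apply, smul_eq_mul, Finset.mul_sum]
  refine Finset.sum_congr rfl fun m _ => by ring

def pmulEl {β δ : ℕ → ℝ} (hβ : ∀ n, 0 < β n) (hδ : ∀ n, 0 < δ n)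
    {p : ℝ≥0∞} [Fact (1 ≤ p)] {q : ℝ} (hpq : Real.HolderConjugate p.toReal q)
    {C : ℝ} (hCle : ∀ n, ∑ k ∈ Finset.range (n + 1), (Wc β δ n k) ^ q ≤ C)
    (a b : lp (fun _ : ℕ => ℂ) p) : lp (fun _ : ℕ => ℂ) p :=
  ⟨mulFun β δ a b, (young hβ hδ hpq hCle a b).1⟩

/-- Corollary 2.5: under the isometric identification `f ↦ (β(n)f(n))ₙ` of
`ℓ^p(β)` (`1 < p < ∞`) with the standard `lp` space (so that `φ(f) = f(0)` becomes
`φ(a) = a(0)`, as `β(0) = 1`), assuming `C₀ < ∞` and `∑_{k=1}^M b_{M,k} → 0`: every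
nonzero multiplicative linear functional on `(ℓ^p(β), ⋄)` is `f ↦ f(0)`, and this is
indeed a nonzero multiplicative linear functional; hence the maximal ideal space consists
of exactly one character. -/
theorem stmt9 (β δ : ℕ → ℝ) (hβ : ∀ n, 0 < β n) (hδ : ∀ n, 0 < δ n)
    (hβ0 : β 0 = 1) (hδ0 : δ 0 = 1)
    (p : ℝ≥0∞) [Fact (1 ≤ p)] (hp1 : 1 < p) (hp : p ≠ ∞)
    (q : ℝ) (hpq : 1 / p.toReal + 1 / q = 1)
    (hC : BddAbove (Set.range fun n : ℕ =>
      ∑ k ∈ Finset.range (n + 1),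
        (δ n * β n / (δ k * δ (n - k) * β k * β (n - k))) ^ q))
    (hbfin : ∀ M k : ℕ, BddAbove (Set.range fun n : ℕ =>
      δ (M + 1 + n + k) * β (M + 1 + n + k) /
        (δ (M + 1 + n) * δ k * β (M + 1 + n) * β k)))
    (hbto : Tendsto (fun M : ℕ => ∑ k ∈ Finset.Icc 1 M, bconst β δ M k) atTop (𝓝 0)) :
    (∀ φ : lp (fun _ : ℕ => ℂ) p →ₗ[ℂ] ℂ, φ ≠ 0 →
      (∀ a b c : lp (fun _ : ℕ => ℂ) p,
        (∀ n : ℕ, c n = (β n : ℂ) *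
          dprod δ (fun m => a m / (β m : ℂ)) (fun m => b m / (β m : ℂ)) n) →
        φ c = φ a * φ b) →
      ∀ a : lp (fun _ : ℕ => ℂ) p, φ a = a 0) ∧
    (∃ φ : lp (fun _ : ℕ => ℂ) p →ₗ[ℂ] ℂ, φ ≠ 0 ∧
      (∀ a b c : lp (fun _ : ℕ => ℂ) p,
        (∀ n : ℕ, c n = (β n : ℂ) *
          dprod δ (fun m => a m / (β m : ℂ)) (fun m => b m / (β m : ℂ)) n) →
        φ c = φ a * φ b) ∧
      ∀ a : lp (fun _ : ℕ => ℂ) p, φ a = a 0) := by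
  classical
  have hpr1 : 1 < p.toReal := by
    have := (ENNReal.toReal_lt_toReal ENNReal.one_ne_top hp).2 hp1
    simpa using this
  have hpr0 : 0 < p.toReal := lt_trans one_pos hpr1
  have hqc : Real.HolderConjugate p.toReal q := Real.holderConjugate_iff.2 ⟨hpr1, by simpa [one_div] using hpq⟩
  have hq0 : 0 < q := hqc.symm.pos
  set C := sSup (Set.range fun n : ℕ =>
    ∑ k ∈ Finset.range (n + 1),
      (δ n * β n / (δ k * δ (n - k) * β k * β (n - k))) ^ q) with hCdef
  have hCle : ∀ n, ∑ k ∈ Finset.range (n + 1), Wc β δ n k ^ q ≤ C :=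
    fun n => le_csSup hC ⟨n, rfl⟩
  have hW00 : Wc β δ 0 0 = 1 := by
    unfold Wc; rw [hβ0, hδ0]; norm_num
  have hC1 : (1 : ℝ) ≤ C := by
    refine le_trans ?_ (hCle 0)
    simp [hW00]
  have hC0 : (0 : ℝ) ≤ C := le_trans zero_le_one hC1
  set K := C ^ (1 / q) with hKdef
  have hK1 : (1 : ℝ) ≤ K := Real.one_le_rpow hC1 (by positivity)
  have hK0 : (0 : ℝ) < K := lt_of_lt_of_le one_pos hK1
  let P : lp (fun _ : ℕ => ℂ) p → lp (fun _ : ℕ => ℂ) p → lp (fun _ : ℕ => ℂ) p := fun a b => pmulEl hβ hδ hqc hCle a b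
  have hPcoe : ∀ a b : lp (fun _ : ℕ => ℂ) p, ⇑(P a b) = mulFun β δ a b := fun a b => rfl
  have hPnorm : ∀ a b : lp (fun _ : ℕ => ℂ) p, ‖P a b‖ ≤ K * (‖a‖ * ‖b‖) := fun a b =>
    young_norm hβ hδ hqc hCle a b _ rfl
  set e : lp (fun _ : ℕ => ℂ) p := lp.single p 0 1 with hedef
  have he : ∀ j, e j = if j = 0 then 1 else 0 := single_ite 0 1
  have hPea : ∀ a : lp (fun _ : ℕ => ℂ) p, P e a = a := fun a =>
    Subtype.ext (funext fun n => mulFun_unit_left hβ hδ hβ0 hδ0 _ _ he n)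
  have hPae : ∀ a : lp (fun _ : ℕ => ℂ) p, P a e = a := fun a =>
    Subtype.ext (funext fun n => mulFun_unit_right hβ hδ hβ0 hδ0 _ _ he n)
  have henorm : ‖e‖ = 1 := by
    simpa using lp.norm_single (E := fun _ : ℕ => ℂ) (p := p) (zero_lt_one.trans_le (Fact.out : 1 ≤ p)) 0 (1 : ℂ)
  have main : ∀ φ : lp (fun _ : ℕ => ℂ) p →ₗ[ℂ] ℂ, φ ≠ 0 →
      (∀ a b c : lp (fun _ : ℕ => ℂ) p,
        (∀ n : ℕ, c n = (β n : ℂ) *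
          dprod δ (fun m => a m / (β m : ℂ)) (fun m => b m / (β m : ℂ)) n) →
        φ c = φ a * φ b) →
      ∀ a : lp (fun _ : ℕ => ℂ) p, φ a = a 0 := by
    intro φ hφ0 hmul
    have multH : ∀ a b : lp (fun _ : ℕ => ℂ) p, φ (P a b) = φ a * φ b := fun a b =>
      hmul a b (P a b) (fun n => (key_eq hβ hδ a b n).symm)
    have hφe : φ e = 1 := by
      have h := multH e e
      rw [hPea] at h
      by_cases h0 : φ e = 0
      · exfalso
        apply hφ0
        refine LinearMap.ext fun a => ?_
        have h2 := multH e a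
        rw [hPea] at h2
        rw [LinearMap.zero_apply, h2, h0, zero_mul]
      · have : φ e * 1 = φ e * φ e := by rw [mul_one]; exact h
        exact (mul_left_cancel₀ h0 this).symm
    have hbound : ∀ a : lp (fun _ : ℕ => ℂ) p, ‖φ a‖ ≤ K * ‖a‖ := by
      by_contra hcon
      push_neg at hcon
      obtain ⟨a, ha⟩ := hcon
      have hφa : φ a ≠ 0 := by
        intro h
        rw [h, norm_zero] at ha
        nlinarith [norm_nonneg a, hK0]
      set b : lp (fun _ : ℕ => ℂ) p := (φ a)⁻¹ • a with hbdef
      have hφb : φ b = 1 := by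
        rw [hbdef, map_smul, smul_eq_mul, inv_mul_cancel₀ hφa]
      have hφapos : 0 < ‖φ a‖ := norm_pos_iff.2 hφa
      have hbn : K * ‖b‖ < 1 := by
        have hb : ‖b‖ = ‖a‖ / ‖φ a‖ := by
          rw [hbdef, norm_smul, norm_inv, div_eq_inv_mul]
        rw [hb, ← mul_div_assoc]
        rw [div_lt_one hφapos]
        exact ha
      set r := K * ‖b‖ with hrdef
      have hr0 : 0 ≤ r := mul_nonneg hK0.le (norm_nonneg _)
      set pw : ℕ → lp (fun _ : ℕ => ℂ) p := fun n => (P b)^[n] e with hpwdef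
      have hpws : ∀ n, pw (n + 1) = P b (pw n) := fun n =>
        Function.iterate_succ_apply' (P b) n e
      have hpwn : ∀ n, ‖pw n‖ ≤ r ^ n := by
        intro n
        induction n with
        | zero => simp [hpwdef, henorm]
        | succ n ih =>
          calc ‖pw (n + 1)‖ = ‖P b (pw n)‖ := by rw [hpws]
            _ ≤ K * (‖b‖ * ‖pw n‖) := hPnorm _ _
            _ = r * ‖pw n‖ := by rw [hrdef]; ring
            _ ≤ r * r ^ n := mul_le_mul_of_nonneg_left ih hr0
            _ = r ^ (n + 1) := (pow_succ' r n).symm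
      have hsummable : Summable fun n => pw (n + 1) := by
        apply Summable.of_norm
        refine Summable.of_nonneg_of_le (fun n => norm_nonneg _) (fun n => hpwn (n + 1)) ?_
        simpa only [pow_succ'] using (summable_geometric_of_lt_one hr0 hbn).mul_left r
      set c := ∑' n, pw (n + 1) with hcdef
      let Lb : lp (fun _ : ℕ => ℂ) p →ₗ[ℂ] lp (fun _ : ℕ => ℂ) p :=
        { toFun := fun x => P b x,
          map_add' := fun x y => lp.ext (by
            simp only [hPcoe, lp.coeFn_add, mulFun_add_right]),
          map_smul' := fun s x => lp.ext (by
            simp only [RingHom.id_apply, hPcoe, lp.coeFn_smul, mulFun_smul_right]) }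
      let Lc : lp (fun _ : ℕ => ℂ) p →L[ℂ] lp (fun _ : ℕ => ℂ) p := LinearMap.mkContinuous Lb (K * ‖b‖)
        (fun x => by
          have := hPnorm b x
          calc ‖Lb x‖ = ‖P b x‖ := rfl
            _ ≤ K * (‖b‖ * ‖x‖) := hPnorm b x
            _ = K * ‖b‖ * ‖x‖ := by ring)
      have hLc : ∀ x, Lc x = P b x := fun x => rfl
      have htail : c = b + ∑' n, pw (n + 2) := by
        have h := Summable.tsum_eq_zero_add hsummable
        have hb1 : pw (0 + 1) = b := by rw [hpws 0]; exact hPae b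
        rw [hcdef, h, hb1]
      have hPbc : P b (e + c) = c := by
        have h1 : P b (e + c) = P b e + P b c := by
          rw [← hLc, ← hLc, ← hLc, map_add]
        have h2 : P b c = ∑' n, pw (n + 2) := by
          rw [← hLc, hcdef, Lc.map_tsum hsummable]
          exact tsum_congr fun n => by rw [hLc, ← hpws]
        rw [h1, h2, hPae, htail]
      have hcontra := multH b (e + c)
      rw [hPbc, map_add, hφe, hφb, one_mul] at hcontra
      exact one_ne_zero (by linear_combination -hcontra : (1 : ℂ) = 0)
    set lam : ℕ → ℂ := fun n => φ (lp.single p n 1) with hlamdef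
    have hsingle_coe : ∀ j : ℕ, ∀ m, (lp.single (E := fun _ : ℕ => ℂ) p j 1) m
        = if m = j then 1 else 0 := fun j m => single_ite j 1 m
    have hlam_mul : ∀ j k : ℕ, lam j * lam k = ((Wc β δ (j + k) j : ℝ) : ℂ) * lam (j + k) := by
      intro j k
      have h1 : P (lp.single p j 1) (lp.single p k 1)
          = ((Wc β δ (j + k) j : ℝ) : ℂ) • lp.single p (j + k) 1 := by
        apply lp.ext
        rw [hPcoe, lp.coeFn_smul]
        funext n
        rw [mulFun_single_single j k _ _ (hsingle_coe j) (hsingle_coe k) n]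
        rw [Pi.smul_apply, single_ite, smul_eq_mul]
        by_cases h : n = j + k <;> simp [h]
      have h2 := multH (lp.single p j 1) (lp.single p k 1)
      rw [h1, map_smul, smul_eq_mul] at h2
      exact h2.symm
    have hlam0 : lam 0 = 1 := hφe
    set mu : ℂ := ((δ 1 * β 1 : ℝ) : ℂ) * lam 1 with hmudef
    have hmun : ∀ n, ((δ n * β n : ℝ) : ℂ) * lam n = mu ^ n := by
      intro n
      induction n with
      | zero => simp [hβ0, hδ0, hlam0]
      | succ n ih =>
        have hw : Wc β δ (n + 1) n = δ (n + 1) * β (n + 1) / (δ n * δ 1 * β n * β 1) := by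
          unfold Wc
          rw [show n + 1 - n = 1 from by omega]
        have hδn : (δ n : ℂ) ≠ 0 := by exact_mod_cast (hδ n).ne'
        have hβn : (β n : ℂ) ≠ 0 := by exact_mod_cast (hβ n).ne'
        have hδ1 : (δ 1 : ℂ) ≠ 0 := by exact_mod_cast (hδ 1).ne'
        have hβ1 : (β 1 : ℂ) ≠ 0 := by exact_mod_cast (hβ 1).ne'
        rw [pow_succ, ← ih, hmudef, mul_mul_mul_comm, hlam_mul n 1, hw]
        push_cast
        field_simp
    have hlamle : ∀ n, ‖lam n‖ ≤ K := by
      intro n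
      have h := hbound (lp.single p n 1)
      rwa [lp.norm_single (E := fun _ : ℕ => ℂ) (p := p) (zero_lt_one.trans_le (Fact.out : 1 ≤ p)) n (1 : ℂ), norm_one,
        mul_one] at h
    have hmuineq : ∀ n, ‖mu‖ ^ n ≤ K * (δ n * β n) := by
      intro n
      have h1 := congrArg norm (hmun n)
      rw [norm_mul, norm_pow, Complex.norm_real,
        Real.norm_of_nonneg (mul_pos (hδ n) (hβ n)).le] at h1
      calc ‖mu‖ ^ n = δ n * β n * ‖lam n‖ := h1.symm
        _ ≤ δ n * β n * K := mul_le_mul_of_nonneg_left (hlamle n)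
            (mul_pos (hδ n) (hβ n)).le
        _ = K * (δ n * β n) := by ring
    have hbnn : ∀ M k : ℕ, 0 ≤ bconst β δ M k := by
      intro M k
      have h1 : 0 < δ (M + 1 + 0 + k) * β (M + 1 + 0 + k) /
          (δ (M + 1 + 0) * δ k * β (M + 1 + 0) * β k) :=
        div_pos (mul_pos (hδ _) (hβ _))
          (mul_pos (mul_pos (mul_pos (hδ _) (hδ _)) (hβ _)) (hβ _))
      exact le_trans h1.le (le_ciSup (hbfin M k) 0)
    have hb1le : ∀ M n : ℕ, M + 1 ≤ n →
        δ (n + 1) * β (n + 1) / (δ n * δ 1 * β n * β 1) ≤ bconst β δ M 1 := by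
      intro M n hn
      have h := le_ciSup (hbfin M 1) (n - (M + 1))
      have e1 : M + 1 + (n - (M + 1)) = n := by omega
      rw [e1] at h
      exact h
    have hb1to : Tendsto (fun M : ℕ => bconst β δ M 1) atTop (𝓝 0) := by
      refine squeeze_zero' (Eventually.of_forall fun M => hbnn M 1) ?_ hbto
      filter_upwards [eventually_ge_atTop 1] with M hM
      exact Finset.single_le_sum (fun k _ => hbnn M k) (Finset.mem_Icc.2 ⟨le_refl 1, hM⟩)
    have hmu0 : mu = 0 := by
      by_contra hne
      have hmupos : 0 < ‖mu‖ := norm_pos_iff.2 hne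
      have hkey : ∀ ε : ℝ, 0 < ε → ‖mu‖ ≤ ε := by
        intro ε hε
        have hδβ1 : 0 < δ 1 * β 1 := mul_pos (hδ 1) (hβ 1)
        obtain ⟨M, hM⟩ := (hb1to.eventually
          (gt_mem_nhds (show (0:ℝ) < ε / (δ 1 * β 1) by positivity))).exists
        set D := bconst β δ M 1 * (δ 1 * β 1) with hDdef
        have hD0 : 0 ≤ D := mul_nonneg (hbnn M 1) hδβ1.le
        have hDε : D ≤ ε := by
          rw [hDdef]
          calc bconst β δ M 1 * (δ 1 * β 1) ≤ ε / (δ 1 * β 1) * (δ 1 * β 1) :=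
              mul_le_mul_of_nonneg_right hM.le hδβ1.le
            _ = ε := div_mul_cancel₀ ε hδβ1.ne'
        have hstep : ∀ n, M + 1 ≤ n → δ (n + 1) * β (n + 1) ≤ D * (δ n * β n) := by
          intro n hn
          have h := hb1le M n hn
          have hden : 0 < δ n * δ 1 * β n * β 1 :=
            mul_pos (mul_pos (mul_pos (hδ n) (hδ 1)) (hβ n)) (hβ 1)
          rw [div_le_iff₀ hden] at h
          calc δ (n + 1) * β (n + 1) ≤ bconst β δ M 1 * (δ n * δ 1 * β n * β 1) := h
            _ = D * (δ n * β n) := by rw [hDdef]; ring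
        have hiter : ∀ j : ℕ, δ (M + 1 + j) * β (M + 1 + j) ≤
            D ^ j * (δ (M + 1) * β (M + 1)) := by
          intro j
          induction j with
          | zero => simp
          | succ j ih =>
            have h1 : δ (M + 1 + j + 1) * β (M + 1 + j + 1) ≤ D * (δ (M + 1 + j) * β (M + 1 + j)) :=
              hstep (M + 1 + j) (by omega)
            have h2 : M + 1 + (j + 1) = M + 1 + j + 1 := by omega
            rw [h2]
            calc δ (M + 1 + j + 1) * β (M + 1 + j + 1)
                ≤ D * (δ (M + 1 + j) * β (M + 1 + j)) := h1
              _ ≤ D * (D ^ j * (δ (M + 1) * β (M + 1))) :=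
                mul_le_mul_of_nonneg_left ih hD0
              _ = D ^ (j + 1) * (δ (M + 1) * β (M + 1)) := by ring
        suffices hf : ‖mu‖ ≤ D from le_trans hf hDε
        by_contra hgt
        push_neg at hgt
        rcases eq_or_lt_of_le hD0 with hD | hD
        · have h1 := hmuineq (M + 1 + 1)
          have h2 := hiter 1
          rw [← hD] at h2
          simp only [pow_one, zero_mul] at h2
          have h3 : 0 < δ (M + 1 + 1) * β (M + 1 + 1) := mul_pos (hδ _) (hβ _)
          linarith
        · have hratio : 1 < ‖mu‖ / D := (one_lt_div hD).2 hgt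
          obtain ⟨j, hj⟩ := pow_unbounded_of_one_lt
            (K * (δ (M + 1) * β (M + 1)) / ‖mu‖ ^ (M + 1)) hratio
          have h1 : ‖mu‖ ^ (M + 1) * ‖mu‖ ^ j ≤ K * (D ^ j * (δ (M + 1) * β (M + 1))) := by
            have h := hmuineq (M + 1 + j)
            rw [pow_add] at h
            exact le_trans h (mul_le_mul_of_nonneg_left (hiter j) hK0.le)
          have h2 : (‖mu‖ / D) ^ j ≤ K * (δ (M + 1) * β (M + 1)) / ‖mu‖ ^ (M + 1) := by
            rw [div_pow, div_le_div_iff₀ (pow_pos hD j) (pow_pos hmupos _)]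
            calc ‖mu‖ ^ j * ‖mu‖ ^ (M + 1) = ‖mu‖ ^ (M + 1) * ‖mu‖ ^ j := by ring
              _ ≤ K * (D ^ j * (δ (M + 1) * β (M + 1))) := h1
              _ = K * (δ (M + 1) * β (M + 1)) * D ^ j := by ring
          linarith
      have : ‖mu‖ ≤ ‖mu‖ / 2 := hkey (‖mu‖ / 2) (by positivity)
      linarith
    have hlamz : ∀ n : ℕ, 1 ≤ n → lam n = 0 := by
      intro n hn
      have h := hmun n
      rw [hmu0, zero_pow (by omega : n ≠ 0)] at h
      have hne : ((δ n * β n : ℝ) : ℂ) ≠ 0 := by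
        exact_mod_cast (mul_pos (hδ n) (hβ n)).ne'
      exact (mul_eq_zero.1 h).resolve_left hne
    intro a
    let ψ : lp (fun _ : ℕ => ℂ) p →L[ℂ] ℂ := LinearMap.mkContinuous φ K hbound
    have hψ : ∀ x, ψ x = φ x := fun x => rfl
    have hs := lp.hasSum_single hp a
    have hs2 : HasSum (fun n => φ (lp.single p n (a n))) (φ a) := by
      simpa only [hψ] using hs.mapL ψ
    have hterm : ∀ n, φ (lp.single p n (a n)) = if n = 0 then a 0 else 0 := by
      intro n
      have hsm : lp.single (E := fun _ : ℕ => ℂ) p n (a n) = a n • lp.single p n 1 := by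
        rw [← lp.single_smul]
        congr 1
        rw [smul_eq_mul, mul_one]
      rw [hsm, map_smul, smul_eq_mul]
      rcases eq_or_ne n 0 with rfl | hn
      · rw [if_pos rfl]
        have : φ (lp.single p 0 (1:ℂ)) = 1 := hφe
        rw [this, mul_one]
      · rw [if_neg hn, show φ (lp.single p n 1) = lam n from rfl, hlamz n (by omega), mul_zero]
    have hs3 : HasSum (fun n => if n = 0 then (a : ℕ → ℂ) 0 else 0) (φ a) := by
      simpa only [hterm] using hs2
    have hs4 : HasSum (fun n => if n = 0 then (a : ℕ → ℂ) 0 else 0) ((a : ℕ → ℂ) 0) := by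
      convert hasSum_ite_eq 0 ((a : ℕ → ℂ) 0) using 2 with n
      try simp [eq_comm]
    exact hs3.unique hs4
  refine ⟨main, ?_⟩
  refine ⟨{ toFun := fun a : lp (fun _ : ℕ => ℂ) p => a 0,
            map_add' := fun a b => by simp [lp.coeFn_add],
            map_smul' := fun s a => by simp [lp.coeFn_smul] }, ?_, ?_, fun a => rfl⟩
  · intro h
    have h1 := congrArg (fun t : lp (fun _ : ℕ => ℂ) p →ₗ[ℂ] ℂ => t e) h
    simp only [LinearMap.coe_mk, AddHom.coe_mk, LinearMap.zero_apply] at h1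
    change (e : ℕ → ℂ) 0 = 0 at h1
    rw [he 0] at h1
    simp at h1
  · intro a b c hc
    have h0 := hc 0
    rw [key_eq hβ hδ] at h0
    have h1 : mulFun β δ (⇑a) (⇑b) 0 = a 0 * b 0 := by
      simp [mulFun, hW00]
    simp only [LinearMap.coe_mk, AddHom.coe_mk]
    exact h0.trans h1
end
end

section
/- Let 1 < p < ∞ with conjugate exponent q, let i ∈ ℕ, and assume C_i < ∞. Then for all f, g ∈ ℓ^p_i(β) the product f⋄_i g belongs to ℓ^p_i(β) with ‖f⋄_i g‖_β ≤ C_i^{1/q} ‖f‖_β ‖g‖_β, the product ⋄_i is commutative, and the sequence δ(i)·e_i (where e_i is 1 at index i and 0 elsewhere) is a unit for ⋄_i; hence (ℓ^p_i(β), ⋄_i) is a unital commutative Banach algebra. -/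
open Filter Finset
open scoped ENNReal Topology

noncomputable section

/-- The restricted weighted Cauchy product `⋄ᵢ` on sequences supported on `{n ≥ i}`. -/
def dprodi (δ : ℕ → ℝ) (i : ℕ) (f g : ℕ → ℂ) : ℕ → ℂ := fun n =>
  if n < i then 0
  else ∑ k ∈ Finset.Icc i n, ((δ n / (δ k * δ (n - k + i)) : ℝ) : ℂ) * f k * g (n - k + i)

/-- for `1 < p < ∞` with conjugate exponent `q` and `C_i < ∞`, the subspace
`ℓ^p_i(β)` is closed under `⋄ᵢ` with `‖f⋄ᵢg‖_β ≤ C_i^(1/q) ‖f‖_β ‖g‖_β`, `⋄ᵢ` is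
commutative, and `δ(i)·eᵢ` is a unit for `⋄ᵢ`; hence `(ℓ^p_i(β), ⋄ᵢ)` is a unital
commutative Banach algebra. -/
theorem stmt12 (β δ : ℕ → ℝ) (hβ : ∀ n, 0 < β n) (hδ : ∀ n, 0 < δ n)
    (hβ0 : β 0 = 1) (hδ0 : δ 0 = 1)
    (p q : ℝ) (hp : 1 < p) (hpq : 1 / p + 1 / q = 1) (i : ℕ)
    (hC : BddAbove (Set.range fun m : ℕ =>
      ∑ k ∈ Finset.Icc i (i + m),
        (δ (i + m) * β (i + m) /
          (δ k * δ (i + m - k + i) * β k * β (i + m - k + i))) ^ q)) :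
    (∀ f g : ℕ → ℂ, (∀ n < i, f n = 0) → (∀ n < i, g n = 0) →
      Summable (fun n => (‖f n‖ * β n) ^ p) →
      Summable (fun n => (‖g n‖ * β n) ^ p) →
      (∀ n < i, dprodi δ i f g n = 0) ∧
      Summable (fun n => (‖dprodi δ i f g n‖ * β n) ^ p) ∧
      (∑' n, (‖dprodi δ i f g n‖ * β n) ^ p) ^ (1 / p) ≤
        (⨆ m : ℕ, ∑ k ∈ Finset.Icc i (i + m),
            (δ (i + m) * β (i + m) /
              (δ k * δ (i + m - k + i) * β k * β (i + m - k + i))) ^ q) ^ (1 / q) *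
          ((∑' n, (‖f n‖ * β n) ^ p) ^ (1 / p) * (∑' n, (‖g n‖ * β n) ^ p) ^ (1 / p))) ∧
    (∀ f g : ℕ → ℂ, dprodi δ i f g = dprodi δ i g f) ∧
    (∀ f : ℕ → ℂ, (∀ n < i, f n = 0) →
      dprodi δ i (fun n => if n = i then ((δ i : ℝ) : ℂ) else 0) f = f) := by
  refine ⟨?_, ?_, ?_⟩
  · -- main inequality
    have hq : Real.HolderConjugate p q := Real.holderConjugate_iff.mpr ⟨hp, by rw [← one_div, ← one_div]; exact hpq⟩
    have hp0 : (0:ℝ) < p := hq.pos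
    have hp0' : p ≠ 0 := hq.ne_zero
    have hq0' : q ≠ 0 := hq.symm.ne_zero
    set w : ℕ → ℕ → ℝ := fun n k =>
      δ n * β n / (δ k * δ (n - k + i) * β k * β (n - k + i)) with hw
    set S : ℕ → ℝ := fun m => ∑ k ∈ Finset.Icc i (i + m), w (i + m) k ^ q with hS
    set D : ℝ := ⨆ m, S m with hDdef
    have hwpos : ∀ n k, 0 < w n k := fun n k => by
      rw [hw]
      have := hδ n; have := hβ n; have := hδ k; have := hβ k
      have := hδ (n - k + i); have := hβ (n - k + i)
      positivity
    have hSD : ∀ n, i ≤ n → ∑ k ∈ Finset.Icc i n, w n k ^ q ≤ D := by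
      intro n hn
      have h1 : i + (n - i) = n := by omega
      have := le_ciSup hC (n - i)
      simpa only [hS, h1] using this
    have hD0 : 0 ≤ D :=
      le_trans (Finset.sum_nonneg fun k _ => Real.rpow_nonneg (hwpos i k).le q)
        (hSD i le_rfl)
    intro f g hf hg hFsum hGsum
    set F : ℕ → ℝ := fun n => ‖f n‖ * β n with hF
    set G : ℕ → ℝ := fun n => ‖g n‖ * β n with hG
    have hF0 : ∀ n, 0 ≤ F n := fun n => mul_nonneg (norm_nonneg _) (hβ n).le
    have hG0 : ∀ n, 0 ≤ G n := fun n => mul_nonneg (norm_nonneg _) (hβ n).le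
    have part1 : ∀ n < i, dprodi δ i f g n = 0 := fun n hn => by simp [dprodi, hn]
    set T : ℕ → ℝ := fun n => ∑ k ∈ Finset.Icc i n, (F k * G (n - k + i)) ^ p with hT
    have hT0 : ∀ n, 0 ≤ T n := fun n =>
      Finset.sum_nonneg fun k _ => Real.rpow_nonneg (mul_nonneg (hF0 _) (hG0 _)) p
    -- pointwise bound
    have key : ∀ n, ‖dprodi δ i f g n‖ * β n ≤ D ^ (1/q) * T n ^ (1/p) := by
      intro n
      by_cases h : n < i
      · rw [part1 n h]
        simp only [norm_zero, zero_mul]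
        exact mul_nonneg (Real.rpow_nonneg hD0 _) (Real.rpow_nonneg (hT0 n) _)
      · push_neg at h
        have step1 : ‖dprodi δ i f g n‖ * β n ≤
            ∑ k ∈ Finset.Icc i n, w n k * (F k * G (n - k + i)) := by
          rw [dprodi, if_neg (not_lt.2 h)]
          calc ‖∑ k ∈ Finset.Icc i n,
                ((δ n / (δ k * δ (n - k + i)) : ℝ) : ℂ) * f k * g (n - k + i)‖ * β n
              ≤ (∑ k ∈ Finset.Icc i n,
                ‖((δ n / (δ k * δ (n - k + i)) : ℝ) : ℂ) * f k * g (n - k + i)‖) * β n :=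
                mul_le_mul_of_nonneg_right (norm_sum_le _ _) (hβ n).le
            _ = ∑ k ∈ Finset.Icc i n, w n k * (F k * G (n - k + i)) := by
                rw [Finset.sum_mul]
                refine Finset.sum_congr rfl fun k hk => ?_
                rw [norm_mul, norm_mul, Complex.norm_real, Real.norm_of_nonneg
                  (le_of_lt (div_pos (hδ n) (mul_pos (hδ k) (hδ (n - k + i)))))]
                rw [hw, hF, hG]
                have h1 := (hδ k).ne'; have h2 := (hδ (n-k+i)).ne'
                have h3 := (hβ k).ne'; have h4 := (hβ (n-k+i)).ne'
                field_simp
        have step2 : ∑ k ∈ Finset.Icc i n, w n k * (F k * G (n - k + i)) ≤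
            (∑ k ∈ Finset.Icc i n, w n k ^ q) ^ (1/q) *
              (∑ k ∈ Finset.Icc i n, (F k * G (n - k + i)) ^ p) ^ (1/p) := by
          have := Real.inner_le_Lp_mul_Lq (Finset.Icc i n) (fun k => w n k)
            (fun k => F k * G (n - k + i)) hq.symm
          simpa [abs_of_pos (hwpos n _), abs_of_nonneg (mul_nonneg (hF0 _) (hG0 _))]
            using this
        refine le_trans step1 (le_trans step2 ?_)
        exact mul_le_mul_of_nonneg_right
          (Real.rpow_le_rpow
            (Finset.sum_nonneg fun k _ => Real.rpow_nonneg (hwpos n k).le q)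
            (hSD n h) hq.symm.one_div_nonneg)
          (Real.rpow_nonneg (hT0 n) _)
    set E : ℝ := (D ^ (1/q)) ^ p with hE
    have hE0 : 0 ≤ E := Real.rpow_nonneg (Real.rpow_nonneg hD0 _) _
    have keyp : ∀ n, (‖dprodi δ i f g n‖ * β n) ^ p ≤ E * T n := by
      intro n
      calc (‖dprodi δ i f g n‖ * β n) ^ p ≤ (D ^ (1/q) * T n ^ (1/p)) ^ p :=
            Real.rpow_le_rpow (mul_nonneg (norm_nonneg _) (hβ n).le) (key n) hp0.le
        _ = E * T n := by
            rw [Real.mul_rpow (Real.rpow_nonneg hD0 _) (Real.rpow_nonneg (hT0 n) _),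
              ← Real.rpow_mul (hT0 n), one_div_mul_cancel hp0', Real.rpow_one]
    -- Cauchy product
    set a : ℕ → ℝ := fun j => F (i + j) ^ p with ha'
    set b : ℕ → ℝ := fun j => G (i + j) ^ p with hb'
    have ha : Summable a := by
      have := (summable_nat_add_iff (f := fun n => F n ^ p) i).2 hFsum
      exact this.congr fun j => by rw [ha', add_comm]
    have hb : Summable b := by
      have := (summable_nat_add_iff (f := fun n => G n ^ p) i).2 hGsum
      exact this.congr fun j => by rw [hb', add_comm]
    have ha0 : ∀ j, 0 ≤ a j := fun j => Real.rpow_nonneg (hF0 _) _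
    have hb0 : ∀ j, 0 ≤ b j := fun j => Real.rpow_nonneg (hG0 _) _
    have han : Summable fun j => ‖a j‖ :=
      ha.congr fun j => (Real.norm_of_nonneg (ha0 j)).symm
    have hbn : Summable fun j => ‖b j‖ :=
      hb.congr fun j => (Real.norm_of_nonneg (hb0 j)).symm
    have hrange : ∀ m, T (i + m) = ∑ j ∈ Finset.range (m + 1), a j * b (m - j) := by
      intro m
      rw [hT]
      refine Finset.sum_nbij' (fun k => k - i) (fun j => i + j) ?_ ?_ ?_ ?_ ?_
      · intro k hk; simp only [Finset.mem_Icc] at hk; simp only [Finset.mem_range]; omega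
      · intro j hj; simp only [Finset.mem_range] at hj; simp only [Finset.mem_Icc]; omega
      · intro k hk; simp only [Finset.mem_Icc] at hk
        show i + (k - i) = k; omega
      · intro j hj; simp only [Finset.mem_range] at hj
        show i + j - i = j; omega
      · intro k hk
        simp only [Finset.mem_Icc] at hk
        have h1 : i + m - k + i = i + (m - (k - i)) := by omega
        have h2 : i + (k - i) = k := by omega
        rw [h1, Real.mul_rpow (hF0 _) (hG0 _)]
        show F k ^ p * G (i + (m - (k - i))) ^ p
          = F (i + (k - i)) ^ p * G (i + (m - (k - i))) ^ p
        rw [h2]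
    have hcs : Summable fun m => ∑ j ∈ Finset.range (m + 1), a j * b (m - j) :=
      (summable_norm_sum_mul_range_of_summable_norm han hbn).of_norm
    have hTsum : Summable T := by
      rw [← summable_nat_add_iff i]
      exact hcs.congr fun m => by rw [add_comm m i, hrange m]
    have hTz : ∀ n ∈ Finset.range i, T n = 0 := by
      intro n hn
      simp only [Finset.mem_range] at hn
      show ∑ k ∈ Finset.Icc i n, (F k * G (n - k + i)) ^ p = 0
      rw [Finset.Icc_eq_empty (by omega : ¬ i ≤ n), Finset.sum_empty]
    have htsumT : ∑' n, T n = (∑' j, a j) * ∑' j, b j := by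
      rw [← Summable.sum_add_tsum_nat_add i hTsum, Finset.sum_eq_zero hTz, zero_add,
        tsum_mul_tsum_eq_tsum_sum_range_of_summable_norm han hbn]
      exact tsum_congr fun m => by rw [add_comm m i]; exact hrange m
    have hPsum : Summable fun n => (‖dprodi δ i f g n‖ * β n) ^ p :=
      Summable.of_nonneg_of_le
        (fun n => Real.rpow_nonneg (mul_nonneg (norm_nonneg _) (hβ n).le) p)
        keyp (hTsum.mul_left E)
    refine ⟨part1, hPsum, ?_⟩
    have hA0 : 0 ≤ ∑' j, a j := tsum_nonneg ha0
    have hB0 : 0 ≤ ∑' j, b j := tsum_nonneg hb0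
    have hA : ∑' n, (‖f n‖ * β n) ^ p = ∑' j, a j := by
      rw [← Summable.sum_add_tsum_nat_add i hFsum, Finset.sum_eq_zero, zero_add]
      · exact tsum_congr fun j => by rw [add_comm j i]
      · intro n hn
        simp only [Finset.mem_range] at hn
        rw [hf n hn, norm_zero, zero_mul, Real.zero_rpow hp0']
    have hB : ∑' n, (‖g n‖ * β n) ^ p = ∑' j, b j := by
      rw [← Summable.sum_add_tsum_nat_add i hGsum, Finset.sum_eq_zero, zero_add]
      · exact tsum_congr fun j => by rw [add_comm j i]
      · intro n hn
        simp only [Finset.mem_range] at hn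
        rw [hg n hn, norm_zero, zero_mul, Real.zero_rpow hp0']
    have hfinal : ∑' n, (‖dprodi δ i f g n‖ * β n) ^ p ≤ E * ((∑' j, a j) * ∑' j, b j) := by
      calc ∑' n, (‖dprodi δ i f g n‖ * β n) ^ p ≤ ∑' n, E * T n :=
            Summable.tsum_le_tsum keyp hPsum (hTsum.mul_left E)
        _ = E * ∑' n, T n := tsum_mul_left
        _ = E * ((∑' j, a j) * ∑' j, b j) := by rw [htsumT]
    have hgoal := Real.rpow_le_rpow
      (tsum_nonneg fun n => Real.rpow_nonneg (mul_nonneg (norm_nonneg _) (hβ n).le) p)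
      hfinal hq.one_div_nonneg
    refine le_trans hgoal ?_
    have hEp : E ^ (1 / p) = D ^ (1 / q) := by
      rw [hE, ← Real.rpow_mul (Real.rpow_nonneg hD0 _), mul_one_div, div_self hp0',
        Real.rpow_one]
    rw [Real.mul_rpow hE0 (mul_nonneg hA0 hB0), Real.mul_rpow hA0 hB0, hEp, ← hA, ← hB]
  · -- commutativity
    intro f g
    funext n
    unfold dprodi
    by_cases h : n < i
    · simp [h]
    · simp only [h, if_neg]
      refine Finset.sum_nbij' (fun k => n - k + i) (fun k => n - k + i) ?_ ?_ ?_ ?_ ?_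
      · intro k hk; simp only [Finset.mem_Icc] at hk ⊢; omega
      · intro k hk; simp only [Finset.mem_Icc] at hk ⊢; omega
      · intro k hk; simp only [Finset.mem_Icc] at hk; show n - (n - k + i) + i = k; omega
      · intro k hk; simp only [Finset.mem_Icc] at hk; show n - (n - k + i) + i = k; omega
      · intro k hk
        simp only [Finset.mem_Icc] at hk
        have h1 : n - (n - k + i) + i = k := by omega
        rw [h1]
        ring
  · -- unit
    intro f hf
    funext n
    unfold dprodi
    by_cases h : n < i
    · simp [h, hf n h]
    · simp only [h, if_neg, if_false]
      rw [Finset.sum_eq_single i]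
      · have h1 : n - i + i = n := by omega
        rw [h1, if_pos rfl]
        have h2 : (δ i : ℂ) ≠ 0 := by exact_mod_cast (hδ i).ne'
        have h3 : (δ n : ℂ) ≠ 0 := by exact_mod_cast (hδ n).ne'
        push_cast
        field_simp
      · intro k hk hki
        simp [hki]
      · intro h2
        simp only [Finset.mem_Icc] at h2
        omega
end
end

section
/- Let i ∈ ℕ and let f : ℕ → ℂ be a sequence with f(m) = 0 for all m < i. Then for every n ∈ ℕ, the n-th power of M_{⋄,z} applied to f satisfies M_{⋄,z}^n(f) = (δ(n+i)/δ(1)^n) · (e_{n+i} ⋄_i f), where e_{n+i} is the sequence equal to 1 at index n+i and 0 elsewhere; equivalently, (M_{⋄,z}^n f)(m+n) = (δ(m+n)/(δ(m)δ(1)^n)) f(m) for all m, and (M_{⋄,z}^n f)(m) = 0 for m < n+i. -/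
open Filter Finset
open scoped ENNReal Topology

noncomputable section

/-- The sequence `eⱼ` which is `1` at index `j` and `0` elsewhere. -/
def eseq (j : ℕ) : ℕ → ℂ := fun n => if n = j then 1 else 0

lemma dprod_eseq_one (δ : ℕ → ℝ) (g : ℕ → ℂ) (m : ℕ) :
    dprod δ (eseq 1) g m =
      if m = 0 then 0 else ((δ m / (δ 1 * δ (m - 1)) : ℝ) : ℂ) * g (m - 1) := by
  unfold dprod
  rcases Nat.eq_zero_or_pos m with h | h
  · subst h; simp [eseq]
  · rw [if_neg h.ne', Finset.sum_eq_single 1]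
    · simp [eseq]
    · intro k hk hk1
      simp [eseq, hk1]
    · intro h1; exfalso; apply h1; simp; omega

lemma key (δ : ℕ → ℝ) (hδ : ∀ n, 0 < δ n) (i : ℕ) (f : ℕ → ℂ)
    (hf : ∀ m < i, f m = 0) (n : ℕ) :
    (∀ m, (dprod δ (eseq 1))^[n] f (m + n) =
      ((δ (m + n) / (δ m * δ 1 ^ n) : ℝ) : ℂ) * f m) ∧
    (∀ m < n + i, (dprod δ (eseq 1))^[n] f m = 0) := by
  induction n with
  | zero =>
    constructor
    · intro m
      simp only [Function.iterate_zero_apply, Nat.add_zero, pow_zero, mul_one,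
        div_self (hδ m).ne', Complex.ofReal_one, one_mul]
    · intro m hm
      exact hf m (by omega)
  | succ n ih =>
    constructor
    · intro m
      rw [Function.iterate_succ_apply', dprod_eseq_one, if_neg (by omega : ¬ m + (n+1) = 0)]
      have h1 : m + (n + 1) - 1 = m + n := by omega
      rw [h1, ih.1 m]
      have e1 : ((δ 1 : ℝ) : ℂ) ≠ 0 := by exact_mod_cast (hδ 1).ne'
      have e2 : ((δ (m+n) : ℝ) : ℂ) ≠ 0 := by exact_mod_cast (hδ (m+n)).ne'
      have e3 : ((δ m : ℝ) : ℂ) ≠ 0 := by exact_mod_cast (hδ m).ne'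
      have h2 : m + (n + 1) = m + n + 1 := by omega
      rw [h2]
      push_cast
      field_simp
      ring
    · intro m hm
      rw [Function.iterate_succ_apply', dprod_eseq_one]
      rcases Nat.eq_zero_or_pos m with h | h
      · rw [if_pos h]
      · rw [if_neg h.ne', ih.2 (m - 1) (by omega), mul_zero]

/-- for a sequence `f` supported on `{m ≥ i}` and every `n`,
`M_{⋄,z}^n(f) = (δ(n+i)/δ(1)^n)·(e_{n+i} ⋄ᵢ f)`; equivalently
`(M_{⋄,z}^n f)(m+n) = (δ(m+n)/(δ(m)δ(1)^n)) f(m)` for all `m`, and `(M_{⋄,z}^n f)(m) = 0`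
for `m < n+i`.  Here `M_{⋄,z} : f ↦ e₁⋄f`. -/
theorem stmt13 (β δ : ℕ → ℝ) (hβ : ∀ n, 0 < β n) (hδ : ∀ n, 0 < δ n)
    (hβ0 : β 0 = 1) (hδ0 : δ 0 = 1)
    (i : ℕ) (f : ℕ → ℂ) (hf : ∀ m < i, f m = 0) (n : ℕ) :
    ((dprod δ (eseq 1))^[n] f =
      fun m => ((δ (n + i) / δ 1 ^ n : ℝ) : ℂ) * dprodi δ i (eseq (n + i)) f m) ∧
    (∀ m : ℕ, (dprod δ (eseq 1))^[n] f (m + n) =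
      ((δ (m + n) / (δ m * δ 1 ^ n) : ℝ) : ℂ) * f m) ∧
    (∀ m < n + i, (dprod δ (eseq 1))^[n] f m = 0) := by
  obtain ⟨h1, h2⟩ := key δ hδ i f hf n
  refine ⟨?_, h1, h2⟩
  funext m
  have hsum : dprodi δ i (eseq (n + i)) f m =
      if n + i ≤ m then ((δ m / (δ (n+i) * δ (m - (n+i) + i)) : ℝ) : ℂ) * f (m - (n+i) + i)
      else 0 := by
    unfold dprodi
    rcases lt_or_ge m i with h | h
    · rw [if_pos h, if_neg (by omega)]
    · rw [if_neg (by omega)]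
      have hc : ∀ k ∈ Finset.Icc i m,
          ((δ m / (δ k * δ (m - k + i)) : ℝ) : ℂ) * eseq (n + i) k * f (m - k + i) =
          if k = n + i then ((δ m / (δ k * δ (m - k + i)) : ℝ) : ℂ) * f (m - k + i) else 0 := by
        intro k _
        by_cases hk : k = n + i <;> simp [eseq, hk]
      rw [Finset.sum_congr rfl hc, Finset.sum_ite_eq' (Finset.Icc i m) (n + i)]
      by_cases h' : n + i ≤ m
      · rw [if_pos (Finset.mem_Icc.mpr ⟨by omega, h'⟩), if_pos h']
      · rw [if_neg (fun hx => h' (Finset.mem_Icc.mp hx).2), if_neg h']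
  rw [hsum]
  rcases le_or_gt (n + i) m with h | h
  · rw [if_pos h]
    have hm : m - n + n = m := by omega
    have hmi : m - (n + i) + i = m - n := by omega
    have := h1 (m - n)
    rw [hm] at this
    rw [this, hmi]
    have e1 : ((δ 1 : ℝ) : ℂ) ≠ 0 := by exact_mod_cast (hδ 1).ne'
    have e2 : ((δ (n+i) : ℝ) : ℂ) ≠ 0 := by exact_mod_cast (hδ (n+i)).ne'
    have e3 : ((δ (m-n) : ℝ) : ℂ) ≠ 0 := by exact_mod_cast (hδ (m-n)).ne'
    push_cast
    field_simp
  · rw [if_neg (by omega), mul_zero]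
    exact h2 m h
end
end

section
/- Let 1 < p < ∞ with conjugate exponent q, let i ∈ ℕ, and assume C_i < ∞ and that ∑_{k=1}^M b^i_{M,k} → 0 as M → ∞. If h ∈ ℓ^p_i(β) satisfies h(i) = 0, then the operator M_{⋄_i,h} : ℓ^p_i(β) → ℓ^p_i(β), g ↦ h⋄_i g, is a compact operator. -/
open Filter Finset
open scoped ENNReal Topology

noncomputable section

/-- `bⁱ_{M,k} = sup_{n ≥ M+i+1} δ(n+k)β(n+k)/(δ(n)δ(k+i)β(n)β(k+i))`. -/
def bconsti (β δ : ℕ → ℝ) (i M k : ℕ) : ℝ :=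
  ⨆ n : ℕ, δ (M + i + 1 + n + k) * β (M + i + 1 + n + k) /
    (δ (M + i + 1 + n) * δ (k + i) * β (M + i + 1 + n) * β (k + i))

namespace Stmt15Aux

/-- The kernel `c(n,k) = δ(n)β(n)/(δ(k)δ(n-k+i)β(k)β(n-k+i))`. -/
def ck (β δ : ℕ → ℝ) (i n k : ℕ) : ℝ :=
  δ n * β n / (δ k * δ (n - k + i) * β k * β (n - k + i))

/-- The conjugated multiplication operator, at the level of plain sequences. -/
def F (β δ : ℕ → ℝ) (i : ℕ) (a g : ℕ → ℂ) : ℕ → ℂ := fun n =>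
  if n < i then 0
  else ∑ k ∈ Finset.Icc i n, ((ck β δ i n k : ℝ) : ℂ) * a k * g (n - k + i)

variable {β δ : ℕ → ℝ} {i : ℕ}

lemma ck_pos (hβ : ∀ n, 0 < β n) (hδ : ∀ n, 0 < δ n) (n k : ℕ) : 0 < ck β δ i n k :=
  div_pos (mul_pos (hδ n) (hβ n))
    (mul_pos (mul_pos (mul_pos (hδ k) (hδ _)) (hβ k)) (hβ _))

lemma F_eq (hβ : ∀ n, 0 < β n) (hδ : ∀ n, 0 < δ n) (h g : ℕ → ℂ) (n : ℕ) :
    (β n : ℂ) * dprodi δ i h (fun m => g m / (β m : ℂ)) n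
      = F β δ i (fun k => (β k : ℂ) * h k) g n := by
  unfold dprodi F
  by_cases hn : n < i
  · simp [hn]
  · simp only [if_neg hn]
    rw [Finset.mul_sum]
    refine Finset.sum_congr rfl fun k _ => ?_
    have h1 : ((β k : ℝ) : ℂ) ≠ 0 := by exact_mod_cast (hβ k).ne'
    have h2 : ((β (n - k + i) : ℝ) : ℂ) ≠ 0 := by exact_mod_cast (hβ (n - k + i)).ne'
    have h3 : ((δ k : ℝ) : ℂ) ≠ 0 := by exact_mod_cast (hδ k).ne'
    have h4 : ((δ (n - k + i) : ℝ) : ℂ) ≠ 0 := by exact_mod_cast (hδ (n - k + i)).ne'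
    unfold ck
    push_cast
    field_simp

lemma F_add_right (a g g' : ℕ → ℂ) (n : ℕ) :
    F β δ i a (fun m => g m + g' m) n = F β δ i a g n + F β δ i a g' n := by
  unfold F
  by_cases hn : n < i
  · simp [hn]
  · simp only [if_neg hn, ← Finset.sum_add_distrib]
    exact Finset.sum_congr rfl fun k _ => by ring

lemma F_smul_right (a g : ℕ → ℂ) (c : ℂ) (n : ℕ) :
    F β δ i a (fun m => c * g m) n = c * F β δ i a g n := by
  unfold F
  by_cases hn : n < i
  · simp [hn]
  · simp only [if_neg hn, Finset.mul_sum]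
    exact Finset.sum_congr rfl fun k _ => by ring

lemma F_sub_left (a a' g : ℕ → ℂ) (n : ℕ) :
    F β δ i (fun k => a k - a' k) g n = F β δ i a g n - F β δ i a' g n := by
  unfold F
  by_cases hn : n < i
  · simp [hn]
  · simp only [if_neg hn, ← Finset.sum_sub_distrib]
    exact Finset.sum_congr rfl fun k _ => by ring

lemma F_sum_left {ι : Type*} (s : Finset ι) (A : ι → ℕ → ℂ) (g : ℕ → ℂ) (n : ℕ) :
    F β δ i (fun k => ∑ j ∈ s, A j k) g n = ∑ j ∈ s, F β δ i (A j) g n := by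
  unfold F
  by_cases hn : n < i
  · simp [hn]
  · simp only [if_neg hn]
    rw [Finset.sum_comm]
    refine Finset.sum_congr rfl fun k _ => ?_
    rw [Finset.mul_sum, Finset.sum_mul]

lemma F_single (hβ : ∀ n, 0 < β n) (hδ : ∀ n, 0 < δ n) {j : ℕ} (hj : 1 ≤ j) (b g : ℕ → ℂ)
    (hb : ∀ k, k ≠ j + i → b k = 0) (n : ℕ) :
    F β δ i b g n =
      if j + i ≤ n then ((ck β δ i n (j + i) : ℝ) : ℂ) * b (j + i) * g (n - j) else 0 := by
  unfold F
  by_cases hn : n < i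
  · rw [if_pos hn, if_neg (by omega)]
  · rw [if_neg hn]
    by_cases hjn : j + i ≤ n
    · rw [if_pos hjn]
      rw [Finset.sum_eq_single_of_mem (j + i) (Finset.mem_Icc.2 ⟨by omega, hjn⟩)
        (fun k _ hk => by rw [hb k hk]; ring)]
      have hsub : n - (j + i) + i = n - j := by omega
      rw [hsub]
    · rw [if_neg hjn]
      exact Finset.sum_eq_zero fun k hk => by
        rw [hb k (by rcases Finset.mem_Icc.1 hk with ⟨_, h2⟩; omega)]; ring

/-- Convolution-type double sum estimate. -/
lemma conv_bound (i : ℕ) {u v : ℕ → ℝ} (hu : ∀ k, 0 ≤ u k) (hv : ∀ m, 0 ≤ v m)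
    (hus : Summable u) (hvs : Summable v) :
    Summable (fun n => ∑ k ∈ Finset.Icc i n, u k * v (n - k + i)) ∧
      ∑' n, (∑ k ∈ Finset.Icc i n, u k * v (n - k + i)) ≤ (∑' k, u k) * (∑' m, v m) := by
  have hG : ∀ n, 0 ≤ ∑ k ∈ Finset.Icc i n, u k * v (n - k + i) :=
    fun n => Finset.sum_nonneg fun k _ => mul_nonneg (hu k) (hv _)
  have key : ∀ N, ∑ n ∈ Finset.range N, ∑ k ∈ Finset.Icc i n, u k * v (n - k + i) ≤
      (∑' k, u k) * (∑' m, v m) := by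
    intro N
    rw [Finset.sum_sigma' (Finset.range N) (fun n => Finset.Icc i n)
      (fun n k => u k * v (n - k + i))]
    set A := (Finset.range N).sigma (fun n => Finset.Icc i n) with hA
    have hinj : ∀ x ∈ A, ∀ y ∈ A,
        (fun x : Σ _ : ℕ, ℕ => (x.2, x.1 - x.2 + i)) x =
          (fun x : Σ _ : ℕ, ℕ => (x.2, x.1 - x.2 + i)) y → x = y := by
      rintro ⟨n, k⟩ hx ⟨n', k'⟩ hy hxy
      simp only [Finset.mem_sigma, Finset.mem_range, Finset.mem_Icc, hA] at hx hy
      simp only [Prod.mk.injEq] at hxy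
      obtain ⟨h1, h2⟩ := hxy
      have : n = n' := by omega
      subst this; subst h1; rfl
    have himg : A.image (fun x : Σ _ : ℕ, ℕ => (x.2, x.1 - x.2 + i)) ⊆
        Finset.range N ×ˢ Finset.range (N + i) := by
      intro y hy
      rcases Finset.mem_image.1 hy with ⟨⟨n, k⟩, hx, rfl⟩
      simp only [Finset.mem_sigma, Finset.mem_range, Finset.mem_Icc, hA] at hx
      simp only [Finset.mem_product, Finset.mem_range]
      omega
    calc ∑ x ∈ A, u x.2 * v (x.1 - x.2 + i)
        = ∑ y ∈ A.image (fun x : Σ _ : ℕ, ℕ => (x.2, x.1 - x.2 + i)), u y.1 * v y.2 :=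
          (Finset.sum_image (f := fun y : ℕ × ℕ => u y.1 * v y.2) hinj).symm
      _ ≤ ∑ y ∈ Finset.range N ×ˢ Finset.range (N + i), u y.1 * v y.2 :=
          Finset.sum_le_sum_of_subset_of_nonneg himg
            (fun y _ _ => mul_nonneg (hu _) (hv _))
      _ = (∑ k ∈ Finset.range N, u k) * (∑ m ∈ Finset.range (N + i), v m) := by
          rw [Finset.sum_mul_sum]
          apply Finset.sum_product' (f := fun a b => u a * v b)
      _ ≤ (∑' k, u k) * (∑' m, v m) := by
          apply mul_le_mul (Summable.sum_le_tsum _ (fun k _ => hu k) hus)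
            (Summable.sum_le_tsum _ (fun m _ => hv m) hvs)
            (Finset.sum_nonneg fun m _ => hv m) (tsum_nonneg hu)
  exact ⟨summable_of_sum_range_le hG key, Summable.tsum_le_of_sum_range_le
    (summable_of_sum_range_le hG key) key⟩

variable {r q C : ℝ}

lemma hoelder_pointwise (hβ : ∀ n, 0 < β n) (hδ : ∀ n, 0 < δ n)
    (hrq : r.HolderConjugate q)
    (hC : ∀ n, ∑ k ∈ Finset.Icc i n, ck β δ i n k ^ q ≤ C) (a g : ℕ → ℂ) (n : ℕ) :
    ‖F β δ i a g n‖ ^ r ≤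
      (C ^ (1 / q)) ^ r * ∑ k ∈ Finset.Icc i n, ‖a k‖ ^ r * ‖g (n - k + i)‖ ^ r := by
  have hck : ∀ n k, (0:ℝ) ≤ ck β δ i n k := fun n k => (ck_pos hβ hδ n k).le
  have hC0 : 0 ≤ C :=
    le_trans (Finset.sum_nonneg fun k _ => Real.rpow_nonneg (hck 0 k) q) (hC 0)
  have hS0 : 0 ≤ ∑ k ∈ Finset.Icc i n, ‖a k‖ ^ r * ‖g (n - k + i)‖ ^ r :=
    Finset.sum_nonneg fun k _ =>
      mul_nonneg (Real.rpow_nonneg (norm_nonneg _) r) (Real.rpow_nonneg (norm_nonneg _) r)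
  have hCq0 : 0 ≤ (C ^ (1 / q)) ^ r := Real.rpow_nonneg (Real.rpow_nonneg hC0 _) r
  by_cases hn : n < i
  · simp only [F, if_pos hn, norm_zero, Real.zero_rpow hrq.ne_zero]
    exact mul_nonneg hCq0 hS0
  · have h1 : ‖F β δ i a g n‖ ≤
        ∑ k ∈ Finset.Icc i n, ck β δ i n k * (‖a k‖ * ‖g (n - k + i)‖) := by
      simp only [F, if_neg hn]
      refine (norm_sum_le _ _).trans (le_of_eq (Finset.sum_congr rfl fun k _ => ?_))
      rw [norm_mul, norm_mul, Complex.norm_real, Real.norm_eq_abs,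
        abs_of_nonneg (hck n k)]
      ring
    have h2 := Real.inner_le_Lp_mul_Lq_of_nonneg (Finset.Icc i n)
      (f := fun k => ck β δ i n k)
      (g := fun k => ‖a k‖ * ‖g (n - k + i)‖) hrq.symm
      (fun k _ => hck n k)
      (fun k _ => mul_nonneg (norm_nonneg _) (norm_nonneg _))
    have h3 : (∑ k ∈ Finset.Icc i n, ck β δ i n k ^ q) ^ (1 / q) ≤ C ^ (1 / q) :=
      Real.rpow_le_rpow (Finset.sum_nonneg fun k _ => Real.rpow_nonneg (hck n k) q)
        (hC n) hrq.symm.one_div_nonneg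
    have h4 : ∑ k ∈ Finset.Icc i n, (‖a k‖ * ‖g (n - k + i)‖) ^ r =
        ∑ k ∈ Finset.Icc i n, ‖a k‖ ^ r * ‖g (n - k + i)‖ ^ r :=
      Finset.sum_congr rfl fun k _ => Real.mul_rpow (norm_nonneg _) (norm_nonneg _)
    have h5 : ‖F β δ i a g n‖ ≤ C ^ (1 / q) *
        (∑ k ∈ Finset.Icc i n, ‖a k‖ ^ r * ‖g (n - k + i)‖ ^ r) ^ (1 / r) := by
      refine h1.trans (h2.trans ?_)
      rw [h4]
      exact mul_le_mul_of_nonneg_right h3 (Real.rpow_nonneg hS0 _)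
    calc ‖F β δ i a g n‖ ^ r
        ≤ (C ^ (1 / q) *
            (∑ k ∈ Finset.Icc i n, ‖a k‖ ^ r * ‖g (n - k + i)‖ ^ r) ^ (1 / r)) ^ r :=
          Real.rpow_le_rpow (norm_nonneg _) h5 hrq.nonneg
      _ = (C ^ (1 / q)) ^ r *
            ((∑ k ∈ Finset.Icc i n, ‖a k‖ ^ r * ‖g (n - k + i)‖ ^ r) ^ (1 / r)) ^ r :=
          Real.mul_rpow (Real.rpow_nonneg hC0 _) (Real.rpow_nonneg hS0 _)
      _ = (C ^ (1 / q)) ^ r * ∑ k ∈ Finset.Icc i n, ‖a k‖ ^ r * ‖g (n - k + i)‖ ^ r := by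
          rw [← Real.rpow_mul hS0, one_div_mul_cancel hrq.ne_zero, Real.rpow_one]

lemma summable_F (hβ : ∀ n, 0 < β n) (hδ : ∀ n, 0 < δ n)
    (hrq : r.HolderConjugate q)
    (hC : ∀ n, ∑ k ∈ Finset.Icc i n, ck β δ i n k ^ q ≤ C) (a g : ℕ → ℂ)
    (ha : Summable fun k => ‖a k‖ ^ r) (hg : Summable fun m => ‖g m‖ ^ r) :
    Summable (fun n => ‖F β δ i a g n‖ ^ r) ∧
      ∑' n, ‖F β δ i a g n‖ ^ r ≤
        (C ^ (1 / q)) ^ r * ((∑' k, ‖a k‖ ^ r) * (∑' m, ‖g m‖ ^ r)) := by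
  obtain ⟨hGs, hGt⟩ := conv_bound i
    (u := fun k => ‖a k‖ ^ r) (v := fun m => ‖g m‖ ^ r)
    (fun k => Real.rpow_nonneg (norm_nonneg _) r)
    (fun m => Real.rpow_nonneg (norm_nonneg _) r) ha hg
  have hck : ∀ n k, (0:ℝ) ≤ ck β δ i n k := fun n k => (ck_pos hβ hδ n k).le
  have hC0 : 0 ≤ C :=
    le_trans (Finset.sum_nonneg fun k _ => Real.rpow_nonneg (hck 0 k) q) (hC 0)
  have hCq0 : 0 ≤ (C ^ (1 / q)) ^ r := Real.rpow_nonneg (Real.rpow_nonneg hC0 _) r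
  have hpt := hoelder_pointwise hβ hδ hrq hC a g
  have hsum : Summable (fun n => ‖F β δ i a g n‖ ^ r) :=
    Summable.of_nonneg_of_le (fun n => Real.rpow_nonneg (norm_nonneg _) r) hpt
      (hGs.mul_left _)
  refine ⟨hsum, ?_⟩
  refine le_trans (Summable.tsum_le_tsum hpt hsum (hGs.mul_left _)) ?_
  rw [tsum_mul_left]
  exact mul_le_mul_of_nonneg_left hGt hCq0

section Op

variable (β δ) (i) (p : ℝ≥0∞) [Fact (1 ≤ p)] (q C : ℝ)

/-- The multiplication-type operator, as a linear map. -/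
def opL (hβ : ∀ n, 0 < β n) (hδ : ∀ n, 0 < δ n)
    (hrq : p.toReal.HolderConjugate q)
    (hC : ∀ n, ∑ k ∈ Finset.Icc i n, ck β δ i n k ^ q ≤ C)
    (a : ℕ → ℂ) (ha : Summable fun k => ‖a k‖ ^ p.toReal) :
    lp (fun _ : ℕ => ℂ) p →ₗ[ℂ] lp (fun _ : ℕ => ℂ) p where
  toFun g := ⟨F β δ i a ⇑g,
    memℓp_gen (summable_F hβ hδ hrq hC a ⇑g ha ((lp.memℓp g).summable hrq.pos)).1⟩
  map_add' g g' := by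
    apply Subtype.ext
    apply funext
    intro n
    have hco : ⇑(g + g') = fun m => g m + g' m := lp.coeFn_add g g'
    show F β δ i a ⇑(g + g') n = F β δ i a ⇑g n + F β δ i a ⇑g' n
    rw [hco, F_add_right]
  map_smul' c g := by
    apply Subtype.ext
    apply funext
    intro n
    have hco : ⇑(c • g) = fun m => c * g m := lp.coeFn_smul c g
    show F β δ i a ⇑(c • g) n = c * F β δ i a ⇑g n
    rw [hco, F_smul_right]

lemma opL_bound (hβ : ∀ n, 0 < β n) (hδ : ∀ n, 0 < δ n)
    (hrq : p.toReal.HolderConjugate q)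
    (hC : ∀ n, ∑ k ∈ Finset.Icc i n, ck β δ i n k ^ q ≤ C)
    (a : ℕ → ℂ) (ha : Summable fun k => ‖a k‖ ^ p.toReal) (g : lp (fun _ : ℕ => ℂ) p) :
    ‖opL β δ i p q C hβ hδ hrq hC a ha g‖ ≤
      C ^ (1 / q) * (∑' k, ‖a k‖ ^ p.toReal) ^ (1 / p.toReal) * ‖g‖ := by
  have hr0 : 0 < p.toReal := hrq.pos
  have hck : ∀ n k, (0:ℝ) ≤ ck β δ i n k := fun n k => (ck_pos hβ hδ n k).le
  have hC0 : 0 ≤ C :=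
    le_trans (Finset.sum_nonneg fun k _ => Real.rpow_nonneg (hck 0 k) q) (hC 0)
  have hSa0 : 0 ≤ ∑' k, ‖a k‖ ^ p.toReal :=
    tsum_nonneg fun k => Real.rpow_nonneg (norm_nonneg _) _
  have hb0 : 0 ≤ C ^ (1 / q) * (∑' k, ‖a k‖ ^ p.toReal) ^ (1 / p.toReal) * ‖g‖ :=
    mul_nonneg (mul_nonneg (Real.rpow_nonneg hC0 _) (Real.rpow_nonneg hSa0 _))
      (norm_nonneg g)
  apply lp.norm_le_of_tsum_le hr0 hb0
  have hexp : (C ^ (1 / q) * (∑' k, ‖a k‖ ^ p.toReal) ^ (1 / p.toReal) * ‖g‖) ^ p.toReal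
      = (C ^ (1 / q)) ^ p.toReal * ((∑' k, ‖a k‖ ^ p.toReal) * ‖g‖ ^ p.toReal) := by
    rw [Real.mul_rpow (mul_nonneg (Real.rpow_nonneg hC0 _) (Real.rpow_nonneg hSa0 _))
      (norm_nonneg g), Real.mul_rpow (Real.rpow_nonneg hC0 _) (Real.rpow_nonneg hSa0 _),
      ← Real.rpow_mul hSa0, one_div_mul_cancel hr0.ne', Real.rpow_one, mul_assoc]
  rw [hexp]
  have h2 := (summable_F hβ hδ hrq hC a ⇑g ha ((lp.memℓp g).summable hr0)).2
  rwa [lp.norm_rpow_eq_tsum hr0 g]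

/-- The multiplication-type operator on `lp`. -/
def opA (hβ : ∀ n, 0 < β n) (hδ : ∀ n, 0 < δ n)
    (hrq : p.toReal.HolderConjugate q)
    (hC : ∀ n, ∑ k ∈ Finset.Icc i n, ck β δ i n k ^ q ≤ C)
    (a : ℕ → ℂ) (ha : Summable fun k => ‖a k‖ ^ p.toReal) :
    lp (fun _ : ℕ => ℂ) p →L[ℂ] lp (fun _ : ℕ => ℂ) p :=
  LinearMap.mkContinuous (opL β δ i p q C hβ hδ hrq hC a ha)
    (C ^ (1 / q) * (∑' k, ‖a k‖ ^ p.toReal) ^ (1 / p.toReal))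
    (opL_bound β δ i p q C hβ hδ hrq hC a ha)

lemma opA_apply (hβ : ∀ n, 0 < β n) (hδ : ∀ n, 0 < δ n)
    (hrq : p.toReal.HolderConjugate q)
    (hC : ∀ n, ∑ k ∈ Finset.Icc i n, ck β δ i n k ^ q ≤ C)
    (a : ℕ → ℂ) (ha : Summable fun k => ‖a k‖ ^ p.toReal) (g : lp (fun _ : ℕ => ℂ) p) :
    ⇑(opA β δ i p q C hβ hδ hrq hC a ha g) = F β δ i a ⇑g := rfl

lemma opA_norm_le (hβ : ∀ n, 0 < β n) (hδ : ∀ n, 0 < δ n)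
    (hrq : p.toReal.HolderConjugate q)
    (hC : ∀ n, ∑ k ∈ Finset.Icc i n, ck β δ i n k ^ q ≤ C)
    (a : ℕ → ℂ) (ha : Summable fun k => ‖a k‖ ^ p.toReal) :
    ‖opA β δ i p q C hβ hδ hrq hC a ha‖ ≤
      C ^ (1 / q) * (∑' k, ‖a k‖ ^ p.toReal) ^ (1 / p.toReal) := by
  have hck : ∀ n k, (0:ℝ) ≤ ck β δ i n k := fun n k => (ck_pos hβ hδ n k).le
  have hC0 : 0 ≤ C :=
    le_trans (Finset.sum_nonneg fun k _ => Real.rpow_nonneg (hck 0 k) q) (hC 0)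
  have hSa0 : 0 ≤ ∑' k, ‖a k‖ ^ p.toReal :=
    tsum_nonneg fun k => Real.rpow_nonneg (norm_nonneg _) _
  exact LinearMap.mkContinuous_norm_le _
    (mul_nonneg (Real.rpow_nonneg hC0 _) (Real.rpow_nonneg hSa0 _)) _

/-- The rank-one operator `g ↦ g k • e_k`, as a linear map. -/
def rkOneL (k : ℕ) : lp (fun _ : ℕ => ℂ) p →ₗ[ℂ] lp (fun _ : ℕ => ℂ) p where
  toFun g := g k • lp.single p k (1 : ℂ)
  map_add' g g' := by
    have hc : (g + g') k = g k + g' k := by rw [lp.coeFn_add]; rfl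
    dsimp only
    rw [hc, add_smul]
  map_smul' c g := by
    have hc : (c • g) k = c * g k := by rw [lp.coeFn_smul]; rfl
    dsimp only
    rw [hc, smul_smul]
    rfl

/-- The rank-one operator `g ↦ g k • e_k`. -/
lemma rkOneL_bound (k : ℕ) (g : lp (fun _ : ℕ => ℂ) p) :
    ‖rkOneL p k g‖ ≤ ‖lp.single (E := fun _ : ℕ => ℂ) p k (1 : ℂ)‖ * ‖g‖ := by
  have hp0 : p ≠ 0 := (zero_lt_one.trans_le (Fact.out : 1 ≤ p)).ne'
  have hh : rkOneL p k g = g k • lp.single p k (1 : ℂ) := rfl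
  rw [hh, norm_smul, mul_comm]
  exact mul_le_mul_of_nonneg_left (lp.norm_apply_le_norm hp0 g k) (norm_nonneg _)

/-- The rank-one operator `g ↦ g k • e_k`. -/
def rkOne (k : ℕ) : lp (fun _ : ℕ => ℂ) p →L[ℂ] lp (fun _ : ℕ => ℂ) p :=
  LinearMap.mkContinuous (rkOneL p k) ‖lp.single (E := fun _ : ℕ => ℂ) p k (1 : ℂ)‖ (rkOneL_bound p k)

lemma rkOne_apply (k : ℕ) (g : lp (fun _ : ℕ => ℂ) p) (n : ℕ) :
    rkOne p k g n = if n = k then g k else 0 := by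
  show (g k • lp.single (E := fun _ : ℕ => ℂ) p k (1 : ℂ)) n = _
  rw [congrFun (lp.coeFn_smul (g k) (lp.single (E := fun _ : ℕ => ℂ) p k (1 : ℂ))) n]
  by_cases hnk : n = k
  · subst hnk
    simp [lp.single_apply_self]
  · simp [lp.single_apply_ne p k _ hnk, hnk]

lemma isCompactOperator_rkOne (k : ℕ) : IsCompactOperator ⇑(rkOne p k) := by
  have hp0 : p ≠ 0 := (zero_lt_one.trans_le (Fact.out : 1 ≤ p)).ne'
  refine ⟨(fun c : ℂ => c • lp.single (E := fun _ : ℕ => ℂ) p k (1 : ℂ)) '' Metric.closedBall 0 1, ?_, ?_⟩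
  · exact (isCompact_closedBall 0 1).image (continuous_id.smul continuous_const)
  · apply Filter.mem_of_superset (Metric.closedBall_mem_nhds (0 : lp (fun _ : ℕ => ℂ) p)
      zero_lt_one)
    intro g hg
    refine ⟨g k, ?_, rfl⟩
    rw [Metric.mem_closedBall, dist_zero_right]
    exact (lp.norm_apply_le_norm hp0 g k).trans
      (by simpa [dist_zero_right] using hg)

/-- Slice truncation of a symbol. -/
def aKf (a : ℕ → ℂ) (i K : ℕ) : ℕ → ℂ := fun k => if k ≤ K + i then a k else 0

/-- Tail truncation of a symbol. -/
def atlf (a : ℕ → ℂ) (i K : ℕ) : ℕ → ℂ := fun k => if k ≤ K + i then 0 else a k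

/-- Single-coordinate restriction of a symbol. -/
def ajf (a : ℕ → ℂ) (i j : ℕ) : ℕ → ℂ := fun k => if k = j + i then a k else 0

lemma shift_summable {w : ℕ → ℝ} (hw : Summable w) (j : ℕ) :
    Summable (fun n => if n < j then (0:ℝ) else w (n - j)) ∧
      ∑' n, (if n < j then (0:ℝ) else w (n - j)) = ∑' m, w m := by
  have hinj : Function.Injective (fun m : ℕ => m + j) := fun x y hxy => by
    simpa using hxy
  have hzero : ∀ n ∉ Set.range (fun m : ℕ => m + j),
      (if n < j then (0:ℝ) else w (n - j)) = 0 := by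
    intro n hn
    rw [if_pos]
    by_contra hnj
    exact hn ⟨n - j, show n - j + j = n by omega⟩
  have hcomp : ∀ m, (if m + j < j then (0:ℝ) else w (m + j - j)) = w m := by
    intro m; rw [if_neg (by omega)]; congr 1; omega
  constructor
  · exact (Function.Injective.summable_iff hinj hzero).1 (hw.congr fun m => (hcomp m).symm)
  · rw [← Function.Injective.tsum_eq hinj
      (f := fun n => if n < j then (0:ℝ) else w (n - j))
      (fun n hn => by by_contra hr; exact hn (hzero n hr))]
    exact tsum_congr hcomp

lemma ck_le_bconsti {β δ : ℕ → ℝ} {i : ℕ} (hβ : ∀ n, 0 < β n) (hδ : ∀ n, 0 < δ n)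
    {M j n : ℕ}
    (hbfin : BddAbove (Set.range fun m : ℕ =>
      δ (M + i + 1 + m + j) * β (M + i + 1 + m + j) /
        (δ (M + i + 1 + m) * δ (j + i) * β (M + i + 1 + m) * β (j + i))))
    (hn : M + i + 1 + j ≤ n) :
    ck β δ i n (j + i) ≤ bconsti β δ i M j := by
  have h1 : M + i + 1 + (n - (M + i + 1 + j)) + j = n := by omega
  have h2 : M + i + 1 + (n - (M + i + 1 + j)) = n - j := by omega
  have h3 : n - (j + i) + i = n - j := by omega
  have key : ck β δ i n (j + i) =
      δ (M + i + 1 + (n - (M + i + 1 + j)) + j) * β (M + i + 1 + (n - (M + i + 1 + j)) + j) /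
        (δ (M + i + 1 + (n - (M + i + 1 + j))) * δ (j + i) *
          β (M + i + 1 + (n - (M + i + 1 + j))) * β (j + i)) := by
    rw [h1, h2]
    unfold ck
    rw [h3]
    congr 1
    ring
  rw [key]
  exact le_ciSup hbfin (n - (M + i + 1 + j))

lemma bconsti_nonneg {β δ : ℕ → ℝ} {i : ℕ} (hβ : ∀ n, 0 < β n) (hδ : ∀ n, 0 < δ n)
    {M j : ℕ}
    (hbfin : BddAbove (Set.range fun m : ℕ =>
      δ (M + i + 1 + m + j) * β (M + i + 1 + m + j) /
        (δ (M + i + 1 + m) * δ (j + i) * β (M + i + 1 + m) * β (j + i)))) :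
    0 ≤ bconsti β δ i M j := by
  refine le_trans ?_ (le_ciSup hbfin 0)
  exact div_nonneg (mul_nonneg (hδ _).le (hβ _).le)
    (mul_nonneg (mul_nonneg (mul_nonneg (hδ _).le (hδ _).le) (hβ _).le) (hβ _).le)

lemma isCompactOperator_finset_sum {ι : Type*} (p : ℝ≥0∞) [Fact (1 ≤ p)] (s : Finset ι)
    (Φ : ι → (lp (fun _ : ℕ => ℂ) p →L[ℂ] lp (fun _ : ℕ => ℂ) p))
    (hΦ : ∀ j ∈ s, IsCompactOperator ⇑(Φ j)) :
    IsCompactOperator ⇑(∑ j ∈ s, Φ j) := by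
  classical
  induction s using Finset.induction_on with
  | empty =>
    rw [Finset.sum_empty]
    refine ⟨{0}, isCompact_singleton, ?_⟩
    have hpre : (⇑(0 : lp (fun _ : ℕ => ℂ) p →L[ℂ] lp (fun _ : ℕ => ℂ) p))⁻¹' {0} =
        Set.univ := by
      ext x; simp
    rw [hpre]
    exact Filter.univ_mem
  | @insert b t hb ih =>
    rw [Finset.sum_insert hb, ContinuousLinearMap.coe_add']
    exact (hΦ b (Finset.mem_insert_self b t)).add
      (ih fun j hj => hΦ j (Finset.mem_insert_of_mem hj))

end Op

end Stmt15Aux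

open Stmt15Aux

/-- under the identification `f ↦ (β(n)f(n))ₙ` of `ℓ^p(β)` (`1 < p < ∞`)
with the standard `lp` space, assume `C_i < ∞` and `∑_{k=1}^M bⁱ_{M,k} → 0` as `M → ∞`.
If `h ∈ ℓ^p_i(β)` satisfies `h(i) = 0`, then the operator `M_{⋄ᵢ,h} : g ↦ h⋄ᵢg` on
`ℓ^p_i(β)` is compact.  (Note that `h⋄ᵢg` only depends on the coordinates `g(n)`, `n ≥ i`,
and is supported on `{n ≥ i}`.) -/
theorem stmt15 (β δ : ℕ → ℝ) (hβ : ∀ n, 0 < β n) (hδ : ∀ n, 0 < δ n)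
    (hβ0 : β 0 = 1) (hδ0 : δ 0 = 1)
    (p : ℝ≥0∞) [Fact (1 ≤ p)] (hp1 : 1 < p) (hp : p ≠ ∞)
    (q : ℝ) (hpq : 1 / p.toReal + 1 / q = 1) (i : ℕ)
    (hC : BddAbove (Set.range fun m : ℕ =>
      ∑ k ∈ Finset.Icc i (i + m),
        (δ (i + m) * β (i + m) /
          (δ k * δ (i + m - k + i) * β k * β (i + m - k + i))) ^ q))
    (hbfin : ∀ M k : ℕ, BddAbove (Set.range fun n : ℕ =>
      δ (M + i + 1 + n + k) * β (M + i + 1 + n + k) /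
        (δ (M + i + 1 + n) * δ (k + i) * β (M + i + 1 + n) * β (k + i))))
    (hbto : Tendsto (fun M : ℕ => ∑ k ∈ Finset.Icc 1 M, bconsti β δ i M k) atTop (𝓝 0))
    (h : ℕ → ℂ) (hmem : Memℓp (fun n => (β n : ℂ) * h n) p)
    (hsupp : ∀ n < i, h n = 0) (hi : h i = 0) :
    ∃ T : lp (fun _ : ℕ => ℂ) p →L[ℂ] lp (fun _ : ℕ => ℂ) p,
      (∀ g : lp (fun _ : ℕ => ℂ) p, ∀ n : ℕ,
        T g n = (β n : ℂ) * dprodi δ i h (fun m => g m / (β m : ℂ)) n) ∧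
      IsCompactOperator T := by
  classical
  have hr1 : 1 < p.toReal := by
    have h1 := (ENNReal.toReal_lt_toReal ENNReal.one_ne_top hp).2 hp1
    simpa using h1
  have hr0 : 0 < p.toReal := zero_lt_one.trans hr1
  have hrq : p.toReal.HolderConjugate q := Real.holderConjugate_iff.mpr ⟨hr1, by
    rw [← one_div, ← one_div]; exact hpq⟩
  set C := sSup (Set.range fun m : ℕ => ∑ k ∈ Finset.Icc i (i + m),
    (δ (i + m) * β (i + m) /
      (δ k * δ (i + m - k + i) * β k * β (i + m - k + i))) ^ q) with hCdef
  have hrow : ∀ n, ∑ k ∈ Finset.Icc i n, ck β δ i n k ^ q ≤ C := by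
    intro n
    rcases le_or_gt i n with hn | hn
    · have h1 : ∑ k ∈ Finset.Icc i (i + (n - i)),
          (δ (i + (n - i)) * β (i + (n - i)) /
            (δ k * δ (i + (n - i) - k + i) * β k * β (i + (n - i) - k + i))) ^ q ≤ C :=
        le_csSup hC ⟨n - i, rfl⟩
      have h2 : i + (n - i) = n := by omega
      rw [h2] at h1
      simpa only [ck] using h1
    · rw [Finset.Icc_eq_empty (by omega), Finset.sum_empty]
      refine le_trans ?_ (le_csSup hC ⟨0, rfl⟩)
      exact Finset.sum_nonneg fun k _ => Real.rpow_nonneg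
        (div_nonneg (mul_nonneg (hδ _).le (hβ _).le)
          (mul_nonneg (mul_nonneg (mul_nonneg (hδ _).le (hδ _).le) (hβ _).le) (hβ _).le)) q
  set a : ℕ → ℂ := fun k => (β k : ℂ) * h k with hadef
  have ha : Summable fun k => ‖a k‖ ^ p.toReal := hmem.summable hr0
  have ha0 : ∀ k, k ≤ i → a k = 0 := by
    intro k hk
    rcases lt_or_eq_of_le hk with hk' | hk'
    · simp [hadef, hsupp k hk']
    · subst hk'; simp [hadef, hi]
  have hsummand : ∀ b : ℕ → ℂ, (∀ k, b k = a k ∨ b k = 0) →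
      Summable fun k => ‖b k‖ ^ p.toReal := by
    intro b hb
    refine Summable.of_nonneg_of_le
      (fun k => Real.rpow_nonneg (norm_nonneg _) _) (fun k => ?_) ha
    rcases hb k with hbk | hbk
    · simp [hbk]
    · rw [hbk, norm_zero, Real.zero_rpow hr0.ne']
      exact Real.rpow_nonneg (norm_nonneg _) _
  have haK : ∀ K, Summable fun k => ‖aKf a i K k‖ ^ p.toReal := fun K =>
    hsummand _ fun k => by
      by_cases hk : k ≤ K + i <;> simp [aKf, hk]
  have hatl : ∀ K, Summable fun k => ‖atlf a i K k‖ ^ p.toReal := fun K =>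
    hsummand _ fun k => by
      by_cases hk : k ≤ K + i <;> simp [atlf, hk]
  have haj : ∀ j, Summable fun k => ‖ajf a i j k‖ ^ p.toReal := fun j =>
    hsummand _ fun k => by
      by_cases hk : k = j + i <;> simp [ajf, hk]
  refine ⟨opA β δ i p q C hβ hδ hrq hrow a ha, fun g n => ?_, ?_⟩
  · have h1 : (opA β δ i p q C hβ hδ hrq hrow a ha g) n = F β δ i a (⇑g) n := rfl
    rw [h1, hadef, ← F_eq hβ hδ h (⇑g) n]
  -- compactness
  have hWcompact : ∀ j : ℕ, 1 ≤ j →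
      IsCompactOperator ⇑(opA β δ i p q C hβ hδ hrq hrow (ajf a i j) (haj j)) := by
    intro j hj
    set W := opA β δ i p q C hβ hδ hrq hrow (ajf a i j) (haj j) with hWdef
    set A : ℕ → (lp (fun _ : ℕ => ℂ) p →L[ℂ] lp (fun _ : ℕ => ℂ) p) :=
      fun M => ∑ k ∈ Finset.range (M + i + j + 1), (rkOne p k).comp W with hAdef
    have hb0 : ∀ M, 0 ≤ bconsti β δ i M j := fun M => bconsti_nonneg hβ hδ (hbfin M j)
    have hAc : ∀ M, IsCompactOperator ⇑(A M) := by
      intro M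
      apply isCompactOperator_finset_sum
      intro k _
      rw [ContinuousLinearMap.coe_comp']
      exact (isCompactOperator_rkOne p k).comp_clm W
    have hFW : ∀ (g : lp (fun _ : ℕ => ℂ) p) (n : ℕ), F β δ i (ajf a i j) (⇑g) n =
        if j + i ≤ n then ((ck β δ i n (j + i) : ℝ) : ℂ) * ajf a i j (j + i) * g (n - j)
        else 0 := fun g n =>
      F_single hβ hδ hj (ajf a i j) (⇑g)
        (fun k hk => by simp only [ajf]; rw [if_neg hk]) n
    have hajj : ajf a i j (j + i) = a (j + i) := by simp [ajf]
    have hdiff : ∀ M (g : lp (fun _ : ℕ => ℂ) p),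
        ‖W g - A M g‖ ≤ bconsti β δ i M j * ‖a (j + i)‖ * ‖g‖ := by
      intro M g
      have hε0 : 0 ≤ bconsti β δ i M j * ‖a (j + i)‖ :=
        mul_nonneg (hb0 M) (norm_nonneg _)
      have hval : ∀ n, (⇑(W g - A M g)) n =
          if n ≤ M + i + j then 0 else F β δ i (ajf a i j) (⇑g) n := by
        intro n
        rw [lp.coeFn_sub, Pi.sub_apply]
        have hAg : (⇑(A M g)) n = if n ≤ M + i + j then (⇑(W g)) n else 0 := by
          rw [hAdef]
          rw [ContinuousLinearMap.sum_apply, lp.coeFn_sum, Finset.sum_apply]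
          simp only [ContinuousLinearMap.comp_apply, rkOne_apply]
          rw [Finset.sum_ite_eq (Finset.range (M + i + j + 1)) n (fun k => (⇑(W g)) k)]
          simp [Finset.mem_range, Nat.lt_succ_iff]
        rw [hAg]
        by_cases hn : n ≤ M + i + j
        · rw [if_pos hn, if_pos hn, sub_self]
        · rw [if_neg hn, if_neg hn, sub_zero]
          rfl
      obtain ⟨hvs, hvt⟩ := shift_summable ((lp.memℓp g).summable hr0) j
      have hus : Summable fun n =>
          (bconsti β δ i M j * ‖a (j + i)‖) ^ p.toReal *
            (if n < j then (0:ℝ) else ‖(⇑g) (n - j)‖ ^ p.toReal) := hvs.mul_left _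
      have hut : ∑' n, (bconsti β δ i M j * ‖a (j + i)‖) ^ p.toReal *
          (if n < j then (0:ℝ) else ‖(⇑g) (n - j)‖ ^ p.toReal) =
          (bconsti β δ i M j * ‖a (j + i)‖) ^ p.toReal * ‖g‖ ^ p.toReal := by
        rw [tsum_mul_left, hvt, ← lp.norm_rpow_eq_tsum hr0 g]
      have hptw : ∀ n, ‖(⇑(W g - A M g)) n‖ ^ p.toReal ≤
          (bconsti β δ i M j * ‖a (j + i)‖) ^ p.toReal *
            (if n < j then (0:ℝ) else ‖(⇑g) (n - j)‖ ^ p.toReal) := by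
        intro n
        rw [hval n]
        by_cases hn : n ≤ M + i + j
        · rw [if_pos hn, norm_zero, Real.zero_rpow hr0.ne']
          refine mul_nonneg (Real.rpow_nonneg hε0 _) ?_
          by_cases hnj : n < j <;> simp [hnj, Real.rpow_nonneg]
        · rw [if_neg hn, hFW g n, if_pos (by omega), if_neg (show ¬ n < j by omega)]
          have hnorm : ‖((ck β δ i n (j + i) : ℝ) : ℂ) * ajf a i j (j + i) * g (n - j)‖ =
              ck β δ i n (j + i) * ‖a (j + i)‖ * ‖(⇑g) (n - j)‖ := by
            rw [norm_mul, norm_mul, Complex.norm_real, Real.norm_eq_abs,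
              abs_of_nonneg (ck_pos hβ hδ _ _).le, hajj]
          rw [hnorm]
          have hle : ck β δ i n (j + i) * ‖a (j + i)‖ * ‖(⇑g) (n - j)‖ ≤
              bconsti β δ i M j * ‖a (j + i)‖ * ‖(⇑g) (n - j)‖ :=
            mul_le_mul_of_nonneg_right
              (mul_le_mul_of_nonneg_right
                (ck_le_bconsti hβ hδ (hbfin M j) (by omega)) (norm_nonneg _))
              (norm_nonneg _)
          calc (ck β δ i n (j + i) * ‖a (j + i)‖ * ‖(⇑g) (n - j)‖) ^ p.toReal
              ≤ (bconsti β δ i M j * ‖a (j + i)‖ * ‖(⇑g) (n - j)‖) ^ p.toReal :=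
                Real.rpow_le_rpow
                  (mul_nonneg (mul_nonneg (ck_pos hβ hδ _ _).le (norm_nonneg _))
                    (norm_nonneg _)) hle hr0.le
            _ = (bconsti β δ i M j * ‖a (j + i)‖) ^ p.toReal *
                  ‖(⇑g) (n - j)‖ ^ p.toReal :=
                Real.mul_rpow hε0 (norm_nonneg _)
      apply lp.norm_le_of_tsum_le hr0 (mul_nonneg hε0 (norm_nonneg g))
      calc ∑' n, ‖(⇑(W g - A M g)) n‖ ^ p.toReal
          ≤ ∑' n, (bconsti β δ i M j * ‖a (j + i)‖) ^ p.toReal *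
              (if n < j then (0:ℝ) else ‖(⇑g) (n - j)‖ ^ p.toReal) :=
            Summable.tsum_le_tsum hptw ((lp.memℓp _).summable hr0) hus
        _ = (bconsti β δ i M j * ‖a (j + i)‖) ^ p.toReal * ‖g‖ ^ p.toReal := hut
        _ = (bconsti β δ i M j * ‖a (j + i)‖ * ‖g‖) ^ p.toReal :=
            (Real.mul_rpow hε0 (norm_nonneg g)).symm
    have hnormWA : ∀ M, ‖W - A M‖ ≤ bconsti β δ i M j * ‖a (j + i)‖ := fun M =>
      ContinuousLinearMap.opNorm_le_bound _ (mul_nonneg (hb0 M) (norm_nonneg _))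
        (fun g => by rw [ContinuousLinearMap.sub_apply]; exact hdiff M g)
    have hbtend : Tendsto (fun M => bconsti β δ i M j) atTop (𝓝 0) := by
      refine squeeze_zero' (Filter.Eventually.of_forall hb0) ?_ hbto
      filter_upwards [eventually_ge_atTop j] with M hM
      exact Finset.single_le_sum (f := fun k => bconsti β δ i M k)
        (fun k _ => bconsti_nonneg hβ hδ (hbfin M k)) (Finset.mem_Icc.2 ⟨hj, hM⟩)
    have htendA : Tendsto A atTop (𝓝 W) := by
      rw [tendsto_iff_norm_sub_tendsto_zero]
      have hmaj : Tendsto (fun M => bconsti β δ i M j * ‖a (j + i)‖) atTop (𝓝 0) := by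
        simpa using hbtend.mul_const ‖a (j + i)‖
      refine squeeze_zero' (Filter.Eventually.of_forall fun M => norm_nonneg _)
        (Filter.Eventually.of_forall fun M => ?_) hmaj
      rw [norm_sub_rev]
      exact hnormWA M
    exact isCompactOperator_of_tendsto htendA (Filter.Eventually.of_forall hAc)
  have hTK : ∀ K : ℕ,
      IsCompactOperator ⇑(opA β δ i p q C hβ hδ hrq hrow (aKf a i K) (haK K)) := by
    intro K
    have hsym : aKf a i K = fun k => ∑ j ∈ Finset.Icc 1 K, ajf a i j k := by
      funext k
      by_cases hk : i + 1 ≤ k ∧ k ≤ K + i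
      · rw [Finset.sum_eq_single_of_mem (k - i)
          (Finset.mem_Icc.2 ⟨by omega, by omega⟩)
          (fun j _ hjk => by simp only [ajf]; rw [if_neg (by omega)])]
        simp only [aKf, ajf]
        rw [if_pos (by omega : k = k - i + i), if_pos hk.2]
      · rw [Finset.sum_eq_zero (fun j hj => by
          simp only [ajf]
          rcases Finset.mem_Icc.1 hj with ⟨hj1, hj2⟩
          rw [if_neg (by omega)])]
        simp only [aKf]
        by_cases hk2 : k ≤ K + i
        · rw [if_pos hk2]
          exact ha0 k (by omega)
        · rw [if_neg hk2]
    have hop : opA β δ i p q C hβ hδ hrq hrow (aKf a i K) (haK K) =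
        ∑ j ∈ Finset.Icc 1 K, opA β δ i p q C hβ hδ hrq hrow (ajf a i j) (haj j) := by
      refine ContinuousLinearMap.ext fun g => lp.ext (funext fun n => ?_)
      have hR : (⇑((∑ j ∈ Finset.Icc 1 K,
          opA β δ i p q C hβ hδ hrq hrow (ajf a i j) (haj j)) g)) n =
          ∑ j ∈ Finset.Icc 1 K, F β δ i (ajf a i j) (⇑g) n := by
        rw [ContinuousLinearMap.sum_apply, lp.coeFn_sum, Finset.sum_apply]
        rfl
      show F β δ i (aKf a i K) (⇑g) n = _
      rw [hR, hsym, F_sum_left]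
    rw [hop]
    exact isCompactOperator_finset_sum p _ _
      (fun j hj => hWcompact j (Finset.mem_Icc.1 hj).1)
  have hdiffK : ∀ K : ℕ,
      opA β δ i p q C hβ hδ hrq hrow a ha -
        opA β δ i p q C hβ hδ hrq hrow (aKf a i K) (haK K) =
      opA β δ i p q C hβ hδ hrq hrow (atlf a i K) (hatl K) := by
    intro K
    refine ContinuousLinearMap.ext fun g => lp.ext (funext fun n => ?_)
    have hsym2 : (fun k => a k - aKf a i K k) = atlf a i K := funext fun k => by
      by_cases hk : k ≤ K + i <;> simp [aKf, atlf, hk]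
    have h1 : (⇑((opA β δ i p q C hβ hδ hrq hrow a ha -
        opA β δ i p q C hβ hδ hrq hrow (aKf a i K) (haK K)) g)) n =
        F β δ i a (⇑g) n - F β δ i (aKf a i K) (⇑g) n := by
      rw [ContinuousLinearMap.sub_apply, lp.coeFn_sub, Pi.sub_apply]
      rfl
    show _ = F β δ i (atlf a i K) (⇑g) n
    rw [h1, ← F_sub_left, hsym2]
  have hnormK : ∀ K, ‖opA β δ i p q C hβ hδ hrq hrow a ha -
        opA β δ i p q C hβ hδ hrq hrow (aKf a i K) (haK K)‖ ≤
      C ^ (1 / q) * (∑' k, ‖atlf a i K k‖ ^ p.toReal) ^ (1 / p.toReal) := fun K => by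
    rw [hdiffK K]
    exact opA_norm_le β δ i p q C hβ hδ hrq hrow (atlf a i K) (hatl K)
  have htail : Tendsto (fun K => ∑' k, ‖atlf a i K k‖ ^ p.toReal) atTop (𝓝 0) := by
    have heq : ∀ K : ℕ, ∑' k, ‖atlf a i K k‖ ^ p.toReal =
        ∑' m, ‖a (m + (K + i + 1))‖ ^ p.toReal := by
      intro K
      have hinj : Function.Injective (fun m : ℕ => m + (K + i + 1)) := fun x y hxy => by
        simpa using hxy
      have hsupp2 : Function.support (fun k => ‖atlf a i K k‖ ^ p.toReal) ⊆
          Set.range (fun m : ℕ => m + (K + i + 1)) := by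
        intro k hk
        by_contra hk2
        apply hk
        have hkle : k ≤ K + i := by
          by_contra hk3
          exact hk2 ⟨k - (K + i + 1), show k - (K + i + 1) + (K + i + 1) = k by omega⟩
        simp [atlf, hkle, Real.zero_rpow hr0.ne']
      rw [← Function.Injective.tsum_eq hinj hsupp2]
      refine tsum_congr fun m => ?_
      simp only [atlf]
      rw [if_neg (by omega)]
    rw [tendsto_congr heq]
    have hshift := tendsto_sum_nat_add (fun k => ‖a k‖ ^ p.toReal)
    exact hshift.comp (tendsto_add_atTop_nat (i + 1))
  have hκ : Tendsto (fun K =>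
      C ^ (1 / q) * (∑' k, ‖atlf a i K k‖ ^ p.toReal) ^ (1 / p.toReal)) atTop (𝓝 0) := by
    have h1 : Tendsto (fun K => (∑' k, ‖atlf a i K k‖ ^ p.toReal) ^ (1 / p.toReal))
        atTop (𝓝 ((0:ℝ) ^ (1 / p.toReal))) :=
      htail.rpow_const (Or.inr (by positivity))
    rw [Real.zero_rpow (one_div_ne_zero hr0.ne')] at h1
    simpa using h1.const_mul (C ^ (1 / q))
  have htendT : Tendsto (fun K => opA β δ i p q C hβ hδ hrq hrow (aKf a i K) (haK K))
      atTop (𝓝 (opA β δ i p q C hβ hδ hrq hrow a ha)) := by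
    rw [tendsto_iff_norm_sub_tendsto_zero]
    refine squeeze_zero' (Filter.Eventually.of_forall fun K => norm_nonneg _)
      (Filter.Eventually.of_forall fun K => ?_) hκ
    rw [norm_sub_rev]
    exact hnormK K
  exact isCompactOperator_of_tendsto htendT (Filter.Eventually.of_forall hTK)

end
end
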